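/- arXiv:2202.05247 — 3 statements merged into one kernel-verified Lean document; each statement's English description precedes it below -/
import Mathlib

section
/- Let 𝔍 : 𝒟 → [0,∞) be monotone, locally non-vanishing and uniformly vanishing with 𝔍(𝒬) > 0. For 0 < t < 𝔍(𝒬) let P_t = {Q ∈ 𝒟 ∖ {𝒬} : 𝔍(Q) < t and 𝔍(Q̂) ≥ t}, where Q̂ denotes the dyadic parent of Q. Then P_t is a finite partition of 𝒬 by dyadic cubes, and the following inequalities hold: F̄_𝔍 ≤ h̄_𝔍 ≤ limsup_{t↓0} log(card P_t)/(−log t) ≤ κ_𝔍 ≤ q_𝔍, and F̲_𝔍 ≤ h̲_𝔍 ≤ liminf_{t↓0} log(card P_t)/(−log t). Moreover, for the Dirichlet family one has F̄_𝔍^D ≤ q_𝔍^D. -/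
open MeasureTheory Filter Set Topology Classical

noncomputable section

/-- The half-open dyadic cube of generation `n` with index `k` inside `[0,1)^d`. -/
def dyadicCube (d n : ℕ) (k : Fin d → ℕ) : Set (Fin d → ℝ) :=
  {x | ∀ i, (k i : ℝ) / 2 ^ n ≤ x i ∧ x i < ((k i : ℝ) + 1) / 2 ^ n}

/-- The family `𝒟_n` of dyadic cubes of generation `n`. -/
def dyadicLevel (d n : ℕ) : Set (Set (Fin d → ℝ)) :=
  {Q | ∃ k : Fin d → ℕ, (∀ i, k i < 2 ^ n) ∧ Q = dyadicCube d n k}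

/-- The collection `𝒟` of all dyadic cubes. -/
def dyadicFamily (d : ℕ) : Set (Set (Fin d → ℝ)) := ⋃ n, dyadicLevel d n

/-- The half-open unit cube `𝒬 = [0,1)^d`. -/
def unitCube (d : ℕ) : Set (Fin d → ℝ) := {x | ∀ i, 0 ≤ x i ∧ x i < 1}

/-- The Dirichlet family `𝒟_n^D`: cubes whose closure misses the boundary of `[0,1]^d`. -/
def dyadicLevelD (d n : ℕ) : Set (Set (Fin d → ℝ)) :=
  {Q | Q ∈ dyadicLevel d n ∧
    closure Q ∩ frontier (Set.pi Set.univ fun _ : Fin d => Set.Icc (0:ℝ) 1) = ∅}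

/-- Extended-real logarithm, with `log x = -∞` for `x ≤ 0`. -/
def elog (x : ℝ) : EReal := if x ≤ 0 then (⊥ : EReal) else ((Real.log x : ℝ) : EReal)

/-- `∑_{Q ∈ F} 𝔍(Q)^q`, with the convention `0^0 = 0`. -/
def cubeSum {d : ℕ} (F : Set (Set (Fin d → ℝ))) (J : Set (Fin d → ℝ) → ℝ) (q : ℝ) : ℝ :=
  ∑' Q : F, if J (Q : Set (Fin d → ℝ)) = 0 then 0 else J (Q : Set (Fin d → ℝ)) ^ q

/-- `τ_{𝔍,n}(q) = log (∑_{Q ∈ Fam n} 𝔍(Q)^q) / (n log 2)`, valued in `[-∞,∞]`. -/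
def tauApprox {d : ℕ} (Fam : ℕ → Set (Set (Fin d → ℝ))) (J : Set (Fin d → ℝ) → ℝ)
    (n : ℕ) (q : ℝ) : EReal :=
  elog (cubeSum (Fam n) J q) * ((((n : ℝ) * Real.log 2)⁻¹ : ℝ) : EReal)

/-- The partition function `τ_𝔍(q) = limsup_n τ_{𝔍,n}(q)`. -/
def tauFn {d : ℕ} (Fam : ℕ → Set (Set (Fin d → ℝ))) (J : Set (Fin d → ℝ) → ℝ) (q : ℝ) :
    EReal :=
  Filter.limsup (fun n => tauApprox Fam J n q) Filter.atTop

/-- `q_𝔍 = inf {q ≥ 0 : τ_𝔍(q) < 0}` (equal to `⊤` if no such `q` exists). -/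
def qCrit {d : ℕ} (Fam : ℕ → Set (Set (Fin d → ℝ))) (J : Set (Fin d → ℝ) → ℝ) : EReal :=
  sInf {x : EReal | ∃ q : ℝ, 0 ≤ q ∧ x = (q : EReal) ∧ tauFn Fam J q < 0}

/-- `max_{Q ∈ Fam n} 𝔍(Q)`. -/
def maxJ {d : ℕ} (Fam : ℕ → Set (Set (Fin d → ℝ))) (J : Set (Fin d → ℝ) → ℝ) (n : ℕ) : ℝ :=
  sSup (J '' Fam n)

/-- The lower `∞`-dimension `dim_∞(𝔍) = liminf_n (max_{Q∈𝒟_n} log 𝔍(Q))/(-n log 2)`. -/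
def dimInfty {d : ℕ} (Fam : ℕ → Set (Set (Fin d → ℝ))) (J : Set (Fin d → ℝ) → ℝ) : EReal :=
  Filter.liminf
    (fun n => elog (maxJ Fam J n) * (((-(((n : ℝ) * Real.log 2)⁻¹)) : ℝ) : EReal))
    Filter.atTop

/-- The support of a set function `𝔍` on the dyadic cubes. -/
def suppJ {d : ℕ} (J : Set (Fin d → ℝ) → ℝ) : Set (Fin d → ℝ) :=
  ⋂ k : ℕ, ⋃ n : ℕ, ⋃ (_ : k ≤ n), ⋃ Q ∈ {Q ∈ dyadicLevel d n | 0 < J Q}, closure Q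

/-- The upper Minkowski dimension of `supp 𝔍`, computed along dyadic cubes. -/
def dimMink {d : ℕ} (J : Set (Fin d → ℝ) → ℝ) : EReal :=
  Filter.limsup
    (fun n => elog (({Q ∈ dyadicLevel d n | (Q ∩ suppJ J).Nonempty}).ncard : ℝ) *
      ((((n : ℝ) * Real.log 2)⁻¹ : ℝ) : EReal)) Filter.atTop

/-- `𝔍 : 𝒟 → [0,∞)`. -/
def CubeNonneg {d : ℕ} (J : Set (Fin d → ℝ) → ℝ) : Prop := ∀ Q ∈ dyadicFamily d, 0 ≤ J Q

/-- `𝔍` is monotone on dyadic cubes. -/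
def CubeMonotone {d : ℕ} (J : Set (Fin d → ℝ) → ℝ) : Prop :=
  ∀ Q ∈ dyadicFamily d, ∀ Q' ∈ dyadicFamily d, Q' ⊆ Q → J Q' ≤ J Q

/-- `𝔍` is locally non-vanishing. -/
def LocallyNonVanishing {d : ℕ} (J : Set (Fin d → ℝ) → ℝ) : Prop :=
  ∀ Q ∈ dyadicFamily d, 0 < J Q → ∃ Q' ∈ dyadicFamily d, Q' ⊂ Q ∧ 0 < J Q'

/-- `𝔍` is uniformly vanishing: `max_{Q∈𝒟_n} 𝔍(Q) → 0`. -/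
def UniformlyVanishing {d : ℕ} (J : Set (Fin d → ℝ) → ℝ) : Prop :=
  Filter.Tendsto (fun n => maxJ (dyadicLevel d) J n) Filter.atTop (nhds 0)

/-- `κ_𝔍 = inf {q ≥ 0 : ∑_{Q ∈ 𝒟} 𝔍(Q)^q < ∞}`. -/
def kappaCrit {d : ℕ} (J : Set (Fin d → ℝ) → ℝ) : EReal :=
  sInf {x : EReal | ∃ q : ℝ, 0 ≤ q ∧ x = (q : EReal) ∧
    Summable (fun Q : dyadicFamily d =>
      if J (Q : Set (Fin d → ℝ)) = 0 then 0 else J (Q : Set (Fin d → ℝ)) ^ q)}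

/-- positive part of the logarithm -/
def logPlus (x : ℝ) : ℝ := max (Real.log x) 0

/-- `N_{α,𝔍}(n)`: the number of cubes `Q` of generation `n` with `𝔍(Q) ≥ 2^{-αn}`. -/
def NCount {d : ℕ} (Fam : ℕ → Set (Set (Fin d → ℝ))) (J : Set (Fin d → ℝ) → ℝ)
    (α : ℝ) (n : ℕ) : ℕ :=
  ({Q ∈ Fam n | (2 : ℝ) ^ (-(α * n)) ≤ J Q}).ncard

/-- The upper optimised coarse multifractal dimension `F̄_𝔍`. -/
def FUpper {d : ℕ} (Fam : ℕ → Set (Set (Fin d → ℝ))) (J : Set (Fin d → ℝ) → ℝ) : EReal :=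
  ⨆ (α : ℝ) (_ : 0 < α),
    Filter.limsup
      (fun n => ((logPlus (NCount Fam J α n) / (α * n * Real.log 2) : ℝ) : EReal))
      Filter.atTop

/-- The lower optimised coarse multifractal dimension `F̲_𝔍`. -/
def FLower {d : ℕ} (Fam : ℕ → Set (Set (Fin d → ℝ))) (J : Set (Fin d → ℝ) → ℝ) : EReal :=
  ⨆ (α : ℝ) (_ : 0 < α),
    Filter.liminf
      (fun n => ((logPlus (NCount Fam J α n) / (α * n * Real.log 2) : ℝ) : EReal))
      Filter.atTop

/-- `P` is a `𝔍`-partition: the positive-`𝔍` part of a finite dyadic partition of `𝒬`. -/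
def IsJPartition {d : ℕ} (J : Set (Fin d → ℝ) → ℝ) (P : Set (Set (Fin d → ℝ))) : Prop :=
  ∃ R : Set (Set (Fin d → ℝ)), R.Finite ∧ R ⊆ dyadicFamily d ∧
    R.PairwiseDisjoint id ∧ ⋃₀ R = unitCube d ∧ P = {Q ∈ R | 0 < J Q}

/-- `M_𝔍(x)`: minimal cardinality of a `𝔍`-partition with `𝔍(Q) < 1/x` on all its cubes. -/
def MJ {d : ℕ} (J : Set (Fin d → ℝ) → ℝ) (x : ℝ) : ℕ :=
  sInf {m : ℕ | ∃ P : Set (Set (Fin d → ℝ)),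
    IsJPartition J P ∧ P.ncard = m ∧ ∀ Q ∈ P, J Q < 1 / x}

/-- The upper `𝔍`-partition entropy `h̄_𝔍`. -/
def hUpper {d : ℕ} (J : Set (Fin d → ℝ) → ℝ) : EReal :=
  Filter.limsup (fun x : ℝ => ((Real.log (MJ J x) / Real.log x : ℝ) : EReal)) Filter.atTop

/-- The lower `𝔍`-partition entropy `h̲_𝔍`. -/
def hLower {d : ℕ} (J : Set (Fin d → ℝ) → ℝ) : EReal :=
  Filter.liminf (fun x : ℝ => ((Real.log (MJ J x) / Real.log x : ℝ) : EReal)) Filter.atTop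

/-- The set function `Q ↦ ν(Q)` associated with a measure `ν`. -/
def nuFn {d : ℕ} (ν : Measure (Fin d → ℝ)) : Set (Fin d → ℝ) → ℝ := fun Q => (ν Q).toReal

/-- `𝔍_{ν,a,b}(Q) = sup_{Q'∈𝒟(Q)} ν(Q')^b Λ(Q')^a` (for `a ≠ 0`). -/
def Jab {d : ℕ} (ν : Measure (Fin d → ℝ)) (a b : ℝ) (Q : Set (Fin d → ℝ)) : ℝ :=
  sSup ((fun Q' => (ν Q').toReal ^ b * (volume Q').toReal ^ a) ''
    {Q' | Q' ∈ dyadicFamily d ∧ Q' ⊆ Q})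

/-- `𝔍_{ν,0,b}(Q) = sup_{Q'∈𝒟(Q)} ν(Q')^b |log Λ(Q')|`. -/
def J0b {d : ℕ} (ν : Measure (Fin d → ℝ)) (b : ℝ) (Q : Set (Fin d → ℝ)) : ℝ :=
  sSup ((fun Q' => (ν Q').toReal ^ b * |Real.log (volume Q').toReal|) ''
    {Q' | Q' ∈ dyadicFamily d ∧ Q' ⊆ Q})

/-- The spectral set function `𝔍_ν = 𝔍_{ν,2/d-1,1}`. -/
def Jnu {d : ℕ} (ν : Measure (Fin d → ℝ)) : Set (Fin d → ℝ) → ℝ :=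
  Jab ν (2 / (d : ℝ) - 1) 1

/-- The stopping-time family `P_t`: dyadic cubes `Q ≠ 𝒬` with `𝔍(Q) < t` whose dyadic
parent `Q̂` satisfies `𝔍(Q̂) ≥ t`. -/
def stopPartition {d : ℕ} (J : Set (Fin d → ℝ) → ℝ) (t : ℝ) : Set (Set (Fin d → ℝ)) :=
  {Q | ∃ n : ℕ, ∃ k : Fin d → ℕ, (∀ i, k i < 2 ^ (n + 1)) ∧
    Q = dyadicCube d (n + 1) k ∧ J Q < t ∧ t ≤ J (dyadicCube d n fun i => k i / 2)}

namespace S8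
variable {d : ℕ}

lemma two_pow_pos (n : ℕ) : (0:ℝ) < 2 ^ n := by positivity

lemma corner_mem (n : ℕ) (k : Fin d → ℕ) :
    (fun i => (k i : ℝ) / 2 ^ n) ∈ dyadicCube d n k := by
  intro i
  refine ⟨le_rfl, ?_⟩
  exact div_lt_div_of_pos_right (by linarith) (two_pow_pos n) |>.trans_le le_rfl

lemma cube_nonempty (n : ℕ) (k : Fin d → ℕ) : (dyadicCube d n k).Nonempty :=
  ⟨_, corner_mem n k⟩

lemma cube_mem_level {n : ℕ} {k : Fin d → ℕ} (hk : ∀ i, k i < 2 ^ n) :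
    dyadicCube d n k ∈ dyadicLevel d n := ⟨k, hk, rfl⟩

lemma level_subset_family (n : ℕ) : dyadicLevel d n ⊆ dyadicFamily d :=
  subset_iUnion (dyadicLevel d) n

lemma cube_subset_unit {n : ℕ} {k : Fin d → ℕ} (hk : ∀ i, k i < 2 ^ n) :
    dyadicCube d n k ⊆ unitCube d := by
  intro x hx i
  obtain ⟨h1, h2⟩ := hx i
  constructor
  · exact le_trans (by positivity) h1
  · refine h2.trans_le ?_
    rw [div_le_one (two_pow_pos n)]
    have : (k i : ℝ) + 1 ≤ (2:ℝ) ^ n := by exact_mod_cast Nat.succ_le_of_lt (hk i)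
    simpa using this

lemma level_finite (n : ℕ) : (dyadicLevel d n).Finite := by
  have h1 : dyadicLevel d n ⊆ (dyadicCube d n) '' {k | ∀ i, k i < 2 ^ n} := by
    rintro Q ⟨k, hk, rfl⟩; exact ⟨k, hk, rfl⟩
  have h2 : ({k : Fin d → ℕ | ∀ i, k i < 2 ^ n}).Finite := by
    have : {k : Fin d → ℕ | ∀ i, k i < 2 ^ n} = Set.pi Set.univ (fun _ => Set.Iio (2 ^ n)) := by
      ext k; simp [Set.mem_pi]
    rw [this]
    exact Set.Finite.pi (fun _ => Set.finite_Iio _)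
  exact (h2.image _).subset h1

lemma cube_subset_cube {n m : ℕ} {k j : Fin d → ℕ} (hmn : m ≤ n) {z : Fin d → ℝ}
    (hz1 : z ∈ dyadicCube d n k) (hz2 : z ∈ dyadicCube d m j) :
    dyadicCube d n k ⊆ dyadicCube d m j := by
  have h2 : (2:ℝ) ^ (n - m) * 2 ^ m = 2 ^ n := by
    rw [← pow_add]; congr 1; omega
  have key : ∀ x : ℝ, x * 2 ^ (n - m) / 2 ^ n = x / 2 ^ m := by
    intro x
    rw [div_eq_div_iff (ne_of_gt (two_pow_pos n)) (ne_of_gt (two_pow_pos m)), mul_assoc, h2]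
  have claims : ∀ i, (j i : ℝ) / 2 ^ m ≤ (k i : ℝ) / 2 ^ n ∧
      ((k i : ℝ) + 1) / 2 ^ n ≤ ((j i : ℝ) + 1) / 2 ^ m := by
    intro i
    obtain ⟨h1k, h2k⟩ := hz1 i
    obtain ⟨h1j, h2j⟩ := hz2 i
    have c1 : j i * 2 ^ (n - m) ≤ k i := by
      have : (j i : ℝ) * 2 ^ (n - m) / 2 ^ n < ((k i : ℝ) + 1) / 2 ^ n := by
        rw [key]; exact lt_of_le_of_lt h1j h2k
      have := (div_lt_div_iff_of_pos_right (two_pow_pos n)).mp this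
      have : (j i * 2 ^ (n - m) : ℕ) < k i + 1 := by exact_mod_cast this
      omega
    have c2 : k i + 1 ≤ (j i + 1) * 2 ^ (n - m) := by
      have : (k i : ℝ) / 2 ^ n < ((j i : ℝ) + 1) * 2 ^ (n - m) / 2 ^ n := by
        rw [key]; exact lt_of_le_of_lt h1k h2j
      have := (div_lt_div_iff_of_pos_right (two_pow_pos n)).mp this
      have : (k i : ℕ) < (j i + 1) * 2 ^ (n - m) := by exact_mod_cast this
      omega
    constructor
    · rw [← key]
      refine (div_le_div_iff_of_pos_right (two_pow_pos n)).mpr ?_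
      exact_mod_cast Nat.cast_le.mpr c1
    · rw [show ((j i : ℝ) + 1) / 2 ^ m = ((j i : ℝ) + 1) * 2 ^ (n - m) / 2 ^ n from (key _).symm]
      refine (div_le_div_iff_of_pos_right (two_pow_pos n)).mpr ?_
      exact_mod_cast Nat.cast_le.mpr c2
  intro y hy i
  obtain ⟨hy1, hy2⟩ := hy i
  exact ⟨(claims i).1.trans hy1, hy2.trans_le (claims i).2⟩

lemma level_le_of_subset (hd : 0 < d) {n m : ℕ} {k j : Fin d → ℕ}
    (h : dyadicCube d n k ⊆ dyadicCube d m j) : m ≤ n := by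
  by_contra hc
  push_neg at hc  -- n < m
  have hcorner : (fun i => (k i : ℝ) / 2 ^ n) ∈ dyadicCube d m j := h (corner_mem n k)
  set i₀ : Fin d := ⟨0, hd⟩
  have hδ : ((2:ℝ) ^ m)⁻¹ < ((2:ℝ) ^ n)⁻¹ := by
    apply inv_strictAnti₀ (two_pow_pos n)
    exact pow_lt_pow_right₀ (by norm_num) hc
  set o : ℝ := (((2:ℝ) ^ m)⁻¹ + ((2:ℝ) ^ n)⁻¹) / 2 with ho
  have ho1 : ((2:ℝ) ^ m)⁻¹ ≤ o := by rw [ho]; linarith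
  have ho2 : o < ((2:ℝ) ^ n)⁻¹ := by rw [ho]; linarith
  have ho0 : 0 < o := by
    have : (0:ℝ) < ((2:ℝ) ^ m)⁻¹ := by positivity
    linarith
  set y : Fin d → ℝ := fun i => (k i : ℝ) / 2 ^ n + o with hy
  have hymem : y ∈ dyadicCube d n k := by
    intro i
    constructor
    · simp [hy]; linarith
    · have : (k i : ℝ) / 2 ^ n + o < (k i : ℝ) / 2 ^ n + ((2:ℝ)^n)⁻¹ := by linarith
      rw [hy]
      simp only
      refine this.trans_le ?_
      rw [div_add' _ _ _ (ne_of_gt (two_pow_pos n))]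
      rw [div_le_div_iff_of_pos_right (two_pow_pos n)]
      have : ((2:ℝ)^n)⁻¹ * 2^n = 1 := inv_mul_cancel₀ (ne_of_gt (two_pow_pos n))
      nlinarith [two_pow_pos n]
  have hymem' : y ∈ dyadicCube d m j := h hymem
  obtain ⟨hc1, hc2⟩ := hcorner i₀
  obtain ⟨hy1, hy2⟩ := hymem' i₀
  have : ((j i₀ : ℝ) + 1) / 2 ^ m ≤ y i₀ := by
    have : (j i₀ : ℝ) / 2 ^ m + ((2:ℝ)^m)⁻¹ ≤ y i₀ := by
      simp only [hy]
      have := ho1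
      linarith
    refine le_trans (le_of_eq ?_) this
    rw [div_add' _ _ _ (ne_of_gt (two_pow_pos m))]
    congr 1
    field_simp
  linarith

lemma cube_injective (hd : 0 < d) {n m : ℕ} {k j : Fin d → ℕ}
    (h : dyadicCube d n k = dyadicCube d m j) : n = m ∧ k = j := by
  have hnm : n = m :=
    le_antisymm (level_le_of_subset hd h.symm.subset) (level_le_of_subset hd h.subset)
  subst hnm
  refine ⟨rfl, ?_⟩
  funext i
  have h1 : (fun i => (k i : ℝ) / 2 ^ n) ∈ dyadicCube d n j := h ▸ corner_mem n k
  obtain ⟨ha, hb⟩ := h1 i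
  have ha' : (j i : ℕ) ≤ k i := by
    have := (div_le_div_iff_of_pos_right (two_pow_pos n)).mp ha
    exact_mod_cast this
  have hb' : (k i : ℕ) < j i + 1 := by
    have := (div_lt_div_iff_of_pos_right (two_pow_pos n)).mp hb
    exact_mod_cast this
  omega

/-- The index of the level-`n` dyadic cube containing `x`. -/
def idx (n : ℕ) (x : Fin d → ℝ) : Fin d → ℕ := fun i => ⌊x i * 2 ^ n⌋₊

lemma idx_lt {x : Fin d → ℝ} (hx : x ∈ unitCube d) (n : ℕ) : ∀ i, idx n x i < 2 ^ n := by
  intro i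
  rw [idx, Nat.floor_lt (by nlinarith [(hx i).1, two_pow_pos n])]
  have := (hx i).2
  calc x i * 2 ^ n < 1 * 2 ^ n := by nlinarith [two_pow_pos n]
  _ = 2 ^ n := one_mul _
  _ = ((2 ^ n : ℕ) : ℝ) := by push_cast; ring

lemma mem_cube_idx {x : Fin d → ℝ} (hx : x ∈ unitCube d) (n : ℕ) :
    x ∈ dyadicCube d n (idx n x) := by
  intro i
  have h0 : (0:ℝ) ≤ x i * 2 ^ n := by nlinarith [(hx i).1, two_pow_pos n]
  constructor
  · rw [div_le_iff₀ (two_pow_pos n)]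
    exact Nat.floor_le h0
  · rw [lt_div_iff₀ (two_pow_pos n)]
    have := Nat.lt_floor_add_one (x i * 2 ^ n)
    simpa [idx] using this

lemma idx_eq_of_mem {x : Fin d → ℝ} {n : ℕ} {k : Fin d → ℕ}
    (hmem : x ∈ dyadicCube d n k) : k = idx n x := by
  funext i
  obtain ⟨h1, h2⟩ := hmem i
  rw [div_le_iff₀ (two_pow_pos n)] at h1
  rw [lt_div_iff₀ (two_pow_pos n)] at h2
  symm
  rw [idx, Nat.floor_eq_iff (le_trans (by positivity) h1)]
  exact ⟨h1, h2⟩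

lemma idx_div_two (x : Fin d → ℝ) (n : ℕ) : idx n x = fun i => idx (n + 1) x i / 2 := by
  funext i
  have : x i * 2 ^ n = x i * 2 ^ (n + 1) / (2 : ℕ) := by push_cast; ring
  rw [idx, idx, this, Nat.floor_div_natCast]

lemma parent_lt {n : ℕ} {k : Fin d → ℕ} (hk : ∀ i, k i < 2 ^ (n + 1)) :
    ∀ i, k i / 2 < 2 ^ n := by
  intro i
  have h := hk i
  have h2 : 2 ^ (n + 1) = 2 ^ n * 2 := pow_succ 2 n
  omega

lemma parent_subset {n : ℕ} {k : Fin d → ℕ} :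
    dyadicCube d (n + 1) k ⊆ dyadicCube d n (fun i => k i / 2) := by
  intro y hy i
  obtain ⟨h1, h2⟩ := hy i
  have key : ∀ a : ℕ, ((a : ℝ)) / 2 ^ n = ((a * 2 : ℕ) : ℝ) / 2 ^ (n + 1) := by
    intro a
    rw [div_eq_div_iff (ne_of_gt (two_pow_pos n)) (ne_of_gt (two_pow_pos (n + 1)))]
    push_cast; ring
  have hmod := Nat.div_add_mod (k i) 2
  have hlt := Nat.mod_lt (k i) (show 0 < 2 by norm_num)
  constructor
  · rw [key]
    refine le_trans ?_ h1
    refine (div_le_div_iff_of_pos_right (two_pow_pos (n + 1))).mpr ?_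
    have : k i / 2 * 2 ≤ k i := by omega
    exact_mod_cast this
  · refine lt_of_lt_of_le h2 ?_
    have : ((k i / 2 : ℕ) : ℝ) + 1 = (((k i / 2 + 1) * 2 : ℕ) : ℝ) / 2 := by push_cast; ring
    calc ((k i : ℝ) + 1) / 2 ^ (n + 1) ≤ (((k i / 2 + 1) * 2 : ℕ) : ℝ) / 2 ^ (n + 1) := by
          refine (div_le_div_iff_of_pos_right (two_pow_pos (n + 1))).mpr ?_
          have : k i + 1 ≤ (k i / 2 + 1) * 2 := by omega
          exact_mod_cast this
    _ = (((k i / 2 : ℕ) : ℝ) + 1) / 2 ^ n := by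
          rw [div_eq_div_iff (ne_of_gt (two_pow_pos (n + 1))) (ne_of_gt (two_pow_pos n))]
          push_cast; ring

/-- Dichotomy: any two dyadic cubes that intersect are nested. -/
lemma cube_dichotomy {n m : ℕ} {k j : Fin d → ℕ} {z : Fin d → ℝ}
    (hz1 : z ∈ dyadicCube d n k) (hz2 : z ∈ dyadicCube d m j) :
    dyadicCube d n k ⊆ dyadicCube d m j ∨ dyadicCube d m j ⊆ dyadicCube d n k := by
  rcases le_total m n with h | h
  · exact Or.inl (cube_subset_cube h hz1 hz2)
  · exact Or.inr (cube_subset_cube h hz2 hz1)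

lemma mem_level_elim {Q : Set (Fin d → ℝ)} {n : ℕ} (h : Q ∈ dyadicLevel d n) :
    ∃ k : Fin d → ℕ, (∀ i, k i < 2 ^ n) ∧ Q = dyadicCube d n k := h

lemma mem_family_elim {Q : Set (Fin d → ℝ)} (h : Q ∈ dyadicFamily d) :
    ∃ n, Q ∈ dyadicLevel d n := Set.mem_iUnion.mp h

lemma unitCube_eq : unitCube d = dyadicCube d 0 (fun _ => 0) := by
  ext x
  simp [unitCube, dyadicCube]

lemma unitCube_mem_level : unitCube d ∈ dyadicLevel d 0 := by
  rw [unitCube_eq]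
  exact cube_mem_level (fun i => by norm_num)

lemma unitCube_mem_family : unitCube d ∈ dyadicFamily d :=
  level_subset_family 0 unitCube_mem_level

lemma level_subset_unit {n : ℕ} {Q : Set (Fin d → ℝ)} (h : Q ∈ dyadicLevel d n) :
    Q ⊆ unitCube d := by
  obtain ⟨k, hk, rfl⟩ := h
  exact cube_subset_unit hk

variable {J : Set (Fin d → ℝ) → ℝ}

lemma le_maxJ {n : ℕ} {Q : Set (Fin d → ℝ)} (h : Q ∈ dyadicLevel d n) :
    J Q ≤ maxJ (dyadicLevel d) J n :=
  le_csSup ((level_finite n).image J).bddAbove (Set.mem_image_of_mem J h)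

lemma exists_deep (hloc : LocallyNonVanishing J) (hd0 : 0 < d)
    {n : ℕ} {Q : Set (Fin d → ℝ)} (hQ : Q ∈ dyadicLevel d n) (hpos : 0 < J Q) :
    ∀ L : ℕ, ∃ m, L ≤ m ∧ ∃ Q' ∈ dyadicLevel d m, Q' ⊆ Q ∧ 0 < J Q' := by
  intro L
  induction L with
  | zero => exact ⟨n, Nat.zero_le n, Q, hQ, subset_rfl, hpos⟩
  | succ L ih =>
    obtain ⟨m, hLm, Q', hQ'l, hsub, hpos'⟩ := ih
    obtain ⟨Q'', hQ''f, hss, hpos''⟩ := hloc Q' (level_subset_family m hQ'l) hpos'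
    obtain ⟨m', hQ''l⟩ := mem_family_elim hQ''f
    obtain ⟨k', hk', rfl⟩ := hQ'l
    obtain ⟨k'', hk'', rfl⟩ := hQ''l
    have hle : m ≤ m' := level_le_of_subset hd0 hss.subset
    have hne : m ≠ m' := by
      rintro rfl
      obtain ⟨z, hz⟩ := cube_nonempty m k''
      have hrev := cube_subset_cube le_rfl (hss.subset hz) hz
      exact hss.ne (Set.Subset.antisymm hss.subset hrev)
    exact ⟨m', by omega, _, cube_mem_level hk'', hss.subset.trans hsub, hpos''⟩

/-- Any finite dyadic covering of the unit cube contains a set of positive `J`-value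
comparable to a given positive cube. -/
lemma exists_pos_part (hmono : CubeMonotone J) (hloc : LocallyNonVanishing J) (hd0 : 0 < d)
    {R : Set (Set (Fin d → ℝ))} (hRfin : R.Finite) (hRsub : R ⊆ dyadicFamily d)
    (hcov : unitCube d ⊆ ⋃₀ R)
    {n : ℕ} {Q : Set (Fin d → ℝ)} (hQ : Q ∈ dyadicLevel d n) (hpos : 0 < J Q) :
    ∃ S ∈ R, 0 < J S ∧ (S ⊆ Q ∨ Q ⊆ S) := by
  classical
  choose lev hlevmem using fun (S : Set (Fin d → ℝ)) (hS : S ∈ R) => mem_family_elim (hRsub hS)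
  obtain ⟨B, hB⟩ : ∃ B, ∀ S, ∀ hS : S ∈ R, lev S hS ≤ B := by
    refine ⟨hRfin.toFinset.sup (fun S => if h : S ∈ R then lev S h else 0), ?_⟩
    intro S hS
    have := Finset.le_sup (f := fun S => if h : S ∈ R then lev S h else 0)
      (hRfin.mem_toFinset.mpr hS)
    simpa [dif_pos hS] using this
  obtain ⟨m, hBm, Q', hQ'l, hsub, hpos'⟩ := exists_deep hloc hd0 hQ hpos (B + 1)
  obtain ⟨k', hk', hQ'eq⟩ := hQ'l
  obtain ⟨z, hz⟩ : Q'.Nonempty := hQ'eq ▸ cube_nonempty m k'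
  have hzU : z ∈ unitCube d := level_subset_unit hQ ((hsub hz))
  obtain ⟨S, hSR, hzS⟩ := hcov hzU
  have hSlev := hlevmem S hSR
  obtain ⟨ks, hks, hSeq⟩ := hSlev
  have hlevle : lev S hSR ≤ B := hB S hSR
  have hQ'S : Q' ⊆ S := by
    rw [hQ'eq, hSeq]
    exact cube_subset_cube (by omega) (hQ'eq ▸ hz) (hSeq ▸ hzS)
  have hposS : 0 < J S :=
    lt_of_lt_of_le hpos' (hmono S (hRsub hSR) Q'
      (level_subset_family m ⟨k', hk', hQ'eq⟩) hQ'S)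
  refine ⟨S, hSR, hposS, ?_⟩
  obtain ⟨kq, hkq, hQeq⟩ := hQ
  rw [hQeq, hSeq]
  exact cube_dichotomy (hSeq ▸ hzS) (hQeq ▸ hsub hz)

lemma stop_subset_family {t : ℝ} : stopPartition J t ⊆ dyadicFamily d := by
  rintro Q ⟨n, k, hk, rfl, -, -⟩
  exact level_subset_family (n + 1) (cube_mem_level hk)

lemma stop_eq_of_le (hmono : CubeMonotone J) {t : ℝ} {n m : ℕ} {k k' : Fin d → ℕ}
    (hk : ∀ i, k i < 2 ^ (n + 1)) (hk' : ∀ i, k' i < 2 ^ (m + 1))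
    (h1 : J (dyadicCube d (n + 1) k) < t)
    (h2 : t ≤ J (dyadicCube d m fun i => k' i / 2))
    (h2' : t ≤ J (dyadicCube d n fun i => k i / 2))
    (h1' : J (dyadicCube d (m + 1) k') < t)
    {z : Fin d → ℝ} (hz : z ∈ dyadicCube d (n + 1) k) (hz' : z ∈ dyadicCube d (m + 1) k')
    (hmn : m ≤ n) : dyadicCube d (n + 1) k = dyadicCube d (m + 1) k' := by
  rcases eq_or_lt_of_le hmn with rfl | hlt
  · exact Set.Subset.antisymm (cube_subset_cube le_rfl hz hz') (cube_subset_cube le_rfl hz' hz)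
  · exfalso
    have hzp : z ∈ dyadicCube d n (fun i => k i / 2) := parent_subset hz
    have hpar : dyadicCube d n (fun i => k i / 2) ⊆ dyadicCube d (m + 1) k' :=
      cube_subset_cube (by omega) hzp hz'
    have := hmono (dyadicCube d (m + 1) k') (level_subset_family _ (cube_mem_level hk'))
      (dyadicCube d n (fun i => k i / 2))
      (level_subset_family _ (cube_mem_level (parent_lt hk))) hpar
    linarith

lemma stopPartition_spec (hmono : CubeMonotone J) (hvan : UniformlyVanishing J) (hd0 : 0 < d)
    {t : ℝ} (ht0 : 0 < t) (ht1 : t < J (unitCube d)) :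
    (stopPartition J t).Finite ∧ (stopPartition J t).PairwiseDisjoint id ∧
      ⋃₀ stopPartition J t = unitCube d := by
  obtain ⟨N, hN⟩ : ∃ N, ∀ n ≥ N, maxJ (dyadicLevel d) J n < t :=
    eventually_atTop.mp (hvan.eventually_lt_const ht0)
  refine ⟨?_, ?_, ?_⟩
  · -- finiteness
    have hsub : stopPartition J t ⊆ ⋃ n ∈ Finset.range N, dyadicLevel d (n + 1) := by
      rintro Q ⟨n, k, hk, rfl, hlt, hge⟩
      have hJpar := le_maxJ (J := J) (cube_mem_level (parent_lt hk))
      have hnN : n < N := by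
        by_contra hc
        push_neg at hc
        have := hN n hc
        linarith
      exact Set.mem_biUnion (Finset.mem_coe.mpr (Finset.mem_range.mpr hnN)) (cube_mem_level hk)
    exact Set.Finite.subset (Set.Finite.biUnion (Finset.range N).finite_toSet
      (fun n _ => level_finite (n + 1))) hsub
  · -- pairwise disjoint
    intro Q hQ Q' hQ' hne
    rw [Function.onFun, Set.disjoint_left]
    intro z hz hz'
    obtain ⟨n, k, hk, rfl, hlt, hge⟩ := hQ
    obtain ⟨m, k', hk', heq', hlt', hge'⟩ := hQ'
    subst heq'
    simp only [id] at hz hz' hne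
    rcases le_total m n with hmn | hnm
    · exact hne (stop_eq_of_le hmono hk hk' hlt hge' hge hlt' hz hz' hmn)
    · exact hne (stop_eq_of_le hmono hk' hk hlt' hge hge' hlt hz' hz hnm).symm
  · -- union
    apply Set.Subset.antisymm
    · rintro z ⟨Q, ⟨n, k, hk, rfl, -, -⟩, hzQ⟩
      exact cube_subset_unit hk hzQ
    · intro x hx
      set s : Set ℕ := {n | J (dyadicCube d n (idx n x)) < t} with hs
      have hsne : s.Nonempty := by
        refine ⟨N, ?_⟩
        have := le_maxJ (J := J) (cube_mem_level (idx_lt hx N))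
        have := hN N le_rfl
        simp only [hs, Set.mem_setOf_eq]
        linarith
      have h0 : 0 ∉ s := by
        have hidx0 : idx 0 x = fun _ => 0 := by
          funext i
          simp only [idx, pow_zero, mul_one]
          exact Nat.floor_eq_zero.mpr (hx i).2
        simp only [hs, Set.mem_setOf_eq, hidx0]
        rw [← unitCube_eq]
        linarith
      obtain ⟨M, hM⟩ : ∃ M, sInf s = M + 1 := by
        rcases Nat.exists_eq_succ_of_ne_zero (fun hc => h0 (hc ▸ Nat.sInf_mem hsne)) with ⟨M, hM⟩
        exact ⟨M, hM⟩
      have hmem : sInf s ∈ s := Nat.sInf_mem hsne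
      rw [hM] at hmem
      have hMnot : M ∉ s := Nat.notMem_of_lt_sInf (by omega)
      refine ⟨dyadicCube d (M + 1) (idx (M + 1) x), ⟨M, idx (M + 1) x, idx_lt hx (M + 1), rfl,
        hmem, ?_⟩, mem_cube_idx hx (M + 1)⟩
      have : (fun i => idx (M + 1) x i / 2) = idx M x := (idx_div_two x M).symm
      rw [this]
      exact le_of_not_gt hMnot

lemma MJ_mem (hmono : CubeMonotone J) (hvan : UniformlyVanishing J) (hd0 : 0 < d)
    {x : ℝ} (hx0 : 0 < x) (hx : 1 / x < J (unitCube d)) :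
    ∃ P, IsJPartition J P ∧ P.ncard = MJ J x ∧ ∀ Q ∈ P, J Q < 1 / x := by
  have ht0 : 0 < 1 / x := by positivity
  obtain ⟨hfin, hdis, hcov⟩ := stopPartition_spec hmono hvan (by omega : 0 < d) ht0 hx
  have hne : {m : ℕ | ∃ P : Set (Set (Fin d → ℝ)),
      IsJPartition J P ∧ P.ncard = m ∧ ∀ Q ∈ P, J Q < 1 / x}.Nonempty := by
    refine ⟨_, {Q ∈ stopPartition J (1 / x) | 0 < J Q},
      ⟨stopPartition J (1 / x), hfin, stop_subset_family, hdis, hcov, rfl⟩, rfl, ?_⟩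
    rintro Q ⟨⟨n, k, hk, rfl, hlt, -⟩, -⟩
    exact hlt
  obtain ⟨P, hP, hcard, hbound⟩ := Nat.sInf_mem hne
  exact ⟨P, hP, hcard, hbound⟩

lemma one_le_MJ (hmono : CubeMonotone J) (hvan : UniformlyVanishing J)
    (hloc : LocallyNonVanishing J) (hd0 : 0 < d) (hQpos : 0 < J (unitCube d))
    {x : ℝ} (hx0 : 0 < x) (hx : 1 / x < J (unitCube d)) : 1 ≤ MJ J x := by
  obtain ⟨P, ⟨R, hRfin, hRsub, hRdis, hRcov, hPeq⟩, hcard, hbound⟩ :=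
    MJ_mem hmono hvan hd0 hx0 hx
  obtain ⟨S, hSR, hSpos, -⟩ := exists_pos_part hmono hloc hd0 hRfin hRsub
    hRcov.symm.subset unitCube_mem_level hQpos
  have hPfin : P.Finite := hRfin.subset (by rw [hPeq]; exact Set.sep_subset _ _)
  have : P.Nonempty := ⟨S, by rw [hPeq]; exact ⟨hSR, hSpos⟩⟩
  rw [← hcard]
  exact (Set.ncard_pos hPfin).mpr this

lemma ncount_le_MJ (hmono : CubeMonotone J) (hvan : UniformlyVanishing J)
    (hloc : LocallyNonVanishing J) (hd0 : 0 < d)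
    {α : ℝ} {n : ℕ} {x : ℝ} (hx0 : 0 < x) (hxge : (2:ℝ) ^ (α * n) ≤ x)
    (hxQ : 1 / x < J (unitCube d)) :
    NCount (dyadicLevel d) J α n ≤ MJ J x := by
  obtain ⟨P, ⟨R, hRfin, hRsub, hRdis, hRcov, hPeq⟩, hcard, hbound⟩ :=
    MJ_mem hmono hvan hd0 hx0 hxQ
  have hPfin : P.Finite := hRfin.subset (by rw [hPeq]; exact Set.sep_subset _ _)
  have hPsub : P ⊆ dyadicFamily d := by
    rw [hPeq]; exact fun Q hQ => hRsub hQ.1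
  have h1x : 1 / x ≤ (2:ℝ) ^ (-(α * n)) := by
    rw [Real.rpow_neg (by norm_num : (0:ℝ) ≤ 2)]
    rw [one_div]
    exact inv_anti₀ (Real.rpow_pos_of_pos (by norm_num) _) hxge
  set C := {Q ∈ dyadicLevel d n | (2:ℝ) ^ (-(α * (n:ℝ))) ≤ J Q} with hC
  have key : ∀ Q ∈ C, ∃ S ∈ P, S ⊆ Q := by
    rintro Q ⟨hQl, hQge⟩
    have hpos : 0 < J Q :=
      lt_of_lt_of_le (Real.rpow_pos_of_pos (by norm_num) _) hQge
    obtain ⟨S, hSR, hSpos, hcase⟩ := exists_pos_part hmono hloc hd0 hRfin hRsub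
      hRcov.symm.subset hQl hpos
    have hSP : S ∈ P := by rw [hPeq]; exact ⟨hSR, hSpos⟩
    rcases hcase with h | h
    · exact ⟨S, hSP, h⟩
    · exfalso
      have hJle : J Q ≤ J S := hmono S (hRsub hSR) Q (level_subset_family n hQl) h
      have hlt := hbound S hSP
      linarith [le_trans h1x hQge]
  choose f hfP hfsub using key
  classical
  set g : Set (Fin d → ℝ) → Set (Fin d → ℝ) :=
    fun Q => if h : Q ∈ C then f Q h else ∅ with hg
  have hgP : ∀ Q ∈ C, g Q ∈ P := by
    intro Q hQ; simp only [hg, dif_pos hQ]; exact hfP Q hQ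
  have hgsub : ∀ Q, Q ∈ C → g Q ⊆ Q := by
    intro Q hQ; simp only [hg, dif_pos hQ]; exact hfsub Q hQ
  have hinj : Set.InjOn g C := by
    intro Q1 h1 Q2 h2 hfe
    obtain ⟨k1, hk1, hQ1⟩ := h1.1
    obtain ⟨k2, hk2, hQ2⟩ := h2.1
    obtain ⟨m, hSl⟩ := mem_family_elim (hPsub (hgP Q1 h1))
    obtain ⟨ks, hks, hSeq⟩ := hSl
    obtain ⟨z, hz⟩ : (g Q1).Nonempty := hSeq ▸ cube_nonempty m ks
    have hz1 : z ∈ Q1 := hgsub Q1 h1 hz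
    have hz2 : z ∈ Q2 := hgsub Q2 h2 (hfe ▸ hz)
    rw [hQ1, hQ2]
    rw [hQ1] at hz1; rw [hQ2] at hz2
    exact Set.Subset.antisymm (cube_subset_cube le_rfl hz1 hz2)
      (cube_subset_cube le_rfl hz2 hz1)
  rw [NCount, ← hcard]
  exact Set.ncard_le_ncard_of_injOn g hgP hinj hPfin

lemma MJ_le_ncard_stop (hmono : CubeMonotone J) (hvan : UniformlyVanishing J) (hd0 : 0 < d)
    {t : ℝ} (ht0 : 0 < t) (ht1 : t < J (unitCube d)) :
    MJ J t⁻¹ ≤ (stopPartition J t).ncard := by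
  obtain ⟨hfin, hdis, hcov⟩ := stopPartition_spec hmono hvan hd0 ht0 ht1
  have h1t : 1 / t⁻¹ = t := by field_simp
  have hmem : {Q ∈ stopPartition J t | 0 < J Q}.ncard ∈ {m : ℕ | ∃ P : Set (Set (Fin d → ℝ)),
      IsJPartition J P ∧ P.ncard = m ∧ ∀ Q ∈ P, J Q < 1 / t⁻¹} := by
    refine ⟨{Q ∈ stopPartition J t | 0 < J Q},
      ⟨stopPartition J t, hfin, stop_subset_family, hdis, hcov, rfl⟩, rfl, ?_⟩
    rintro Q ⟨⟨n, k, hk, rfl, hlt, -⟩, -⟩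
    rw [h1t]
    exact hlt
  exact le_trans (Nat.sInf_le hmem) (Set.ncard_le_ncard (Set.sep_subset _ _) hfin)

lemma tsum_set_finite {α : Type} {s : Set α} (hs : s.Finite) (f : α → ℝ) :
    ∑' (x : s), f ↑x = ∑ x ∈ hs.toFinset, f x := by
  rw [← Finset.tsum_subtype]
  exact Equiv.tsum_eq (Equiv.subtypeEquivRight (fun x => hs.mem_toFinset))
    (fun x : s => f ↑x) |>.symm

lemma cubeSum_eq {F : Set (Set (Fin d → ℝ))} (hF : F.Finite) (q : ℝ) :
    cubeSum F J q = ∑ Q ∈ hF.toFinset, (if J Q = 0 then 0 else J Q ^ q) := by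
  unfold cubeSum
  exact tsum_set_finite hF (fun Q => if J Q = 0 then 0 else J Q ^ q)

lemma term_nonneg (hnn : CubeNonneg J) {q : ℝ} {Q : Set (Fin d → ℝ)}
    (hQ : Q ∈ dyadicFamily d) : 0 ≤ (if J Q = 0 then 0 else J Q ^ q) := by
  split
  · exact le_rfl
  · exact Real.rpow_nonneg (hnn Q hQ) q

lemma cubeSum_nonneg (hnn : CubeNonneg J) {F : Set (Set (Fin d → ℝ))} (hF : F.Finite)
    (hFsub : F ⊆ dyadicFamily d) (q : ℝ) : 0 ≤ cubeSum F J q := by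
  rw [cubeSum_eq hF]
  exact Finset.sum_nonneg fun Q hQ => term_nonneg hnn (hFsub (hF.mem_toFinset.mp hQ))

lemma eventually_cubeSum_le (Fam : ℕ → Set (Set (Fin d → ℝ))) {q : ℝ}
    (h : tauFn Fam J q < 0) :
    ∃ c : ℝ, c < 0 ∧ ∀ᶠ n in atTop, cubeSum (Fam n) J q ≤ Real.exp (c * n * Real.log 2) := by
  obtain ⟨c, hc1, hc2⟩ := EReal.exists_between_coe_real h
  have hc0 : c < 0 := by exact_mod_cast hc2
  refine ⟨c, hc0, ?_⟩
  have hev : ∀ᶠ n in atTop, tauApprox Fam J n q < (c : EReal) :=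
    eventually_lt_of_limsup_lt hc1
  filter_upwards [hev, eventually_ge_atTop 1] with n hn hn1
  by_cases hS : cubeSum (Fam n) J q ≤ 0
  · exact hS.trans (Real.exp_pos _).le
  push_neg at hS
  rw [tauApprox, elog, if_neg (not_le.mpr hS), ← EReal.coe_mul] at hn
  have hreal : Real.log (cubeSum (Fam n) J q) * ((n : ℝ) * Real.log 2)⁻¹ < c := by
    exact_mod_cast hn
  have hnpos : (0:ℝ) < (n : ℝ) * Real.log 2 := by
    have : (0:ℝ) < Real.log 2 := Real.log_pos (by norm_num)
    have : (1:ℝ) ≤ (n : ℝ) := by exact_mod_cast hn1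
    nlinarith [Real.log_pos (show (1:ℝ) < 2 by norm_num)]
  rw [← div_eq_mul_inv, div_lt_iff₀ hnpos] at hreal
  have := Real.exp_lt_exp.mpr hreal
  rw [Real.exp_log hS] at this
  refine this.le.trans (le_of_eq ?_)
  ring_nf

/-- A canonical level for each dyadic cube. -/
def lev (Q : Set (Fin d → ℝ)) : ℕ :=
  if h : Q ∈ dyadicFamily d then Classical.choose (mem_family_elim h) else 0

lemma lev_spec {Q : Set (Fin d → ℝ)} (h : Q ∈ dyadicFamily d) : Q ∈ dyadicLevel d (lev Q) := by
  rw [lev, dif_pos h]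
  exact Classical.choose_spec (mem_family_elim h)

lemma summable_levels (hnn : CubeNonneg J) {q : ℝ}
    (h : tauFn (dyadicLevel d) J q < 0) :
    Summable (fun n => cubeSum (dyadicLevel d n) J q) := by
  obtain ⟨c, hc0, hev⟩ := eventually_cubeSum_le _ h
  obtain ⟨N, hN⟩ := eventually_atTop.mp hev
  rw [← summable_nat_add_iff N]
  set r : ℝ := Real.exp (c * Real.log 2) with hr
  have hr0 : 0 ≤ r := (Real.exp_pos _).le
  have hr1 : r < 1 := Real.exp_lt_one_iff.mpr
    (mul_neg_of_neg_of_pos hc0 (Real.log_pos (by norm_num)))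
  have hgeom : Summable (fun n : ℕ => r ^ (n + N)) := by
    have := (summable_geometric_of_lt_one hr0 hr1).mul_left (r ^ N)
    refine this.congr fun n => ?_
    rw [← pow_add]
    ring_nf
  apply Summable.of_nonneg_of_le
    (fun n => cubeSum_nonneg hnn (level_finite _) (level_subset_family _) q)
    (fun n => ?_) hgeom
  refine (hN (n + N) (by omega)).trans (le_of_eq ?_)
  rw [hr, ← Real.exp_nat_mul]
  congr 1
  push_cast
  ring

lemma summable_family (hnn : CubeNonneg J) {q : ℝ}
    (h : tauFn (dyadicLevel d) J q < 0) :
    Summable (fun Q : dyadicFamily d =>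
      if J (Q : Set (Fin d → ℝ)) = 0 then 0 else J (Q : Set (Fin d → ℝ)) ^ q) := by
  classical
  set f : Set (Fin d → ℝ) → ℝ := fun Q => if J Q = 0 then 0 else J Q ^ q with hf
  set S : ℕ → ℝ := fun n => cubeSum (dyadicLevel d n) J q with hS
  have hSsum : Summable S := summable_levels hnn h
  have hSnonneg : ∀ n, 0 ≤ S n :=
    fun n => cubeSum_nonneg hnn (level_finite _) (level_subset_family _) q
  have hpartial : ∀ (N : ℕ) (v : Finset (Set (Fin d → ℝ))),
      (↑v ⊆ ⋃ m ∈ Finset.range N, dyadicLevel d m) →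
      ∑ Q ∈ v, f Q ≤ ∑ m ∈ Finset.range N, S m := by
    intro N
    induction N with
    | zero =>
      intro v hv
      have : v = ∅ := Finset.eq_empty_of_forall_notMem (fun Q hQ => by simpa using hv hQ)
      simp [this]
    | succ N ih =>
      intro v hv
      rw [← Finset.sum_filter_add_sum_filter_not v (· ∈ dyadicLevel d N) f]
      have hrest : ∑ Q ∈ v.filter (¬ · ∈ dyadicLevel d N), f Q ≤ ∑ m ∈ Finset.range N, S m := by
        apply ih
        intro Q hQ
        simp only [Finset.coe_filter, Set.mem_setOf_eq] at hQ
        have := hv hQ.1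
        simp only [Set.mem_iUnion, Finset.mem_coe, Finset.mem_range] at this ⊢
        obtain ⟨m, hm1, hm2⟩ := this
        refine ⟨m, ?_, hm2⟩
        rcases Nat.lt_succ_iff_lt_or_eq.mp hm1 with h' | rfl
        · exact h'
        · exact absurd hm2 hQ.2
      have hlevel : ∑ Q ∈ v.filter (· ∈ dyadicLevel d N), f Q ≤ S N := by
        have hSN : S N = ∑ Q ∈ (level_finite (d := d) N).toFinset,
            (if J Q = 0 then 0 else J Q ^ q) := cubeSum_eq (level_finite N) q
        rw [hSN]
        apply Finset.sum_le_sum_of_subset_of_nonneg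
        · intro Q hQ
          simp only [Finset.mem_filter] at hQ
          exact (level_finite N).mem_toFinset.mpr hQ.2
        · intro Q hQ _
          exact term_nonneg hnn (level_subset_family N ((level_finite N).mem_toFinset.mp hQ))
      rw [Finset.sum_range_succ]
      linarith
  apply summable_of_sum_le (c := ∑' n, S n)
  · intro Q
    exact term_nonneg hnn Q.2
  · intro u
    have himg : ∑ Q ∈ u, f ↑Q = ∑ Q ∈ u.image Subtype.val, f Q := by
      rw [Finset.sum_image (fun x _ y _ h => Subtype.val_injective h)]
  -- choose N
    rw [himg]
    set v := u.image Subtype.val with hv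
    have hvsub : ∀ Q ∈ v, Q ∈ dyadicFamily d := by
      intro Q hQ
      obtain ⟨Q', -, rfl⟩ := Finset.mem_image.mp hQ
      exact Q'.2
    set N := v.sup lev + 1 with hN
    have hvN : (↑v : Set (Set (Fin d → ℝ))) ⊆ ⋃ m ∈ Finset.range N, dyadicLevel d m := by
      intro Q hQ
      have hQf := hvsub Q hQ
      simp only [Set.mem_iUnion, Finset.mem_coe, Finset.mem_range]
      exact ⟨lev Q, by
        have := Finset.le_sup (f := lev) hQ
        omega, lev_spec hQf⟩
    calc ∑ Q ∈ v, f Q ≤ ∑ m ∈ Finset.range N, S m := hpartial N v hvN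
    _ ≤ ∑' n, S n := Summable.sum_le_tsum _ (fun m _ => hSnonneg m) hSsum

lemma ncard_prod_univ {α β : Type} (s : Set α) [Fintype β] :
    (s ×ˢ (Set.univ : Set β)).ncard = s.ncard * Nat.card β := by
  have := Nat.card_congr (Equiv.Set.prod s (Set.univ : Set β))
  rw [Nat.card_coe_set_eq, Nat.card_prod, Nat.card_coe_set_eq,
    Nat.card_coe_set_eq, Set.ncard_univ] at this
  exact this

lemma ncard_stop_le (hnn : CubeNonneg J) (hd0 : 0 < d) {q t : ℝ} (hq : 0 ≤ q) (ht0 : 0 < t)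
    (hsum : Summable (fun Q : dyadicFamily d =>
      if J (Q : Set (Fin d → ℝ)) = 0 then 0 else J (Q : Set (Fin d → ℝ)) ^ q)) :
    ((stopPartition J t).ncard : ℝ) * t ^ q ≤
      2 ^ d * ∑' (Q : dyadicFamily d),
        (if J (Q : Set (Fin d → ℝ)) = 0 then 0 else J (Q : Set (Fin d → ℝ)) ^ q) := by
  classical
  set f : dyadicFamily d → ℝ := fun Q =>
    if J (Q : Set (Fin d → ℝ)) = 0 then 0 else J (Q : Set (Fin d → ℝ)) ^ q with hfdef
  have hfnn : ∀ Q, 0 ≤ f Q := fun Q => term_nonneg hnn Q.2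
  set A' : Set (dyadicFamily d) := {Q | t ≤ J (Q : Set (Fin d → ℝ))} with hA'
  have htq : (0:ℝ) < t ^ q := Real.rpow_pos_of_pos ht0 q
  have hA'f : ∀ Q ∈ A', t ^ q ≤ f Q := by
    intro Q hQ
    have hJt : t ≤ J (Q : Set (Fin d → ℝ)) := hQ
    have hJne : J (Q : Set (Fin d → ℝ)) ≠ 0 := by
      intro h; rw [h] at hJt; linarith
    rw [hfdef]
    simp only [if_neg hJne]
    exact Real.rpow_le_rpow ht0.le hJt hq
  have hA'fin : A'.Finite := by
    have hco : ∀ᶠ Q in cofinite, f Q < t ^ q :=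
      Tendsto.eventually_lt_const htq hsum.tendsto_cofinite_zero
    rw [Filter.eventually_cofinite] at hco
    exact hco.subset fun Q hQ => not_lt.mpr (hA'f Q hQ)
  have hcard' : (A'.ncard : ℝ) * t ^ q ≤ ∑' Q, f Q := by
    have h1 := Finset.card_nsmul_le_sum hA'fin.toFinset f (t ^ q)
      (fun Q hQ => hA'f Q (hA'fin.mem_toFinset.mp hQ))
    have h2 : ∑ Q ∈ hA'fin.toFinset, f Q ≤ ∑' Q, f Q :=
      Summable.sum_le_tsum _ (fun Q _ => hfnn Q) hsum
    rw [Set.ncard_eq_toFinset_card _ hA'fin]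
    rw [nsmul_eq_mul] at h1
    linarith
  -- the image of A' in the powerset
  set A : Set (Set (Fin d → ℝ)) := Subtype.val '' A' with hA
  have hAfin : A.Finite := hA'fin.image _
  have hAncard : A.ncard = A'.ncard := Set.ncard_image_of_injective A' Subtype.val_injective
  -- injection of the stopping partition into A × (Fin d → Fin 2)
  have hrep : ∀ Q : Set (Fin d → ℝ), Q ∈ stopPartition J t → ∃ nk : ℕ × (Fin d → ℕ),
      (∀ i, nk.2 i < 2 ^ (nk.1 + 1)) ∧ Q = dyadicCube d (nk.1 + 1) nk.2 ∧
      t ≤ J (dyadicCube d nk.1 fun i => nk.2 i / 2) := by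
    rintro Q ⟨n, k, h1, h2, h3, h4⟩; exact ⟨(n, k), h1, h2, h4⟩
  choose rep hrep1 hrep2 hrep3 using hrep
  set φ : Set (Fin d → ℝ) → Set (Fin d → ℝ) × (Fin d → Fin 2) := fun Q =>
    if h : Q ∈ stopPartition J t then
      (dyadicCube d (rep Q h).1 (fun i => (rep Q h).2 i / 2),
       fun i => ⟨(rep Q h).2 i % 2, Nat.mod_lt _ (by norm_num)⟩)
    else (∅, fun _ => 0) with hφ
  have hmaps : ∀ Q ∈ stopPartition J t,
      φ Q ∈ A ×ˢ (Set.univ : Set (Fin d → Fin 2)) := by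
    intro Q hQ
    simp only [hφ, dif_pos hQ, Set.mem_prod, Set.mem_univ, and_true]
    exact ⟨⟨_, level_subset_family _ (cube_mem_level (parent_lt (hrep1 Q hQ)))⟩,
      hrep3 Q hQ, rfl⟩
  have hinj : Set.InjOn φ (stopPartition J t) := by
    intro Q1 h1 Q2 h2 he
    simp only [hφ, dif_pos h1, dif_pos h2, Prod.mk.injEq] at he
    obtain ⟨hpar, hmod⟩ := he
    obtain ⟨heq1, heq2⟩ := cube_injective hd0 hpar
    have hk : (rep Q1 h1).2 = (rep Q2 h2).2 := by
      funext i
      have hdiv := congrFun heq2 i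
      have hm := congrFun hmod i
      simp only [Fin.mk.injEq] at hm
      omega
    rw [hrep2 Q1 h1, hrep2 Q2 h2, heq1, hk]
  have hstep : (stopPartition J t).ncard ≤ A.ncard * 2 ^ d := by
    have := Set.ncard_le_ncard_of_injOn φ hmaps hinj (hAfin.prod Set.finite_univ)
    rwa [ncard_prod_univ, show Nat.card (Fin d → Fin 2) = 2 ^ d by
      simp [Nat.card_eq_fintype_card]] at this
  calc ((stopPartition J t).ncard : ℝ) * t ^ q
      ≤ ((A.ncard * 2 ^ d : ℕ) : ℝ) * t ^ q := by
        apply mul_le_mul_of_nonneg_right _ htq.le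
        exact_mod_cast hstep
  _ = 2 ^ d * ((A'.ncard : ℝ) * t ^ q) := by rw [hAncard]; push_cast; ring
  _ ≤ 2 ^ d * ∑' Q, f Q := by
        apply mul_le_mul_of_nonneg_left hcard' (by positivity)

lemma ncount_le_cubeSum (hnn : CubeNonneg J) {Fam : ℕ → Set (Set (Fin d → ℝ))}
    (hFam : ∀ n, Fam n ⊆ dyadicLevel d n) {α q : ℝ} (hq : 0 ≤ q) (n : ℕ) :
    (NCount Fam J α n : ℝ) * ((2:ℝ) ^ (-(α * n))) ^ q ≤ cubeSum (Fam n) J q := by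
  classical
  have hFfin : (Fam n).Finite := (level_finite n).subset (hFam n)
  set B := {Q ∈ Fam n | (2:ℝ) ^ (-(α * (n:ℝ))) ≤ J Q} with hB
  have hBfin : B.Finite := hFfin.subset (Set.sep_subset _ _)
  have hpow : (0:ℝ) < (2:ℝ) ^ (-(α * (n:ℝ))) := Real.rpow_pos_of_pos (by norm_num) _
  have hBf : ∀ Q ∈ B, ((2:ℝ) ^ (-(α * (n:ℝ)))) ^ q ≤ (if J Q = 0 then 0 else J Q ^ q) := by
    rintro Q ⟨hQF, hQge⟩
    have hJne : J Q ≠ 0 := by intro h; rw [h] at hQge; linarith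
    rw [if_neg hJne]
    exact Real.rpow_le_rpow hpow.le hQge hq
  have h1 := Finset.card_nsmul_le_sum hBfin.toFinset
    (fun Q => if J Q = 0 then 0 else J Q ^ q) (((2:ℝ) ^ (-(α * (n:ℝ)))) ^ q)
    (fun Q hQ => hBf Q (hBfin.mem_toFinset.mp hQ))
  have h2 : ∑ Q ∈ hBfin.toFinset, (if J Q = 0 then 0 else J Q ^ q) ≤
      ∑ Q ∈ hFfin.toFinset, (if J Q = 0 then 0 else J Q ^ q) := by
    apply Finset.sum_le_sum_of_subset_of_nonneg
    · intro Q hQ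
      exact hFfin.mem_toFinset.mpr (hBfin.mem_toFinset.mp hQ).1
    · intro Q hQ _
      exact term_nonneg hnn (level_subset_family n (hFam n (hFfin.mem_toFinset.mp hQ)))
  rw [cubeSum_eq hFfin, NCount, Set.ncard_eq_toFinset_card _ hBfin]
  rw [nsmul_eq_mul] at h1
  exact le_trans (le_of_eq rfl) (h1.trans h2)

lemma limsup_map_ereal {α β : Type} (u : α → EReal) (m : β → α) (f : Filter β) :
    limsup u (Filter.map m f) = limsup (u ∘ m) f := by
  simp [Filter.limsup_eq, Filter.eventually_map]

lemma liminf_map_ereal {α β : Type} (u : α → EReal) (m : β → α) (f : Filter β) :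
    liminf u (Filter.map m f) = liminf (u ∘ m) f := by
  simp [Filter.liminf_eq, Filter.eventually_map]

lemma map_inv_nhdsGT : Filter.map (fun t : ℝ => t⁻¹) (nhdsWithin 0 (Set.Ioi 0)) = atTop := by
  apply le_antisymm
  · exact tendsto_inv_nhdsGT_zero
  · have h2 : Filter.map (fun t : ℝ => t⁻¹) atTop ≤ nhdsWithin 0 (Set.Ioi 0) :=
      tendsto_inv_atTop_nhdsGT_zero
    calc atTop = Filter.map (fun t : ℝ => t⁻¹) (Filter.map (fun t : ℝ => t⁻¹) atTop) := by
          rw [Filter.map_map]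
          have : ((fun t : ℝ => t⁻¹) ∘ (fun t : ℝ => t⁻¹)) = id := by
            funext t; simp
          rw [this, Filter.map_id]
    _ ≤ Filter.map (fun t : ℝ => t⁻¹) (nhdsWithin 0 (Set.Ioi 0)) := Filter.map_mono h2

lemma inv_lt_aux {a : ℝ} (ha : 0 < a) {x : ℝ} (hx : a⁻¹ < x) : 0 < x ∧ 1 / x < a := by
  have hx0 : 0 < x := lt_trans (by positivity) hx
  refine ⟨hx0, ?_⟩
  rw [one_div]
  have := inv_strictAnti₀ (inv_pos.mpr ha) hx
  rwa [inv_inv] at this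

lemma tendsto_two_rpow {α : ℝ} (hα : 0 < α) :
    Tendsto (fun n : ℕ => (2:ℝ) ^ (α * n)) atTop atTop := by
  have hlog2 : (0:ℝ) < Real.log 2 := Real.log_pos (by norm_num)
  have h1 : Tendsto (fun n : ℕ => ((n:ℝ))) atTop atTop := tendsto_natCast_atTop_atTop
  have h2 : Tendsto (fun n : ℕ => α * n) atTop atTop := h1.const_mul_atTop hα
  have h3 : Tendsto (fun n : ℕ => Real.log 2 * (α * n)) atTop atTop :=
    h2.const_mul_atTop hlog2
  have h4 := Real.tendsto_exp_atTop.comp h3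
  refine h4.congr fun n => ?_
  simp only [Function.comp]
  rw [Real.rpow_def_of_pos (by norm_num : (0:ℝ) < 2)]

end S8

set_option maxHeartbeats 2000000 in
open S8 in
/-- For a monotone, locally non-vanishing, uniformly vanishing set
function `𝔍` with `𝔍(𝒬) > 0`: for `0 < t < 𝔍(𝒬)` the stopping family `P_t` is a finite
partition of `𝒬` by dyadic cubes, and
`F̄_𝔍 ≤ h̄_𝔍 ≤ limsup_{t↓0} log card P_t/(−log t) ≤ κ_𝔍 ≤ q_𝔍`,
`F̲_𝔍 ≤ h̲_𝔍 ≤ liminf_{t↓0} log card P_t/(−log t)`, and `F̄_𝔍^D ≤ q_𝔍^D`. -/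
theorem statement8 (d : ℕ) (hd : 2 ≤ d) (J : Set (Fin d → ℝ) → ℝ)
    (hnn : CubeNonneg J) (hmono : CubeMonotone J) (hloc : LocallyNonVanishing J)
    (hvan : UniformlyVanishing J) (hQ : 0 < J (unitCube d)) :
    (∀ t : ℝ, 0 < t → t < J (unitCube d) →
      (stopPartition J t).Finite ∧ (stopPartition J t).PairwiseDisjoint id ∧
        ⋃₀ stopPartition J t = unitCube d) ∧
    FUpper (dyadicLevel d) J ≤ hUpper J ∧
    hUpper J ≤
      Filter.limsup
        (fun t : ℝ => elog ((stopPartition J t).ncard : ℝ) *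
          (((-Real.log t)⁻¹ : ℝ) : EReal)) (nhdsWithin 0 (Set.Ioi 0)) ∧
    Filter.limsup
        (fun t : ℝ => elog ((stopPartition J t).ncard : ℝ) *
          (((-Real.log t)⁻¹ : ℝ) : EReal)) (nhdsWithin 0 (Set.Ioi 0)) ≤ kappaCrit J ∧
    kappaCrit J ≤ qCrit (dyadicLevel d) J ∧
    FLower (dyadicLevel d) J ≤ hLower J ∧
    hLower J ≤
      Filter.liminf
        (fun t : ℝ => elog ((stopPartition J t).ncard : ℝ) *
          (((-Real.log t)⁻¹ : ℝ) : EReal)) (nhdsWithin 0 (Set.Ioi 0)) ∧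
    FUpper (dyadicLevelD d) J ≤ qCrit (dyadicLevelD d) J := by
  have hd0 : 0 < d := by omega
  -- the pointwise comparison used for parts C and G
  have hpt : ∀ᶠ t in nhdsWithin (0:ℝ) (Set.Ioi 0),
      ((Real.log (MJ J t⁻¹) / Real.log t⁻¹ : ℝ) : EReal) ≤
        elog ((stopPartition J t).ncard : ℝ) * (((-Real.log t)⁻¹ : ℝ) : EReal) := by
    have hm : (0:ℝ) < min 1 (J (unitCube d)) := lt_min one_pos hQ
    filter_upwards [Ioo_mem_nhdsGT_of_mem (Set.mem_Ico.mpr ⟨le_rfl, hm⟩)] with t ht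
    obtain ⟨ht0, htm⟩ := ht
    have ht1 : t < 1 := lt_of_lt_of_le htm (min_le_left _ _)
    have htQ : t < J (unitCube d) := lt_of_lt_of_le htm (min_le_right _ _)
    have hx0 : (0:ℝ) < t⁻¹ := by positivity
    have hxq : 1 / t⁻¹ < J (unitCube d) := by rw [one_div, inv_inv]; exact htQ
    have hMJ1 : 1 ≤ MJ J t⁻¹ := one_le_MJ hmono hvan hloc hd0 hQ hx0 hxq
    have hle : MJ J t⁻¹ ≤ (stopPartition J t).ncard := MJ_le_ncard_stop hmono hvan hd0 ht0 htQ
    have hn1 : 1 ≤ (stopPartition J t).ncard := le_trans hMJ1 hle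
    have hL : (0:ℝ) < -Real.log t := neg_pos.mpr (Real.log_neg ht0 ht1)
    have helog : elog ((stopPartition J t).ncard : ℝ) =
        ((Real.log ((stopPartition J t).ncard : ℝ) : ℝ) : EReal) := by
      rw [elog, if_neg]
      push_neg
      exact_mod_cast hn1
    rw [helog, ← EReal.coe_mul, EReal.coe_le_coe_iff, Real.log_inv]
    have hlogle : Real.log (MJ J t⁻¹ : ℝ) ≤ Real.log ((stopPartition J t).ncard : ℝ) :=
      Real.log_le_log (by exact_mod_cast hMJ1) (by exact_mod_cast hle)
    rw [div_eq_mul_inv]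
    exact mul_le_mul_of_nonneg_right hlogle (inv_nonneg.mpr hL.le)
  refine ⟨fun t ht0 ht1 => stopPartition_spec hmono hvan hd0 ht0 ht1, ?_, ?_, ?_, ?_, ?_, ?_, ?_⟩
  · -- B : FUpper ≤ hUpper
    refine iSup_le fun α => iSup_le fun hα => ?_
    rw [← EReal.le_of_forall_lt_iff_le]
    intro z hz
    have hevF : ∀ᶠ x in atTop,
        ((Real.log (MJ J x) / Real.log x : ℝ) : EReal) < (z:EReal) :=
      eventually_lt_of_limsup_lt hz
    have htend := tendsto_two_rpow hα
    have hev1 := htend.eventually hevF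
    have hev2 : ∀ᶠ n : ℕ in atTop, (2:ℝ) ^ (-(α * (n:ℝ))) < J (unitCube d) := by
      have hinv0 : Tendsto (fun n : ℕ => ((2:ℝ) ^ (α * n))⁻¹) atTop (nhds 0) :=
        htend.inv_tendsto_atTop
      have := Tendsto.eventually_lt_const hQ hinv0
      filter_upwards [this] with n hn
      rwa [Real.rpow_neg (by norm_num : (0:ℝ) ≤ 2)]
    have hev3 : ∀ᶠ n : ℕ in atTop, (J (unitCube d))⁻¹ < (2:ℝ) ^ (α * (n:ℝ)) :=
      htend.eventually_gt_atTop _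
    apply limsup_le_of_le (by isBoundedDefault)
    filter_upwards [hev1, hev2, hev3, eventually_ge_atTop 1] with n h1 h2 h3 hn1
    refine le_of_lt (lt_of_le_of_lt ?_ h1)
    set x : ℝ := (2:ℝ) ^ (α * (n:ℝ)) with hx
    have hx0 : 0 < x := Real.rpow_pos_of_pos (by norm_num) _
    have h1x : 1 / x = (2:ℝ) ^ (-(α * (n:ℝ))) := by
      rw [one_div, Real.rpow_neg (by norm_num : (0:ℝ) ≤ 2)]
    have hxq : 1 / x < J (unitCube d) := by rw [h1x]; exact h2
    have hNle : NCount (dyadicLevel d) J α n ≤ MJ J x :=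
      ncount_le_MJ hmono hvan hloc hd0 hx0 le_rfl hxq
    have hMJ1 : 1 ≤ MJ J x := one_le_MJ hmono hvan hloc hd0 hQ hx0 hxq
    have hlogx : Real.log x = α * (n:ℝ) * Real.log 2 := Real.log_rpow (by norm_num) _
    have hDen : (0:ℝ) < α * (n:ℝ) * Real.log 2 := by
      have h2 : (0:ℝ) < Real.log 2 := Real.log_pos (by norm_num)
      have hn : (0:ℝ) < (n:ℝ) := by exact_mod_cast hn1
      exact mul_pos (mul_pos hα hn) h2
    rw [EReal.coe_le_coe_iff]
    have hlogN : Real.log ((NCount (dyadicLevel d) J α n : ℕ) : ℝ) ≤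
        Real.log ((MJ J x : ℕ) : ℝ) := by
      rcases Nat.eq_zero_or_pos (NCount (dyadicLevel d) J α n) with h0 | hpos
      · rw [h0]
        simp only [Nat.cast_zero, Real.log_zero]
        exact Real.log_nonneg (by exact_mod_cast hMJ1)
      · exact Real.log_le_log (by exact_mod_cast hpos) (by exact_mod_cast hNle)
    have hlp : logPlus ((NCount (dyadicLevel d) J α n : ℕ) : ℝ) ≤
        Real.log ((MJ J x : ℕ) : ℝ) :=
      max_le hlogN (Real.log_nonneg (by exact_mod_cast hMJ1))
    rw [hlogx]
    exact (div_le_div_iff_of_pos_right hDen).mpr hlp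

  · -- C : hUpper ≤ limsup
    rw [← EReal.le_of_forall_lt_iff_le]
    intro z hz
    have hev : ∀ᶠ t in nhdsWithin (0:ℝ) (Set.Ioi 0),
        elog ((stopPartition J t).ncard : ℝ) * (((-Real.log t)⁻¹ : ℝ) : EReal) < (z:EReal) :=
      eventually_lt_of_limsup_lt hz
    have hcomb : ∀ᶠ t in nhdsWithin (0:ℝ) (Set.Ioi 0),
        ((Real.log (MJ J t⁻¹) / Real.log t⁻¹ : ℝ) : EReal) ≤ (z:EReal) := by
      filter_upwards [hpt, hev] with t h1 h2
      exact le_of_lt (lt_of_le_of_lt h1 h2)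
    rw [hUpper, ← map_inv_nhdsGT, limsup_map_ereal]
    exact limsup_le_of_le (by isBoundedDefault)
      (by filter_upwards [hcomb] with t h; exact h)
  · -- D : limsup ≤ kappaCrit
    refine le_sInf ?_
    rintro x ⟨q, hq0, rfl, hsum⟩
    rw [← EReal.le_of_forall_lt_iff_le]
    intro z hz
    have hqz : q < z := by exact_mod_cast hz
    set Sig0 : ℝ := ∑' (Q : dyadicFamily d),
      (if J (Q : Set (Fin d → ℝ)) = 0 then 0 else J (Q : Set (Fin d → ℝ)) ^ q) with hSig
    have hSigpos : 0 < Sig0 := by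
      have hterm : (0:ℝ) < (if J ((⟨unitCube d, unitCube_mem_family⟩ :
          dyadicFamily d) : Set (Fin d → ℝ)) = 0 then 0
          else J ((⟨unitCube d, unitCube_mem_family⟩ : dyadicFamily d) : Set (Fin d → ℝ)) ^ q) := by
        rw [if_neg (by simpa using ne_of_gt hQ)]
        exact Real.rpow_pos_of_pos hQ q
      refine lt_of_lt_of_le hterm ?_
      exact Summable.le_tsum hsum _ (fun j _ => term_nonneg hnn j.2)
    set K : ℝ := 2 ^ d * Sig0 with hK
    have hKpos : 0 < K := by positivity
    have hnegtop : Tendsto (fun t : ℝ => -Real.log t) (nhdsWithin 0 (Set.Ioi 0)) atTop :=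
      tendsto_neg_atBot_atTop.comp Real.tendsto_log_nhdsGT_zero
    apply limsup_le_of_le (by isBoundedDefault)
    have hIoo : Set.Ioo (0:ℝ) 1 ∈ nhdsWithin (0:ℝ) (Set.Ioi 0) :=
      Ioo_mem_nhdsGT_of_mem (Set.mem_Ico.mpr ⟨le_rfl, one_pos⟩)
    filter_upwards [hIoo, hnegtop.eventually_ge_atTop (Real.log K / (z - q))] with t ht hev3
    obtain ⟨ht0, ht1⟩ := ht
    have hL : (0:ℝ) < -Real.log t := neg_pos.mpr (Real.log_neg ht0 ht1)
    rcases Nat.eq_zero_or_pos (stopPartition J t).ncard with h0 | hpos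
    · rw [h0]
      have helog : elog ((0:ℕ) : ℝ) = (⊥ : EReal) := by
        rw [elog, if_pos]
        norm_num
      rw [helog]
      have : (⊥ : EReal) * (((-Real.log t)⁻¹ : ℝ) : EReal) = ⊥ := by
        apply EReal.bot_mul_of_pos
        exact_mod_cast inv_pos.mpr hL
      rw [this]
      exact bot_le
    · have hbound := ncard_stop_le hnn hd0 hq0 ht0 hsum
      have htq : (0:ℝ) < t ^ q := Real.rpow_pos_of_pos ht0 q
      have hncard_le : ((stopPartition J t).ncard : ℝ) ≤ K * t ^ (-q) := by
        rw [Real.rpow_neg ht0.le]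
        have hb2 : ((stopPartition J t).ncard : ℝ) * t ^ q ≤ K := hbound
        calc ((stopPartition J t).ncard : ℝ)
            = ((stopPartition J t).ncard : ℝ) * t ^ q * (t ^ q)⁻¹ := by field_simp
        _ ≤ K * (t ^ q)⁻¹ := mul_le_mul_of_nonneg_right hb2 (inv_nonneg.mpr htq.le)
      have hlogn : Real.log ((stopPartition J t).ncard : ℝ) ≤ Real.log K + q * (-Real.log t) := by
        have h1 : Real.log ((stopPartition J t).ncard : ℝ) ≤ Real.log (K * t ^ (-q)) :=
          Real.log_le_log (by exact_mod_cast hpos) hncard_le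
        rw [Real.log_mul (ne_of_gt hKpos) (ne_of_gt (Real.rpow_pos_of_pos ht0 _)),
          Real.log_rpow ht0] at h1
        linarith
      have hlogK : Real.log K ≤ (z - q) * (-Real.log t) := by
        rw [div_le_iff₀ (by linarith)] at hev3
        linarith
      have hreal : Real.log ((stopPartition J t).ncard : ℝ) * (-Real.log t)⁻¹ ≤ z := by
        have h2 : Real.log ((stopPartition J t).ncard : ℝ) ≤ z * (-Real.log t) := by nlinarith
        calc Real.log ((stopPartition J t).ncard : ℝ) * (-Real.log t)⁻¹
            ≤ (z * (-Real.log t)) * (-Real.log t)⁻¹ :=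
              mul_le_mul_of_nonneg_right h2 (inv_nonneg.mpr hL.le)
        _ = z := by
              have hne : Real.log t ≠ 0 := ne_of_lt (by linarith)
              field_simp
      have helog : elog (((stopPartition J t).ncard : ℕ) : ℝ) =
          ((Real.log ((stopPartition J t).ncard : ℝ) : ℝ) : EReal) := by
        rw [elog, if_neg]
        push_neg
        exact_mod_cast hpos
      rw [helog, ← EReal.coe_mul, EReal.coe_le_coe_iff]
      exact hreal
  · -- E : kappaCrit ≤ qCrit
    refine le_sInf ?_
    rintro x ⟨q, hq0, rfl, htau⟩
    exact sInf_le ⟨q, hq0, rfl, summable_family hnn htau⟩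
  · -- F : FLower ≤ hLower
    refine iSup_le fun α => iSup_le fun hα => ?_
    have hlog2 : (0:ℝ) < Real.log 2 := Real.log_pos (by norm_num)
    have hF0 : ∀ᶠ x : ℝ in atTop,
        (0 : EReal) ≤ ((Real.log (MJ J x) / Real.log x : ℝ) : EReal) := by
      filter_upwards [eventually_gt_atTop (max 1 (J (unitCube d))⁻¹)] with x hx
      have hx1 : (1:ℝ) < x := lt_of_le_of_lt (le_max_left _ _) hx
      have hxQ : (J (unitCube d))⁻¹ < x := lt_of_le_of_lt (le_max_right _ _) hx
      obtain ⟨hx0, hxq⟩ := inv_lt_aux hQ hxQ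
      have hMJ1 : 1 ≤ MJ J x := one_le_MJ hmono hvan hloc hd0 hQ hx0 hxq
      have : (0:ℝ) ≤ Real.log (MJ J x) / Real.log x :=
        div_nonneg (Real.log_nonneg (by exact_mod_cast hMJ1)) (Real.log_nonneg hx1.le)
      exact_mod_cast this
    rw [← EReal.ge_of_forall_gt_iff_ge]
    intro c hc
    rcases le_or_gt c 0 with hc0 | hc0
    · refine le_trans ?_ (le_liminf_of_le (by isBoundedDefault) hF0)
      exact_mod_cast hc0
    -- c > 0
    have hev1 : ∀ᶠ n : ℕ in atTop, (c : EReal) <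
        ((logPlus ((NCount (dyadicLevel d) J α n : ℕ) : ℝ) /
          (α * (n:ℝ) * Real.log 2) : ℝ) : EReal) := eventually_lt_of_lt_liminf hc
    have htend := tendsto_two_rpow hα
    have hev2 : ∀ᶠ n : ℕ in atTop, (2:ℝ) ^ (-(α * (n:ℝ))) < J (unitCube d) := by
      have hinv0 : Tendsto (fun n : ℕ => ((2:ℝ) ^ (α * n))⁻¹) atTop (nhds 0) :=
        htend.inv_tendsto_atTop
      filter_upwards [Tendsto.eventually_lt_const hQ hinv0] with n hn
      rwa [Real.rpow_neg (by norm_num : (0:ℝ) ≤ 2)]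
    obtain ⟨N₀, hN₀⟩ := eventually_atTop.mp (hev1.and hev2)
    rw [← EReal.ge_of_forall_gt_iff_ge]
    intro z hzc
    have hzc' : z < c := by exact_mod_cast hzc
    rcases le_or_gt z 0 with hz0 | hz0
    · refine le_trans ?_ (le_liminf_of_le (by isBoundedDefault) hF0)
      exact_mod_cast hz0
    set M := ⌈z / (c - z)⌉₊ with hM
    apply le_liminf_of_le (by isBoundedDefault)
    have hntend : Tendsto (fun x : ℝ => ⌊Real.log x / (α * Real.log 2)⌋₊) atTop atTop :=
      tendsto_nat_floor_atTop.comp (Real.tendsto_log_atTop.atTop_div_const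
        (mul_pos hα hlog2))
    filter_upwards [eventually_gt_atTop 1, eventually_gt_atTop (J (unitCube d))⁻¹,
      hntend.eventually_ge_atTop (max (max N₀ M) 1)] with x hx1 hxQ hnx
    set n := ⌊Real.log x / (α * Real.log 2)⌋₊ with hn
    have hnN₀ : N₀ ≤ n := le_trans (le_trans (le_max_left _ _) (le_max_left _ _)) hnx
    have hnM : M ≤ n := le_trans (le_trans (le_max_right _ _) (le_max_left _ _)) hnx
    have hn1 : 1 ≤ n := le_trans (le_max_right _ _) hnx
    obtain ⟨hterm, hpow⟩ := hN₀ n hnN₀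
    have hx0 : (0:ℝ) < x := lt_trans one_pos hx1
    have hlogx : (0:ℝ) < Real.log x := Real.log_pos hx1
    have hd2 : (0:ℝ) < α * Real.log 2 := mul_pos hα hlog2
    have hfloorle : (n:ℝ) ≤ Real.log x / (α * Real.log 2) := Nat.floor_le (by positivity)
    have hfloorup : Real.log x / (α * Real.log 2) < (n:ℝ) + 1 :=
      Nat.lt_floor_add_one _
    have h2x : (2:ℝ) ^ (α * (n:ℝ)) ≤ x := by
      rw [Real.rpow_def_of_pos (by norm_num : (0:ℝ) < 2), ← Real.exp_log hx0]
      apply Real.exp_le_exp.mpr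
      have := (le_div_iff₀ hd2).mp hfloorle
      nlinarith
    obtain ⟨-, hxq⟩ := inv_lt_aux hQ hxQ
    have hNle : NCount (dyadicLevel d) J α n ≤ MJ J x :=
      ncount_le_MJ hmono hvan hloc hd0 hx0 h2x hxq
    have hMJ1 : 1 ≤ MJ J x := one_le_MJ hmono hvan hloc hd0 hQ hx0 hxq
    have hnpos : (0:ℝ) < (n:ℝ) := by exact_mod_cast hn1
    have hDen : (0:ℝ) < α * (n:ℝ) * Real.log 2 := mul_pos (mul_pos hα hnpos) hlog2
    have hcN : c * (α * (n:ℝ) * Real.log 2) <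
        logPlus ((NCount (dyadicLevel d) J α n : ℕ) : ℝ) := by
      have := EReal.coe_lt_coe_iff.mp hterm
      exact (lt_div_iff₀ hDen).mp this
    have hlogN : Real.log ((NCount (dyadicLevel d) J α n : ℕ) : ℝ) ≤
        Real.log ((MJ J x : ℕ) : ℝ) := by
      rcases Nat.eq_zero_or_pos (NCount (dyadicLevel d) J α n) with h0 | hposN
      · rw [h0]
        simp only [Nat.cast_zero, Real.log_zero]
        exact Real.log_nonneg (by exact_mod_cast hMJ1)
      · exact Real.log_le_log (by exact_mod_cast hposN) (by exact_mod_cast hNle)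
    have hlp : logPlus ((NCount (dyadicLevel d) J α n : ℕ) : ℝ) ≤
        Real.log ((MJ J x : ℕ) : ℝ) :=
      max_le hlogN (Real.log_nonneg (by exact_mod_cast hMJ1))
    have hlogxle : Real.log x ≤ α * ((n:ℝ) + 1) * Real.log 2 := by
      have := (div_lt_iff₀ hd2).mp hfloorup
      nlinarith
    have hDen1 : (0:ℝ) < α * ((n:ℝ) + 1) * Real.log 2 := by positivity
    have key : z ≤ Real.log ((MJ J x : ℕ) : ℝ) / Real.log x := by
      have h1 : logPlus ((NCount (dyadicLevel d) J α n : ℕ) : ℝ) /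
          (α * ((n:ℝ) + 1) * Real.log 2) ≤ Real.log ((MJ J x : ℕ) : ℝ) / Real.log x :=
        div_le_div₀ (Real.log_nonneg (by exact_mod_cast hMJ1)) hlp hlogx hlogxle
      have h2 : z ≤ logPlus ((NCount (dyadicLevel d) J α n : ℕ) : ℝ) /
          (α * ((n:ℝ) + 1) * Real.log 2) := by
        rw [le_div_iff₀ hDen1]
        have hzn : z * ((n:ℝ) + 1) ≤ c * n := by
          have hMn : z / (c - z) ≤ (n:ℝ) := le_trans (Nat.le_ceil _) (by exact_mod_cast hnM)
          have hzcn : z ≤ (n:ℝ) * (c - z) := by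
            have := (div_le_iff₀ (by linarith : (0:ℝ) < c - z)).mp hMn
            linarith
          nlinarith
        calc z * (α * ((n:ℝ) + 1) * Real.log 2)
            = (z * ((n:ℝ) + 1)) * (α * Real.log 2) := by ring
        _ ≤ (c * n) * (α * Real.log 2) := mul_le_mul_of_nonneg_right hzn hd2.le
        _ = c * (α * (n:ℝ) * Real.log 2) := by ring
        _ ≤ logPlus ((NCount (dyadicLevel d) J α n : ℕ) : ℝ) := hcN.le
      exact le_trans h2 h1
    exact_mod_cast EReal.coe_le_coe_iff.mpr key
  · -- G : hLower ≤ liminf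
    rw [← EReal.ge_of_forall_gt_iff_ge]
    intro z hz
    rw [hLower, ← map_inv_nhdsGT, liminf_map_ereal] at hz
    have hev : ∀ᶠ t in nhdsWithin (0:ℝ) (Set.Ioi 0),
        (z : EReal) < ((Real.log (MJ J t⁻¹) / Real.log t⁻¹ : ℝ) : EReal) := by
      have := eventually_lt_of_lt_liminf hz
      filter_upwards [this] with t h
      exact h
    exact le_liminf_of_le (by isBoundedDefault)
      (by filter_upwards [hev, hpt] with t h1 h2; exact (le_of_lt h1).trans h2)
  · -- H : FUpper^D ≤ qCrit^D
    refine le_sInf ?_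
    rintro x ⟨q, hq0, rfl, htau⟩
    refine iSup_le fun α => iSup_le fun hα => ?_
    obtain ⟨c, hc0, hev⟩ := eventually_cubeSum_le (dyadicLevelD d) htau
    apply limsup_le_of_le (by isBoundedDefault)
    filter_upwards [hev, eventually_ge_atTop 1] with n hn hn1
    rw [EReal.coe_le_coe_iff]
    have hlog2 : (0:ℝ) < Real.log 2 := Real.log_pos (by norm_num)
    have hnpos : (0:ℝ) < (n:ℝ) := by exact_mod_cast hn1
    have hDen : (0:ℝ) < α * (n:ℝ) * Real.log 2 := mul_pos (mul_pos hα hnpos) hlog2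
    rw [div_le_iff₀ hDen]
    rcases Nat.eq_zero_or_pos (NCount (dyadicLevelD d) J α n) with h0 | hpos
    · rw [h0]
      have : logPlus ((0:ℕ) : ℝ) = 0 := by
        simp [logPlus, Real.log_zero]
      rw [this]
      positivity
    · have hcount := ncount_le_cubeSum hnn
        (fun m => (fun Q hQ => hQ.1 : dyadicLevelD d m ⊆ dyadicLevel d m)) hq0 (α := α) n
      have hpow : (0:ℝ) < ((2:ℝ) ^ (-(α * (n:ℝ)))) ^ q :=
        Real.rpow_pos_of_pos (Real.rpow_pos_of_pos (by norm_num) _) q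
      have hNle : ((NCount (dyadicLevelD d) J α n : ℕ) : ℝ) ≤
          Real.exp (c * n * Real.log 2) / ((2:ℝ) ^ (-(α * (n:ℝ)))) ^ q := by
        rw [le_div_iff₀ hpow]
        exact hcount.trans hn
      have hpow_eq : ((2:ℝ) ^ (-(α * (n:ℝ)))) ^ q = Real.exp (Real.log 2 * (-(α * n) * q)) := by
        rw [← Real.rpow_mul (by norm_num : (0:ℝ) ≤ 2)]
        rw [Real.rpow_def_of_pos (by norm_num : (0:ℝ) < 2)]
      have hNle2 : ((NCount (dyadicLevelD d) J α n : ℕ) : ℝ) ≤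
          Real.exp ((c + α * q) * n * Real.log 2) := by
        refine hNle.trans (le_of_eq ?_)
        rw [hpow_eq, ← Real.exp_sub]
        congr 1
        ring
      have hlogN : Real.log ((NCount (dyadicLevelD d) J α n : ℕ) : ℝ) ≤
          (c + α * q) * n * Real.log 2 := by
        rw [Real.log_le_iff_le_exp (by exact_mod_cast hpos)]
        exact hNle2
      refine max_le ?_ (by positivity)
      refine hlogN.trans ?_
      nlinarith [mul_pos hnpos hlog2]
end
end

section
/- Let J : 𝒟 → [0,∞) be finite-valued, subadditive and locally non-vanishing with J(𝒬) > 0, let a > 0, and set 𝔍_{J,a}(Q) = J(Q)·Λ(Q)^a for Q ∈ 𝒟, where Λ is Lebesgue measure. For n ≥ 1 let γ_n = min{max_{Q∈P} 𝔍_{J,a}(Q) : P ∈ Π_{𝔍_{J,a}}, card(P) ≤ n}. Then γ_n = O(n^{−(1+a)}) and M_{𝔍_{J,a}}(x) = O(x^{1/(1+a)}). If moreover J is singular with respect to Λ, then γ_n = o(n^{−(1+a)}) and M_{𝔍_{J,a}}(x) = o(x^{1/(1+a)}). -/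
open MeasureTheory Filter Set Topology Classical

noncomputable section

/-- `J` is subadditive on dyadic cubes: for every finite partition of a dyadic cube `Q`
into disjoint dyadic cubes, the sum of the values is at most `J(Q)`. -/
def CubeSubadditive {d : ℕ} (J : Set (Fin d → ℝ) → ℝ) : Prop :=
  ∀ Q ∈ dyadicFamily d, ∀ S : Finset (Set (Fin d → ℝ)),
    (S : Set (Set (Fin d → ℝ))) ⊆ dyadicFamily d →
    (S : Set (Set (Fin d → ℝ))).PairwiseDisjoint id →
    ⋃₀ (S : Set (Set (Fin d → ℝ))) = Q →
    (∑ Q' ∈ S, J Q') ≤ J Q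

/-- `J` is singular with respect to Lebesgue measure. -/
def CubeSingular {d : ℕ} (J : Set (Fin d → ℝ) → ℝ) : Prop :=
  ∀ ε : ℝ, 0 < ε → ∃ Ξ Ξ' : Finset (Set (Fin d → ℝ)),
    (Ξ : Set (Set (Fin d → ℝ))) ⊆ dyadicFamily d ∧
    (Ξ : Set (Set (Fin d → ℝ))).PairwiseDisjoint id ∧
    ⋃₀ (Ξ : Set (Set (Fin d → ℝ))) = unitCube d ∧ Ξ' ⊆ Ξ ∧
    (∑ Q ∈ Ξ \ Ξ', (volume Q).toReal) ≤ ε ∧ (∑ Q ∈ Ξ', J Q) ≤ ε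

/-- `γ_{𝔍,n}`: the minimal value of `max_{Q∈P} 𝔍(Q)` over `𝔍`-partitions `P` with at most
`n` elements. -/
def gammaJ {d : ℕ} (J : Set (Fin d → ℝ) → ℝ) (n : ℕ) : ℝ :=
  sInf ((fun P => sSup (J '' P)) ''
    {P : Set (Set (Fin d → ℝ)) | IsJPartition J P ∧ P.ncard ≤ n})

namespace S10

variable {d : ℕ}

lemma mem_dyadicCube {n : ℕ} {k : Fin d → ℕ} {x : Fin d → ℝ} :
    x ∈ dyadicCube d n k ↔ ∀ i, (k i : ℝ) ≤ x i * 2 ^ n ∧ x i * 2 ^ n < (k i : ℝ) + 1 := by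
  unfold dyadicCube
  simp only [Set.mem_setOf_eq]
  refine forall_congr' fun i => ?_
  rw [div_le_iff₀ (by positivity), lt_div_iff₀ (by positivity)]

lemma dyadic_index_unique {n : ℕ} {k k' : Fin d → ℕ} {x : Fin d → ℝ}
    (h : x ∈ dyadicCube d n k) (h' : x ∈ dyadicCube d n k') : k = k' := by
  funext i
  have h1 := (mem_dyadicCube.1 h) i
  have h2 := (mem_dyadicCube.1 h') i
  have a1 : (k i : ℝ) < (k' i : ℝ) + 1 := lt_of_le_of_lt h1.1 h2.2
  have a2 : (k' i : ℝ) < (k i : ℝ) + 1 := lt_of_le_of_lt h2.1 h1.2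
  have b1 : k i < k' i + 1 := by exact_mod_cast a1
  have b2 : k' i < k i + 1 := by exact_mod_cast a2
  omega

lemma corner_mem (n : ℕ) (k : Fin d → ℕ) :
    (fun i => (k i : ℝ) / 2 ^ n) ∈ dyadicCube d n k := by
  rw [mem_dyadicCube]
  intro i
  rw [div_mul_cancel₀ _ (by positivity : (2:ℝ) ^ n ≠ 0)]
  exact ⟨le_refl _, by linarith⟩

lemma dyadicCube_nonempty (n : ℕ) (k : Fin d → ℕ) : (dyadicCube d n k).Nonempty :=
  ⟨_, corner_mem n k⟩

lemma dyadicCube_subset_div {n m : ℕ} (hnm : n ≤ m) (k : Fin d → ℕ) :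
    dyadicCube d m k ⊆ dyadicCube d n (fun i => k i / 2 ^ (m - n)) := by
  intro x hx
  rw [mem_dyadicCube] at hx ⊢
  intro i
  obtain ⟨h1, h2⟩ := hx i
  have hm : m = n + (m - n) := by omega
  have key : (x i * 2 ^ n) * 2 ^ (m - n) = x i * 2 ^ m := by
    rw [mul_assoc, ← pow_add]
    congr 2
    omega
  have hp : (0:ℝ) < 2 ^ (m - n) := by positivity
  constructor
  · have c1 : ((k i / 2 ^ (m - n) : ℕ) : ℝ) * 2 ^ (m - n) ≤ (k i : ℝ) := by
      exact_mod_cast Nat.div_mul_le_self (k i) (2 ^ (m - n))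
    have := c1.trans (h1.trans key.symm.le)
    exact le_of_mul_le_mul_right this hp
  · have c2 : (k i : ℝ) + 1 ≤ ((k i / 2 ^ (m - n) : ℕ) + 1 : ℝ) * 2 ^ (m - n) := by
      have : k i + 1 ≤ (k i / 2 ^ (m - n) + 1) * 2 ^ (m - n) := by
        have hb : 0 < 2 ^ (m - n) := Nat.pow_pos (by norm_num)
        have h1 := Nat.div_add_mod' (k i) (2 ^ (m - n))
        have h2 := Nat.mod_lt (k i) hb
        have : (k i / 2 ^ (m - n) + 1) * 2 ^ (m - n)
            = k i / 2 ^ (m - n) * 2 ^ (m - n) + 2 ^ (m - n) := by ring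
        omega
      exact_mod_cast this
    have : x i * 2 ^ n * 2 ^ (m - n) < ((k i / 2 ^ (m - n) : ℕ) + 1 : ℝ) * 2 ^ (m - n) := by
      rw [key]; exact lt_of_lt_of_le h2 c2
    exact lt_of_mul_lt_mul_right this hp.le

lemma dyadic_subset_of_mem {n m : ℕ} (hnm : n ≤ m) {k k' : Fin d → ℕ} {x : Fin d → ℝ}
    (hx : x ∈ dyadicCube d m k') (hx' : x ∈ dyadicCube d n k) :
    dyadicCube d m k' ⊆ dyadicCube d n k ∧ k = fun i => k' i / 2 ^ (m - n) := by
  have hsub := dyadicCube_subset_div (d := d) hnm k'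
  have he := dyadic_index_unique hx' (hsub hx)
  exact ⟨he ▸ hsub, he⟩

lemma mem_floorCube {m : ℕ} {x : Fin d → ℝ} :
    x ∈ dyadicCube d m (fun i => ⌊x i * 2 ^ m⌋₊) ↔ ∀ i, 0 ≤ x i := by
  rw [mem_dyadicCube]
  constructor
  · intro h i
    have := (h i).1
    have h2 : (0:ℝ) ≤ (⌊x i * 2 ^ m⌋₊ : ℝ) := Nat.cast_nonneg _
    nlinarith [pow_pos (by norm_num : (0:ℝ) < 2) m]
  · intro h i
    exact ⟨Nat.floor_le (mul_nonneg (h i) (by positivity)), Nat.lt_floor_add_one _⟩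

lemma unitCube_eq : unitCube d = dyadicCube d 0 (fun _ => 0) := by
  ext x
  simp [unitCube, dyadicCube]

lemma dyadicCube_mem_level {n : ℕ} {k : Fin d → ℕ} (hk : ∀ i, k i < 2 ^ n) :
    dyadicCube d n k ∈ dyadicLevel d n := ⟨k, hk, rfl⟩

lemma level_subset_family (n : ℕ) : dyadicLevel d n ⊆ dyadicFamily d :=
  Set.subset_iUnion (dyadicLevel d) n

lemma unitCube_mem_level : unitCube d ∈ dyadicLevel d 0 := by
  rw [unitCube_eq]
  exact dyadicCube_mem_level (by simp)

lemma unitCube_mem_family : unitCube d ∈ dyadicFamily d :=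
  level_subset_family 0 unitCube_mem_level

lemma dyadicCube_subset_unitCube {n : ℕ} {k : Fin d → ℕ} (hk : ∀ i, k i < 2 ^ n) :
    dyadicCube d n k ⊆ unitCube d := by
  intro x hx
  rw [mem_dyadicCube] at hx
  intro i
  obtain ⟨h1, h2⟩ := hx i
  have hp : (0:ℝ) < 2 ^ n := by positivity
  constructor
  · have : (0:ℝ) ≤ (k i : ℝ) := Nat.cast_nonneg _
    nlinarith
  · have : (k i : ℝ) + 1 ≤ 2 ^ n := by exact_mod_cast hk i
    nlinarith

lemma dyadicCube_eq_pi (n : ℕ) (k : Fin d → ℕ) :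
    dyadicCube d n k =
      Set.pi Set.univ (fun i => Set.Ico ((k i : ℝ)/2^n) (((k i : ℝ)+1)/2^n)) := by
  ext x
  simp [dyadicCube, Set.mem_pi]

lemma volume_dyadicCube (n : ℕ) (k : Fin d → ℕ) :
    volume (dyadicCube d n k) = ENNReal.ofReal ((2 ^ n : ℝ)⁻¹) ^ d := by
  rw [dyadicCube_eq_pi, volume_pi_pi]
  have : ∀ i : Fin d, volume (Set.Ico ((k i : ℝ)/2^n) (((k i : ℝ)+1)/2^n))
      = ENNReal.ofReal ((2 ^ n : ℝ)⁻¹) := by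
    intro i
    rw [Real.volume_Ico]
    congr 1
    field_simp
    ring
  simp only [this, Finset.prod_const, Finset.card_univ, Fintype.card_fin]

lemma volume_dyadicCube_toReal (n : ℕ) (k : Fin d → ℕ) :
    (volume (dyadicCube d n k)).toReal = (((2:ℝ) ^ n)⁻¹) ^ d := by
  rw [volume_dyadicCube, ENNReal.toReal_pow, ENNReal.toReal_ofReal (by positivity)]

def idx (d m : ℕ) : Finset (Fin d → ℕ) :=
  Fintype.piFinset fun _ : Fin d => Finset.range (2 ^ m)

lemma mem_idx {m : ℕ} {k : Fin d → ℕ} : k ∈ idx d m ↔ ∀ i, k i < 2 ^ m := by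
  simp [idx, Fintype.mem_piFinset]

lemma card_idx (m : ℕ) : (idx d m).card = (2 ^ m) ^ d := by
  simp [idx, Fintype.card_piFinset]

lemma dyadicCube_inj {m : ℕ} {k k' : Fin d → ℕ}
    (h : dyadicCube d m k = dyadicCube d m k') : k = k' :=
  dyadic_index_unique (corner_mem m k) (h ▸ corner_mem m k)

def subIdx (d ℓ : ℕ) (k₀ : Fin d → ℕ) (p : ℕ) : Finset (Fin d → ℕ) :=
  (idx d p).filter fun k => dyadicCube d p k ⊆ dyadicCube d ℓ k₀

lemma nonneg_of_mem {n : ℕ} {k : Fin d → ℕ} {x : Fin d → ℝ}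
    (hx : x ∈ dyadicCube d n k) (i : Fin d) : 0 ≤ x i := by
  have h := (mem_dyadicCube.1 hx i).1
  have h0 : (0:ℝ) ≤ (k i : ℝ) := Nat.cast_nonneg _
  nlinarith [pow_pos (show (0:ℝ) < 2 by norm_num) n]

lemma floor_idx_mem {p : ℕ} {x : Fin d → ℝ} (hx : x ∈ unitCube d) :
    (fun i => ⌊x i * 2 ^ p⌋₊) ∈ idx d p := by
  rw [mem_idx]; intro i
  have h2 : x i * 2 ^ p < 2 ^ p := by
    nlinarith [pow_pos (show (0:ℝ) < 2 by norm_num) p, (hx i).2, (hx i).1]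
  exact (Nat.floor_lt (mul_nonneg (hx i).1 (by positivity))).2 (by push_cast; exact h2)

lemma sUnion_subCubes {ℓ p : ℕ} (hℓp : ℓ ≤ p) {k₀ : Fin d → ℕ} (hk₀ : ∀ i, k₀ i < 2 ^ ℓ) :
    ⋃₀ (((subIdx d ℓ k₀ p).image (dyadicCube d p) : Finset (Set (Fin d → ℝ))) :
        Set (Set (Fin d → ℝ))) = dyadicCube d ℓ k₀ := by
  apply Set.Subset.antisymm
  · rintro x ⟨Q, hQ, hxQ⟩
    simp only [Finset.coe_image, Set.mem_image, Finset.mem_coe] at hQ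
    obtain ⟨k, hk, rfl⟩ := hQ
    exact (Finset.mem_filter.1 hk).2 hxQ
  · intro x hx
    have hxu : x ∈ unitCube d := dyadicCube_subset_unitCube hk₀ hx
    have hxf : x ∈ dyadicCube d p (fun i => ⌊x i * 2 ^ p⌋₊) :=
      mem_floorCube.2 fun i => (hxu i).1
    have hsub := (dyadic_subset_of_mem hℓp hxf hx).1
    refine ⟨dyadicCube d p (fun i => ⌊x i * 2 ^ p⌋₊), ?_, hxf⟩
    simp only [Finset.coe_image, Set.mem_image, Finset.mem_coe]
    exact ⟨_, Finset.mem_filter.2 ⟨floor_idx_mem hxu, hsub⟩, rfl⟩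

lemma pairwiseDisjoint_image_level {p : ℕ} (T : Finset (Fin d → ℕ)) :
    ((T.image (dyadicCube d p) : Finset (Set (Fin d → ℝ))) :
      Set (Set (Fin d → ℝ))).PairwiseDisjoint id := by
  intro Q₁ h₁ Q₂ h₂ hne
  simp only [Finset.coe_image, Set.mem_image, Finset.mem_coe] at h₁ h₂
  obtain ⟨k₁, _, rfl⟩ := h₁
  obtain ⟨k₂, _, rfl⟩ := h₂
  rw [Function.onFun, Set.disjoint_left]
  intro x hx₁ hx₂
  exact hne (congrArg (dyadicCube d p) (dyadic_index_unique hx₁ hx₂))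

lemma image_subset_family {p : ℕ} {T : Finset (Fin d → ℕ)} (hT : T ⊆ idx d p) :
    ((T.image (dyadicCube d p) : Finset (Set (Fin d → ℝ))) : Set (Set (Fin d → ℝ)))
      ⊆ dyadicFamily d := by
  intro Q hQ
  simp only [Finset.coe_image, Set.mem_image, Finset.mem_coe] at hQ
  obtain ⟨k, hk, rfl⟩ := hQ
  exact level_subset_family p (dyadicCube_mem_level (mem_idx.1 (hT hk)))

lemma sum_J_subIdx_le {J : Set (Fin d → ℝ) → ℝ} (hsub : CubeSubadditive J)
    {ℓ p : ℕ} (hℓp : ℓ ≤ p) {k₀ : Fin d → ℕ} (hk₀ : ∀ i, k₀ i < 2 ^ ℓ) :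
    ∑ k ∈ subIdx d ℓ k₀ p, J (dyadicCube d p k) ≤ J (dyadicCube d ℓ k₀) := by
  have h := hsub (dyadicCube d ℓ k₀)
    (level_subset_family ℓ (dyadicCube_mem_level hk₀))
    ((subIdx d ℓ k₀ p).image (dyadicCube d p))
    (image_subset_family (Finset.filter_subset _ _))
    (pairwiseDisjoint_image_level _) (sUnion_subCubes hℓp hk₀)
  rwa [Finset.sum_image (fun k _ k' _ h => dyadicCube_inj h)] at h

lemma J_le_of_subIdx {J : Set (Fin d → ℝ) → ℝ} (hnn : CubeNonneg J)
    (hsub : CubeSubadditive J) {ℓ p : ℕ} (hℓp : ℓ ≤ p) {k₀ : Fin d → ℕ}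
    (hk₀ : ∀ i, k₀ i < 2 ^ ℓ) {k : Fin d → ℕ} (hk : k ∈ subIdx d ℓ k₀ p) :
    J (dyadicCube d p k) ≤ J (dyadicCube d ℓ k₀) := by
  refine le_trans (Finset.single_le_sum (f := fun k => J (dyadicCube d p k))
    (fun k' hk' => hnn _ (level_subset_family p
      (dyadicCube_mem_level (mem_idx.1 (Finset.mem_filter.1 hk').1)))) hk)
    (sum_J_subIdx_le hsub hℓp hk₀)

lemma unitCube_subIdx {p : ℕ} {k : Fin d → ℕ} (hk : k ∈ idx d p) :
    k ∈ subIdx d 0 (fun _ => 0) p := by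
  refine Finset.mem_filter.2 ⟨hk, ?_⟩
  rw [← unitCube_eq]
  exact dyadicCube_subset_unitCube (mem_idx.1 hk)

lemma J_le_unit {J : Set (Fin d → ℝ) → ℝ} (hnn : CubeNonneg J)
    (hsub : CubeSubadditive J) {p : ℕ} {k : Fin d → ℕ} (hk : k ∈ idx d p) :
    J (dyadicCube d p k) ≤ J (unitCube d) := by
  have h := J_le_of_subIdx hnn hsub (Nat.zero_le p)
    (fun i => by norm_num : ∀ i : Fin d, (fun _ : Fin d => 0) i < 2 ^ 0)
    (unitCube_subIdx hk)
  rwa [← unitCube_eq] at h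

lemma card_filter_mul_le {J : Set (Fin d → ℝ) → ℝ} (hnn : CubeNonneg J)
    (hsub : CubeSubadditive J) {ℓ p : ℕ} (hℓp : ℓ ≤ p) {k₀ : Fin d → ℕ}
    (hk₀ : ∀ i, k₀ i < 2 ^ ℓ) (s : ℝ) :
    (((subIdx d ℓ k₀ p).filter fun k => s ≤ J (dyadicCube d p k)).card : ℝ) * s
      ≤ J (dyadicCube d ℓ k₀) := by
  calc (((subIdx d ℓ k₀ p).filter fun k => s ≤ J (dyadicCube d p k)).card : ℝ) * s
      = ∑ _k ∈ (subIdx d ℓ k₀ p).filter fun k => s ≤ J (dyadicCube d p k), s := by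
        rw [Finset.sum_const, nsmul_eq_mul]
    _ ≤ ∑ k ∈ (subIdx d ℓ k₀ p).filter fun k => s ≤ J (dyadicCube d p k),
          J (dyadicCube d p k) :=
        Finset.sum_le_sum fun k hk => (Finset.mem_filter.1 hk).2
    _ ≤ ∑ k ∈ subIdx d ℓ k₀ p, J (dyadicCube d p k) :=
        Finset.sum_le_sum_of_subset_of_nonneg (Finset.filter_subset _ _)
          (fun k hk _ => hnn _ (level_subset_family p
            (dyadicCube_mem_level (mem_idx.1 (Finset.mem_filter.1 hk).1))))
    _ ≤ J (dyadicCube d ℓ k₀) := sum_J_subIdx_le hsub hℓp hk₀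

lemma subIdx_div_eq {ℓ p : ℕ} (hℓp : ℓ ≤ p) {k₀ : Fin d → ℕ} {k : Fin d → ℕ}
    (hk : k ∈ subIdx d ℓ k₀ p) : k₀ = fun i => k i / 2 ^ (p - ℓ) := by
  have hsub := (Finset.mem_filter.1 hk).2
  exact (dyadic_subset_of_mem hℓp (corner_mem p k) (hsub (corner_mem p k))).2

lemma card_subIdx_le {ℓ p : ℕ} (hℓp : ℓ ≤ p) (k₀ : Fin d → ℕ) :
    (subIdx d ℓ k₀ p).card ≤ (2 ^ (p - ℓ)) ^ d := by
  rw [← card_idx (d := d) (p - ℓ)]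
  apply Finset.card_le_card_of_injOn (fun k i => k i % 2 ^ (p - ℓ))
  · intro k _
    rw [Finset.mem_coe, mem_idx]
    intro i
    exact Nat.mod_lt _ (Nat.pow_pos (by norm_num))
  · intro k hk k' hk' he
    have h1 := subIdx_div_eq hℓp hk
    have h2 := subIdx_div_eq hℓp hk'
    funext i
    have e1 : k i / 2 ^ (p - ℓ) = k' i / 2 ^ (p - ℓ) := by
      rw [← congrFun h1 i, ← congrFun h2 i]
    have e2 : k i % 2 ^ (p - ℓ) = k' i % 2 ^ (p - ℓ) := congrFun he i
    calc k i = k i / 2 ^ (p - ℓ) * 2 ^ (p - ℓ) + k i % 2 ^ (p - ℓ) :=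
          (Nat.div_add_mod' _ _).symm
      _ = k' i / 2 ^ (p - ℓ) * 2 ^ (p - ℓ) + k' i % 2 ^ (p - ℓ) := by rw [e1, e2]
      _ = k' i := Nat.div_add_mod' _ _

lemma geom_sum_le_pow {c : ℝ} (hc : 2 ≤ c) (m : ℕ) :
    ∑ p ∈ Finset.range m, c ^ p ≤ c ^ m := by
  rw [geom_sum_eq (by linarith : c ≠ 1)]
  rw [div_le_iff₀ (by linarith : (0:ℝ) < c - 1)]
  have h1 : (0:ℝ) < c ^ m := pow_pos (by linarith) m
  nlinarith

lemma geom_tail_le {r : ℝ} (hr0 : 0 ≤ r) (hr1 : r < 1) (m N : ℕ) :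
    ∑ p ∈ Finset.Ico m N, r ^ p ≤ r ^ m * (1 - r)⁻¹ := by
  rcases le_or_gt m N with h | h
  · rw [Finset.sum_Ico_eq_sum_range]
    have he : ∀ j ∈ Finset.range (N - m), r ^ (m + j) = r ^ m * r ^ j :=
      fun j _ => pow_add r m j
    rw [Finset.sum_congr rfl he, ← Finset.mul_sum]
    refine mul_le_mul_of_nonneg_left ?_ (pow_nonneg hr0 m)
    calc ∑ j ∈ Finset.range (N - m), r ^ j
        ≤ ∑' j : ℕ, r ^ j :=
          Summable.sum_le_tsum _ (fun j _ => pow_nonneg hr0 j)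
            (summable_geometric_of_lt_one hr0 hr1)
      _ = (1 - r)⁻¹ := tsum_geometric_of_lt_one hr0 hr1
  · rw [Finset.Ico_eq_empty (by omega)]
    simp only [Finset.sum_empty]
    exact mul_nonneg (pow_nonneg hr0 m) (inv_nonneg.2 (by linarith))

lemma rpow_mix {A B e : ℝ} (hA : 0 < A) (hB : 0 < B) :
    A * (B / A) ^ e = A ^ (1 - e) * B ^ e := by
  rw [Real.div_rpow hB.le hA.le, Real.rpow_sub hA, Real.rpow_one]
  field_simp

lemma geo_bound {c : ℝ} (hc : 2 ≤ c) {a : ℝ} (ha : 0 < a)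
    (A B : ℝ) (hA : 0 < A) (hB : 0 < B) (N : ℕ) :
    ∑ p ∈ Finset.range N, min (A * c ^ p) (B * (c ^ (-a)) ^ p)
      ≤ (c + (1 - c ^ (-a))⁻¹) * (A ^ (a / (1 + a)) * B ^ (1 / (1 + a))) := by
  have hc0 : (0:ℝ) < c := by linarith
  have hc1 : (1:ℝ) < c := by linarith
  set r : ℝ := c ^ (-a) with hr
  have hr0 : 0 < r := Real.rpow_pos_of_pos hc0 _
  have hr1 : r < 1 := Real.rpow_lt_one_of_one_lt_of_neg hc1 (by linarith)
  set q : ℝ := c ^ (1 + a) with hq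
  have hq1 : 1 < q := (Real.one_lt_rpow_iff_of_pos hc0).2 (Or.inl ⟨hc1, by linarith⟩)
  have h1a : (0:ℝ) < 1 + a := by linarith
  have hG : 0 < A ^ (a / (1 + a)) * B ^ (1 / (1 + a)) :=
    mul_pos (Real.rpow_pos_of_pos hA _) (Real.rpow_pos_of_pos hB _)
  have hqm : ∀ m : ℕ, q ^ m = c ^ ((1 + a) * m) := by
    intro m
    rw [hq, Real.rpow_mul hc0.le, Real.rpow_natCast]
  have hex : ∃ m : ℕ, B / A ≤ q ^ m := by
    obtain ⟨m, hm⟩ := pow_unbounded_of_one_lt (B / A) hq1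
    exact ⟨m, hm.le⟩
  obtain ⟨m₀, hm₀, hmin⟩ : ∃ m₀ : ℕ, (B / A ≤ q ^ m₀) ∧ ∀ m < m₀, ¬ (B / A ≤ q ^ m) :=
    ⟨Nat.find hex, Nat.find_spec hex, fun m hm => Nat.find_min hex hm⟩
  have hBA : 0 < B / A := div_pos hB hA
  -- splitting the sum
  have hsplit : ∑ p ∈ Finset.range N, min (A * c ^ p) (B * r ^ p)
      ≤ (∑ p ∈ Finset.range (min m₀ N), A * c ^ p) + ∑ p ∈ Finset.Ico m₀ N, B * r ^ p := by
    rcases le_or_gt N m₀ with h | h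
    · rw [min_eq_right h]
      have h0 : ∑ p ∈ Finset.Ico m₀ N, B * r ^ p = 0 := by
        rw [Finset.Ico_eq_empty (by omega), Finset.sum_empty]
      rw [h0, add_zero]
      exact Finset.sum_le_sum fun p _ => min_le_left _ _
    · rw [min_eq_left h.le, ← Finset.sum_range_add_sum_Ico
        (fun p => min (A * c ^ p) (B * r ^ p)) h.le]
      have g1 : ∑ p ∈ Finset.range m₀, min (A * c ^ p) (B * r ^ p)
          ≤ ∑ p ∈ Finset.range m₀, A * c ^ p :=
        Finset.sum_le_sum fun p _ => min_le_left _ _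
      have g2 : ∑ p ∈ Finset.Ico m₀ N, min (A * c ^ p) (B * r ^ p)
          ≤ ∑ p ∈ Finset.Ico m₀ N, B * r ^ p :=
        Finset.sum_le_sum fun p _ => min_le_right _ _
      linarith
  -- first part
  have hfirst : (∑ p ∈ Finset.range (min m₀ N), A * c ^ p)
      ≤ c * (A ^ (a / (1 + a)) * B ^ (1 / (1 + a))) := by
    rcases Nat.eq_zero_or_pos m₀ with h0 | hpos
    · rw [h0]
      simp only [Nat.zero_min, Finset.range_zero, Finset.sum_empty]
      positivity
    · obtain ⟨m, rfl⟩ : ∃ m, m₀ = m + 1 := ⟨m₀ - 1, by omega⟩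
      have hlt : q ^ m < B / A := by
        have := hmin m (by omega)
        linarith [not_le.1 this]
      have hcm : (c : ℝ) ^ m < (B / A) ^ (1 / (1 + a)) := by
        have h1 : (q ^ m) ^ (1 / (1 + a)) < (B / A) ^ (1 / (1 + a)) :=
          Real.rpow_lt_rpow (by positivity) hlt (by positivity)
        calc (c:ℝ) ^ m = (q ^ m) ^ (1 / (1 + a)) := by
              rw [hqm m, ← Real.rpow_mul hc0.le]
              rw [show (1 + a) * m * (1 / (1 + a)) = (m : ℝ) by field_simp]
              rw [Real.rpow_natCast]
          _ < _ := h1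
      calc ∑ p ∈ Finset.range (min (m + 1) N), A * c ^ p
          ≤ ∑ p ∈ Finset.range (m + 1), A * c ^ p := by
            apply Finset.sum_le_sum_of_subset_of_nonneg
            · exact Finset.range_subset_range.2 (Nat.min_le_left _ _)
            · intro p _ _
              positivity
        _ = A * ∑ p ∈ Finset.range (m + 1), c ^ p := by rw [Finset.mul_sum]
        _ ≤ A * c ^ (m + 1) :=
            mul_le_mul_of_nonneg_left (geom_sum_le_pow hc (m + 1)) hA.le
        _ = c * (A * c ^ m) := by ring
        _ ≤ c * (A * (B / A) ^ (1 / (1 + a))) := by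
            have := mul_le_mul_of_nonneg_left hcm.le hA.le
            nlinarith [hA.le, hcm.le, pow_pos hc0 m]
        _ = c * (A ^ (a / (1 + a)) * B ^ (1 / (1 + a))) := by
            rw [rpow_mix hA hB]
            rw [show (1 : ℝ) - 1 / (1 + a) = a / (1 + a) by field_simp; ring]
  -- second part
  have hsecond : (∑ p ∈ Finset.Ico m₀ N, B * r ^ p)
      ≤ (1 - r)⁻¹ * (A ^ (a / (1 + a)) * B ^ (1 / (1 + a))) := by
    have hrm : B * r ^ m₀ ≤ A ^ (a / (1 + a)) * B ^ (1 / (1 + a)) := by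
      have e1 : r ^ m₀ = (q ^ m₀) ^ (-(a / (1 + a))) := by
        rw [hqm m₀, ← Real.rpow_mul hc0.le, hr]
        rw [← Real.rpow_natCast (c ^ (-a)) m₀, ← Real.rpow_mul hc0.le]
        congr 1
        field_simp
      have e2 : (q ^ m₀) ^ (-(a / (1 + a))) ≤ (B / A) ^ (-(a / (1 + a))) := by
        apply Real.rpow_le_rpow_of_nonpos hBA hm₀
        have : (0:ℝ) < a / (1 + a) := by positivity
        linarith
      have e3 : B * (B / A) ^ (-(a / (1 + a))) = A ^ (a / (1 + a)) * B ^ (1 / (1 + a)) := by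
        rw [show (B / A) ^ (-(a / (1 + a))) = (A / B) ^ (a / (1 + a)) by
          rw [Real.rpow_neg hBA.le, ← Real.inv_rpow hBA.le, inv_div]]
        rw [rpow_mix hB hA]
        rw [show (1 : ℝ) - a / (1 + a) = 1 / (1 + a) by field_simp; ring]
        ring
      calc B * r ^ m₀ = B * (q ^ m₀) ^ (-(a / (1 + a))) := by rw [e1]
        _ ≤ B * (B / A) ^ (-(a / (1 + a))) := by gcongr
        _ = _ := e3
    calc ∑ p ∈ Finset.Ico m₀ N, B * r ^ p = B * ∑ p ∈ Finset.Ico m₀ N, r ^ p := by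
          rw [Finset.mul_sum]
      _ ≤ B * (r ^ m₀ * (1 - r)⁻¹) := by
          gcongr
          exact geom_tail_le hr0.le hr1 m₀ N
      _ = (B * r ^ m₀) * (1 - r)⁻¹ := by ring
      _ ≤ (A ^ (a / (1 + a)) * B ^ (1 / (1 + a))) * (1 - r)⁻¹ :=
          mul_le_mul_of_nonneg_right hrm (inv_nonneg.2 (by linarith))
      _ = (1 - r)⁻¹ * (A ^ (a / (1 + a)) * B ^ (1 / (1 + a))) := by ring
  calc ∑ p ∈ Finset.range N, min (A * c ^ p) (B * r ^ p)
      ≤ (∑ p ∈ Finset.range (min m₀ N), A * c ^ p) + ∑ p ∈ Finset.Ico m₀ N, B * r ^ p :=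
        hsplit
    _ ≤ c * (A ^ (a / (1 + a)) * B ^ (1 / (1 + a)))
        + (1 - r)⁻¹ * (A ^ (a / (1 + a)) * B ^ (1 / (1 + a))) := add_le_add hfirst hsecond
    _ = (c + (1 - r)⁻¹) * (A ^ (a / (1 + a)) * B ^ (1 / (1 + a))) := by ring

def Jv {d : ℕ} (J : Set (Fin d → ℝ) → ℝ) (a : ℝ) : Set (Fin d → ℝ) → ℝ :=
  fun Q => J Q * (volume Q).toReal ^ a

lemma rpow_vol (a : ℝ) (p : ℕ) (k : Fin d → ℕ) :
    (volume (dyadicCube d p k)).toReal ^ a = (((2:ℝ) ^ d) ^ (-a)) ^ p := by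
  have hx : (0:ℝ) < (2:ℝ) ^ d := by positivity
  rw [volume_dyadicCube_toReal]
  have h1 : ((2:ℝ) ^ p)⁻¹ ^ d = (((2:ℝ) ^ d)⁻¹) ^ p := by
    rw [inv_pow, inv_pow, ← pow_mul, ← pow_mul, mul_comm]
  rw [h1]
  rw [← Real.rpow_natCast ((((2:ℝ) ^ d)⁻¹)) p, ← Real.rpow_natCast (((2:ℝ) ^ d) ^ (-a)) p]
  rw [← Real.rpow_mul (by positivity : (0:ℝ) ≤ ((2:ℝ) ^ d)⁻¹)]
  rw [← Real.rpow_mul hx.le]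
  rw [Real.inv_rpow hx.le, ← Real.rpow_neg hx.le]
  ring_nf

lemma Jv_cube (J : Set (Fin d → ℝ) → ℝ) (a : ℝ) (p : ℕ) (k : Fin d → ℕ) :
    Jv J a (dyadicCube d p k) = J (dyadicCube d p k) * (((2:ℝ) ^ d) ^ (-a)) ^ p := by
  rw [Jv, rpow_vol]

/-- The stopping indices at level `m` for threshold `t`. -/
def Slevel (d : ℕ) (J : Set (Fin d → ℝ) → ℝ) (a t : ℝ) (m : ℕ) : Finset (Fin d → ℕ) :=
  (idx d m).filter fun k => Jv J a (dyadicCube d m k) < t ∧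
    ∀ j, j < m → t ≤ Jv J a (dyadicCube d j (fun i => k i / 2 ^ (m - j)))

/-- The stopping partition for threshold `t`, using levels up to `N`. -/
def Sfin (d : ℕ) (J : Set (Fin d → ℝ) → ℝ) (a t : ℝ) (N : ℕ) : Finset (Set (Fin d → ℝ)) :=
  (Finset.range (N + 1)).biUnion fun m => (Slevel d J a t m).image (dyadicCube d m)

lemma mem_Sfin {J : Set (Fin d → ℝ) → ℝ} {a t : ℝ} {N : ℕ} {Q : Set (Fin d → ℝ)} :
    Q ∈ Sfin d J a t N ↔ ∃ m, m ≤ N ∧ ∃ k ∈ Slevel d J a t m, Q = dyadicCube d m k := by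
  simp only [Sfin, Finset.mem_biUnion, Finset.mem_range, Finset.mem_image]
  constructor
  · rintro ⟨m, hm, k, hk, rfl⟩
    exact ⟨m, by omega, k, hk, rfl⟩
  · rintro ⟨m, hm, k, hk, rfl⟩
    exact ⟨m, by omega, k, hk, rfl⟩

lemma Sfin_subset_family {J : Set (Fin d → ℝ) → ℝ} {a t : ℝ} {N : ℕ} :
    ((Sfin d J a t N : Finset (Set (Fin d → ℝ))) : Set (Set (Fin d → ℝ)))
      ⊆ dyadicFamily d := by
  intro Q hQ
  rw [Finset.mem_coe, mem_Sfin] at hQ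
  obtain ⟨m, _, k, hk, rfl⟩ := hQ
  exact level_subset_family m
    (dyadicCube_mem_level (mem_idx.1 (Finset.mem_filter.1 hk).1))

lemma Sfin_lt {J : Set (Fin d → ℝ) → ℝ} {a t : ℝ} {N : ℕ} {Q : Set (Fin d → ℝ)}
    (hQ : Q ∈ Sfin d J a t N) : Jv J a Q < t := by
  rw [mem_Sfin] at hQ
  obtain ⟨m, _, k, hk, rfl⟩ := hQ
  exact ((Finset.mem_filter.1 hk).2).1

lemma Sfin_disjoint_aux {J : Set (Fin d → ℝ) → ℝ} {a t : ℝ} {m₁ m₂ : ℕ}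
    (h12 : m₁ ≤ m₂) {k₁ k₂ : Fin d → ℕ}
    (h₁ : k₁ ∈ Slevel d J a t m₁) (h₂ : k₂ ∈ Slevel d J a t m₂)
    (hne : dyadicCube d m₁ k₁ ≠ dyadicCube d m₂ k₂) :
    Disjoint (dyadicCube d m₁ k₁) (dyadicCube d m₂ k₂) := by
  rw [Set.disjoint_left]
  intro x hx₁ hx₂
  rcases eq_or_lt_of_le h12 with rfl | hlt
  · exact hne (congrArg _ (dyadic_index_unique hx₁ hx₂))
  · have hdiv := (dyadic_subset_of_mem h12 hx₂ hx₁).2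
    have hbad := ((Finset.mem_filter.1 h₂).2).2 m₁ hlt
    rw [← hdiv] at hbad
    have hgood := ((Finset.mem_filter.1 h₁).2).1
    linarith

lemma Sfin_pairwiseDisjoint {J : Set (Fin d → ℝ) → ℝ} {a t : ℝ} {N : ℕ} :
    ((Sfin d J a t N : Finset (Set (Fin d → ℝ))) : Set (Set (Fin d → ℝ))).PairwiseDisjoint
      id := by
  intro Q₁ hQ₁ Q₂ hQ₂ hne
  rw [Finset.mem_coe, mem_Sfin] at hQ₁ hQ₂
  obtain ⟨m₁, _, k₁, hk₁, rfl⟩ := hQ₁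
  obtain ⟨m₂, _, k₂, hk₂, rfl⟩ := hQ₂
  rw [Function.onFun, id, id]
  rcases le_total m₁ m₂ with h | h
  · exact Sfin_disjoint_aux h hk₁ hk₂ hne
  · exact (Sfin_disjoint_aux h hk₂ hk₁ (Ne.symm hne)).symm

lemma Sfin_sUnion {J : Set (Fin d → ℝ) → ℝ} (hnn : CubeNonneg J)
    (hsub : CubeSubadditive J) {a t : ℝ} {N : ℕ}
    (hN : J (unitCube d) * (((2:ℝ) ^ d) ^ (-a)) ^ N < t) :
    ⋃₀ ((Sfin d J a t N : Finset (Set (Fin d → ℝ))) : Set (Set (Fin d → ℝ)))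
      = unitCube d := by
  apply Set.Subset.antisymm
  · rintro x ⟨Q, hQ, hxQ⟩
    rw [Finset.mem_coe, mem_Sfin] at hQ
    obtain ⟨m, _, k, hk, rfl⟩ := hQ
    exact dyadicCube_subset_unitCube (mem_idx.1 (Finset.mem_filter.1 hk).1) hxQ
  · intro x hx
    set r : ℝ := ((2:ℝ) ^ d) ^ (-a) with hr
    have hr0 : 0 < r := Real.rpow_pos_of_pos (by positivity) _
    have hmemF : ∀ m : ℕ, x ∈ dyadicCube d m (fun i => ⌊x i * 2 ^ m⌋₊) :=
      fun m => mem_floorCube.2 fun i => (hx i).1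
    have hidxF : ∀ m : ℕ, (fun i => ⌊x i * 2 ^ m⌋₊) ∈ idx d m := fun m => floor_idx_mem hx
    have hJle : ∀ m : ℕ, Jv J a (dyadicCube d m (fun i => ⌊x i * 2 ^ m⌋₊))
        ≤ J (unitCube d) * r ^ m := by
      intro m
      rw [Jv_cube, ← hr]
      exact mul_le_mul_of_nonneg_right (J_le_unit hnn hsub (hidxF m)) (pow_pos hr0 m).le
    have hex : ∃ m : ℕ, Jv J a (dyadicCube d m (fun i => ⌊x i * 2 ^ m⌋₊)) < t :=
      ⟨N, lt_of_le_of_lt (hJle N) hN⟩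
    obtain ⟨n, hn, hnmin⟩ : ∃ n : ℕ,
        (Jv J a (dyadicCube d n (fun i => ⌊x i * 2 ^ n⌋₊)) < t) ∧
        ∀ j < n, ¬ (Jv J a (dyadicCube d j (fun i => ⌊x i * 2 ^ j⌋₊)) < t) :=
      ⟨Nat.find hex, Nat.find_spec hex, fun j hj => Nat.find_min hex hj⟩
    have hnN : n ≤ N := by
      by_contra hcon
      exact hnmin N (by omega) (lt_of_le_of_lt (hJle N) hN)
    refine ⟨dyadicCube d n (fun i => ⌊x i * 2 ^ n⌋₊), ?_, hmemF n⟩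
    rw [Finset.mem_coe, mem_Sfin]
    refine ⟨n, hnN, _, ?_, rfl⟩
    refine Finset.mem_filter.2 ⟨hidxF n, hn, ?_⟩
    intro j hj
    have hdiv := (dyadic_subset_of_mem hj.le (hmemF n) (hmemF j)).2
    rw [← hdiv]
    exact not_lt.1 (hnmin j hj)

lemma card_bad_le_vol {ℓ p : ℕ} (hℓp : ℓ ≤ p) (k₀ : Fin d → ℕ)
    (pred : (Fin d → ℕ) → Prop) :
    ((((subIdx d ℓ k₀ p).filter pred).card : ℝ))
      ≤ (volume (dyadicCube d ℓ k₀)).toReal * ((2:ℝ) ^ d) ^ p := by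
  have h1 : ((subIdx d ℓ k₀ p).filter pred).card ≤ (2 ^ (p - ℓ)) ^ d :=
    le_trans (Finset.card_le_card (Finset.filter_subset _ _)) (card_subIdx_le hℓp k₀)
  have h2 : (((2 ^ (p - ℓ)) ^ d : ℕ) : ℝ)
      = (volume (dyadicCube d ℓ k₀)).toReal * ((2:ℝ) ^ d) ^ p := by
    rw [volume_dyadicCube_toReal]
    push_cast
    rw [inv_pow, ← pow_mul, ← pow_mul, ← pow_mul, eq_comm, inv_mul_eq_div,
      div_eq_iff (by positivity : ((2:ℝ) ^ (ℓ * d)) ≠ 0), ← pow_add]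
    congr 1
    rw [← add_mul, Nat.sub_add_cancel hℓp, mul_comm]
  calc ((((subIdx d ℓ k₀ p).filter pred).card : ℝ)) ≤ (((2 ^ (p - ℓ)) ^ d : ℕ) : ℝ) := by
        exact_mod_cast h1
    _ = _ := h2

lemma card_bad_le_J {J : Set (Fin d → ℝ) → ℝ} (hnn : CubeNonneg J)
    (hsub : CubeSubadditive J) (a : ℝ) {t : ℝ} (ht : 0 < t) {ℓ p : ℕ} (hℓp : ℓ ≤ p)
    {k₀ : Fin d → ℕ} (hk₀ : ∀ i, k₀ i < 2 ^ ℓ) :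
    ((((subIdx d ℓ k₀ p).filter fun k => t ≤ Jv J a (dyadicCube d p k)).card : ℝ))
      ≤ (J (dyadicCube d ℓ k₀) / t) * (((2:ℝ) ^ d) ^ (-a)) ^ p := by
  set r : ℝ := ((2:ℝ) ^ d) ^ (-a) with hr
  have hrp : (0:ℝ) < r ^ p := pow_pos (Real.rpow_pos_of_pos (by positivity) _) p
  have hfe : ((subIdx d ℓ k₀ p).filter fun k => t ≤ Jv J a (dyadicCube d p k))
      = (subIdx d ℓ k₀ p).filter fun k => t / r ^ p ≤ J (dyadicCube d p k) := by
    apply Finset.filter_congr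
    intro k _
    rw [Jv_cube, ← hr, div_le_iff₀ hrp]
  rw [hfe]
  have hkey := card_filter_mul_le hnn hsub hℓp hk₀ (t / r ^ p)
  have hst : 0 < t / r ^ p := div_pos ht hrp
  set c : ℝ := (((subIdx d ℓ k₀ p).filter fun k => t / r ^ p ≤ J (dyadicCube d p k)).card : ℝ)
  calc c = (c * (t / r ^ p)) / (t / r ^ p) := by field_simp
    _ ≤ J (dyadicCube d ℓ k₀) / (t / r ^ p) := by gcongr
    _ = (J (dyadicCube d ℓ k₀) / t) * r ^ p := by
        field_simp

lemma subIdx_zero (p : ℕ) : subIdx d 0 (fun _ => 0) p = idx d p := by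
  apply Finset.filter_true_of_mem
  intro k hk
  rw [← unitCube_eq]
  exact dyadicCube_subset_unitCube (mem_idx.1 hk)

lemma card_Slevel_succ_le {J : Set (Fin d → ℝ) → ℝ} {a t : ℝ} (m : ℕ) :
    (Slevel d J a t (m + 1)).card
      ≤ 2 ^ d * ((idx d m).filter fun k => t ≤ Jv J a (dyadicCube d m k)).card := by
  apply Finset.card_le_mul_card_image_of_maps_to
    (f := fun (k : Fin d → ℕ) (i : Fin d) => k i / 2)
  · intro k hk
    obtain ⟨hidx, _, hanc⟩ := Finset.mem_filter.1 hk
    refine Finset.mem_filter.2 ⟨?_, ?_⟩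
    · rw [mem_idx]
      intro i
      have := mem_idx.1 hidx i
      have h2 : (2:ℕ) ^ (m + 1) = 2 ^ m * 2 := by rw [pow_succ]
      omega
    · have := hanc m (by omega)
      have he : (fun i => k i / 2 ^ (m + 1 - m)) = fun i => k i / 2 := by
        funext i
        norm_num
      rwa [he] at this
  · intro k₀ _
    rw [show (2:ℕ) ^ d = ((2:ℕ) ^ 1) ^ d by norm_num, ← card_idx (d := d) 1]
    apply Finset.card_le_card_of_injOn (fun k i => k i % 2)
    · intro k _
      rw [Finset.mem_coe, mem_idx]
      intro i
      have : k i % 2 < 2 := Nat.mod_lt _ (by norm_num)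
      simpa using this
    · intro k hk k' hk' he
      simp only [Finset.mem_coe, Finset.mem_filter] at hk hk'
      funext i
      have e1 : k i / 2 = k' i / 2 := by
        rw [congrFun hk.2 i, congrFun hk'.2 i]
      have e2 : k i % 2 = k' i % 2 := congrFun he i
      omega

lemma card_Sfin_le {J : Set (Fin d → ℝ) → ℝ} {a t : ℝ} {N : ℕ} :
    (Sfin d J a t N).card ≤ 1 + 2 ^ d * ∑ p ∈ Finset.range N,
      ((idx d p).filter fun k => t ≤ Jv J a (dyadicCube d p k)).card := by
  calc (Sfin d J a t N).card
      ≤ ∑ m ∈ Finset.range (N + 1), ((Slevel d J a t m).image (dyadicCube d m)).card :=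
        Finset.card_biUnion_le
    _ ≤ ∑ m ∈ Finset.range (N + 1), (Slevel d J a t m).card :=
        Finset.sum_le_sum fun m _ => Finset.card_image_le
    _ = (∑ m ∈ Finset.range N, (Slevel d J a t (m + 1)).card) + (Slevel d J a t 0).card :=
        Finset.sum_range_succ' _ N
    _ ≤ (∑ m ∈ Finset.range N, 2 ^ d *
          ((idx d m).filter fun k => t ≤ Jv J a (dyadicCube d m k)).card) + 1 := by
        gcongr with m hm
        · exact card_Slevel_succ_le m
        · calc (Slevel d J a t 0).card ≤ (idx d 0).card :=
                Finset.card_le_card (Finset.filter_subset _ _)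
            _ = 1 := by rw [card_idx]; norm_num
    _ = 1 + 2 ^ d * ∑ p ∈ Finset.range N,
          ((idx d p).filter fun k => t ≤ Jv J a (dyadicCube d p k)).card := by
        rw [Finset.mul_sum]
        ring

lemma volume_unitCube_toReal : (volume (unitCube d)).toReal = 1 := by
  rw [unitCube_eq, volume_dyadicCube_toReal]
  norm_num

lemma card_bad_unit_le_vol (p : ℕ) (pred : (Fin d → ℕ) → Prop) :
    ((((idx d p).filter pred).card : ℝ)) ≤ ((2:ℝ) ^ d) ^ p := by
  have := card_bad_le_vol (d := d) (Nat.zero_le p) (fun _ => 0) pred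
  rw [subIdx_zero, ← unitCube_eq, volume_unitCube_toReal, one_mul] at this
  exact this

lemma card_bad_unit_le_J {J : Set (Fin d → ℝ) → ℝ} (hnn : CubeNonneg J)
    (hsub : CubeSubadditive J) (a : ℝ) {t : ℝ} (ht : 0 < t) (p : ℕ) :
    ((((idx d p).filter fun k => t ≤ Jv J a (dyadicCube d p k)).card : ℝ))
      ≤ (J (unitCube d) / t) * (((2:ℝ) ^ d) ^ (-a)) ^ p := by
  have := card_bad_le_J hnn hsub a ht (Nat.zero_le p)
    (fun i => by norm_num : ∀ i : Fin d, (fun _ : Fin d => 0) i < 2 ^ 0)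
  rw [subIdx_zero, ← unitCube_eq] at this
  exact this

lemma exists_partition_bigO (hd : 1 ≤ d) {J : Set (Fin d → ℝ) → ℝ}
    (hnn : CubeNonneg J) (hsub : CubeSubadditive J) {a : ℝ} (ha : 0 < a)
    (hQ : 0 < J (unitCube d)) :
    ∃ C : ℝ, 0 < C ∧ ∀ t : ℝ, 0 < t → t ≤ J (unitCube d) →
      ∃ R : Finset (Set (Fin d → ℝ)),
        ((R : Set (Set (Fin d → ℝ))) ⊆ dyadicFamily d) ∧
        ((R : Set (Set (Fin d → ℝ)))).PairwiseDisjoint id ∧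
        ⋃₀ (R : Set (Set (Fin d → ℝ))) = unitCube d ∧
        (∀ Q ∈ R, Jv J a Q < t) ∧
        ((R.card : ℝ) ≤ C * t ^ (-(1 + a)⁻¹)) := by
  have hc : (2:ℝ) ≤ (2:ℝ) ^ d := by
    calc (2:ℝ) = 2 ^ 1 := (pow_one 2).symm
    _ ≤ 2 ^ d := pow_le_pow_right₀ (by norm_num) hd
  set c : ℝ := (2:ℝ) ^ d with hcdef
  set r : ℝ := c ^ (-a) with hrdef
  have hc0 : (0:ℝ) < c := by positivity
  have hr0 : 0 < r := Real.rpow_pos_of_pos hc0 _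
  have hr1 : r < 1 := Real.rpow_lt_one_of_one_lt_of_neg (by linarith) (by linarith)
  set K : ℝ := c + (1 - r)⁻¹ with hKdef
  have hK : 0 < K := add_pos (by linarith) (inv_pos.2 (by linarith))
  have he : (0:ℝ) < (1 + a)⁻¹ := by positivity
  refine ⟨(1 + c * K) * (J (unitCube d)) ^ ((1 + a)⁻¹),
    mul_pos (by nlinarith) (Real.rpow_pos_of_pos hQ _), ?_⟩
  intro t ht htJ
  obtain ⟨N, hN⟩ : ∃ N : ℕ, J (unitCube d) * r ^ N < t := by
    obtain ⟨N, hN⟩ := exists_pow_lt_of_lt_one (div_pos ht hQ) hr1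
    refine ⟨N, ?_⟩
    have := mul_lt_mul_of_pos_left hN hQ
    rwa [mul_div_cancel₀ _ (ne_of_gt hQ)] at this
  refine ⟨Sfin d J a t N, Sfin_subset_family, Sfin_pairwiseDisjoint,
    Sfin_sUnion hnn hsub hN, fun Q hQ' => Sfin_lt hQ', ?_⟩
  have hcast : ((Sfin d J a t N).card : ℝ) ≤ 1 + c * ∑ p ∈ Finset.range N,
      (((idx d p).filter fun k => t ≤ Jv J a (dyadicCube d p k)).card : ℝ) := by
    have := card_Sfin_le (d := d) (J := J) (a := a) (t := t) (N := N)
    have hc2 : ((2:ℕ) ^ d : ℝ) = c := by push_cast; rfl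
    calc ((Sfin d J a t N).card : ℝ)
        ≤ ((1 + 2 ^ d * ∑ p ∈ Finset.range N,
            ((idx d p).filter fun k => t ≤ Jv J a (dyadicCube d p k)).card : ℕ) : ℝ) := by
          exact_mod_cast this
      _ = _ := by push_cast; rfl
  have hsum : ∑ p ∈ Finset.range N,
      (((idx d p).filter fun k => t ≤ Jv J a (dyadicCube d p k)).card : ℝ)
        ≤ K * ((J (unitCube d) / t) ^ (1 / (1 + a))) := by
    have hgeo := geo_bound hc ha 1 (J (unitCube d) / t) one_pos (div_pos hQ ht) N
    rw [Real.one_rpow, one_mul] at hgeo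
    refine le_trans (Finset.sum_le_sum ?_) hgeo
    intro p _
    refine le_min ?_ ?_
    · rw [one_mul]
      exact card_bad_unit_le_vol p _
    · exact card_bad_unit_le_J hnn hsub a ht p
  have hX : 1 ≤ (J (unitCube d) / t) ^ (1 / (1 + a)) := by
    have h1 : (1:ℝ) ≤ J (unitCube d) / t := (one_le_div ht).2 htJ
    calc (1:ℝ) = 1 ^ (1 / (1 + a)) := (Real.one_rpow _).symm
      _ ≤ _ := Real.rpow_le_rpow (by norm_num) h1 (by positivity)
  have hsplit : (J (unitCube d) / t) ^ (1 / (1 + a))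
      = (J (unitCube d)) ^ ((1 + a)⁻¹) * t ^ (-(1 + a)⁻¹) := by
    rw [one_div, Real.div_rpow hQ.le ht.le, div_eq_mul_inv, ← Real.rpow_neg ht.le]
  calc ((Sfin d J a t N).card : ℝ)
      ≤ 1 + c * (K * ((J (unitCube d) / t) ^ (1 / (1 + a)))) := by
        refine hcast.trans ?_
        have := mul_le_mul_of_nonneg_left hsum hc0.le
        linarith
    _ ≤ (1 + c * K) * ((J (unitCube d) / t) ^ (1 / (1 + a))) := by nlinarith
    _ = (1 + c * K) * (J (unitCube d)) ^ ((1 + a)⁻¹) * t ^ (-(1 + a)⁻¹) := by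
        rw [hsplit]; ring

lemma sSup_image_nonneg {J' : Set (Fin d → ℝ) → ℝ} {P : Set (Set (Fin d → ℝ))}
    (hP : IsJPartition J' P) : 0 ≤ sSup (J' '' P) := by
  obtain ⟨R, _, _, _, _, hPeq⟩ := hP
  apply Real.sSup_nonneg
  rintro z ⟨Q, hQ, rfl⟩
  rw [hPeq] at hQ
  exact hQ.2.le

lemma gammaJ_nonneg (J' : Set (Fin d → ℝ) → ℝ) (n : ℕ) : 0 ≤ gammaJ J' n := by
  apply Real.sInf_nonneg
  rintro y ⟨P, ⟨hP, _⟩, rfl⟩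
  exact sSup_image_nonneg hP

lemma MJ_le_of_partition {J' : Set (Fin d → ℝ) → ℝ} {R : Finset (Set (Fin d → ℝ))}
    (h1 : (R : Set (Set (Fin d → ℝ))) ⊆ dyadicFamily d)
    (h2 : (R : Set (Set (Fin d → ℝ))).PairwiseDisjoint id)
    (h3 : ⋃₀ (R : Set (Set (Fin d → ℝ))) = unitCube d)
    {x : ℝ} (h4 : ∀ Q ∈ R, J' Q < 1 / x) :
    MJ J' x ≤ R.card := by
  have hPeq : {Q ∈ (R : Set (Set (Fin d → ℝ))) | 0 < J' Q}
      = ((R.filter fun Q => 0 < J' Q : Finset (Set (Fin d → ℝ))) : Set (Set (Fin d → ℝ))) := by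
    ext Q
    simp [Finset.coe_filter]
  have hmem : (R.filter fun Q => 0 < J' Q).card ∈ {m : ℕ | ∃ P,
      IsJPartition J' P ∧ P.ncard = m ∧ ∀ Q ∈ P, J' Q < 1 / x} := by
    refine ⟨{Q ∈ (R : Set (Set (Fin d → ℝ))) | 0 < J' Q},
      ⟨R, R.finite_toSet, h1, h2, h3, rfl⟩, ?_, ?_⟩
    · rw [hPeq, Set.ncard_coe_finset]
    · rintro Q hQ
      exact h4 Q (Finset.mem_coe.1 hQ.1)
  exact le_trans (Nat.sInf_le hmem) (Finset.card_le_card (Finset.filter_subset _ _))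

lemma gammaJ_le_of_partition {J' : Set (Fin d → ℝ) → ℝ} {R : Finset (Set (Fin d → ℝ))}
    (h1 : (R : Set (Set (Fin d → ℝ))) ⊆ dyadicFamily d)
    (h2 : (R : Set (Set (Fin d → ℝ))).PairwiseDisjoint id)
    (h3 : ⋃₀ (R : Set (Set (Fin d → ℝ))) = unitCube d)
    {t : ℝ} (ht : 0 ≤ t) (h4 : ∀ Q ∈ R, J' Q < t)
    {n : ℕ} (hn : (R.filter fun Q => 0 < J' Q).card ≤ n) : gammaJ J' n ≤ t := by
  have hPeq : {Q ∈ (R : Set (Set (Fin d → ℝ))) | 0 < J' Q}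
      = ((R.filter fun Q => 0 < J' Q : Finset (Set (Fin d → ℝ))) : Set (Set (Fin d → ℝ))) := by
    ext Q
    simp [Finset.coe_filter]
  have hP : IsJPartition J' {Q ∈ (R : Set (Set (Fin d → ℝ))) | 0 < J' Q} :=
    ⟨R, R.finite_toSet, h1, h2, h3, rfl⟩
  have hcard : {Q ∈ (R : Set (Set (Fin d → ℝ))) | 0 < J' Q}.ncard ≤ n := by
    rw [hPeq, Set.ncard_coe_finset]
    exact hn
  have hbdd : BddBelow ((fun P => sSup (J' '' P)) ''
      {P : Set (Set (Fin d → ℝ)) | IsJPartition J' P ∧ P.ncard ≤ n}) := by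
    refine ⟨0, ?_⟩
    rintro y ⟨P, ⟨hP', _⟩, rfl⟩
    exact sSup_image_nonneg hP'
  have hmem : sSup (J' '' {Q ∈ (R : Set (Set (Fin d → ℝ))) | 0 < J' Q}) ∈
      (fun P => sSup (J' '' P)) ''
      {P : Set (Set (Fin d → ℝ)) | IsJPartition J' P ∧ P.ncard ≤ n} :=
    ⟨_, ⟨hP, hcard⟩, rfl⟩
  refine le_trans (csInf_le hbdd hmem) ?_
  apply Real.sSup_le _ ht
  rintro y ⟨Q, hQ, rfl⟩
  exact (h4 Q (Finset.mem_coe.1 hQ.1)).le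

lemma MJ_bigO (hd : 1 ≤ d) {J : Set (Fin d → ℝ) → ℝ}
    (hnn : CubeNonneg J) (hsub : CubeSubadditive J) {a : ℝ} (ha : 0 < a)
    (hQ : 0 < J (unitCube d)) :
    (fun x : ℝ => (MJ (Jv J a) x : ℝ)) =O[Filter.atTop] fun x : ℝ => x ^ ((1 + a)⁻¹) := by
  obtain ⟨C, hC, hmain⟩ := exists_partition_bigO hd hnn hsub ha hQ
  rw [Asymptotics.isBigO_iff]
  refine ⟨C, ?_⟩
  filter_upwards [Filter.eventually_ge_atTop (max 1 (J (unitCube d))⁻¹)] with x hx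
  have hx1 : (1:ℝ) ≤ x := le_trans (le_max_left _ _) hx
  have hx0 : (0:ℝ) < x := by linarith
  have ht : 0 < 1 / x := by positivity
  have htJ : 1 / x ≤ J (unitCube d) := by
    rw [div_le_iff₀ hx0, ← div_le_iff₀' hQ]
    exact le_trans (le_max_right _ _) (by rwa [one_div])
  obtain ⟨R, h1, h2, h3, h4, h5⟩ := hmain (1 / x) ht htJ
  have hMJ : ((MJ (Jv J a) x : ℕ) : ℝ) ≤ (R.card : ℝ) := by
    exact_mod_cast MJ_le_of_partition h1 h2 h3 h4
  have hrw : (1 / x) ^ (-(1 + a)⁻¹) = x ^ ((1 + a)⁻¹) := by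
    rw [one_div, Real.inv_rpow hx0.le, Real.rpow_neg hx0.le, inv_inv]
  calc ‖((MJ (Jv J a) x : ℕ) : ℝ)‖ = ((MJ (Jv J a) x : ℕ) : ℝ) :=
        Real.norm_of_nonneg (Nat.cast_nonneg _)
    _ ≤ C * x ^ ((1 + a)⁻¹) := by
        rw [← hrw]
        exact hMJ.trans h5
    _ = C * ‖x ^ ((1 + a)⁻¹)‖ := by
        rw [Real.norm_of_nonneg (Real.rpow_nonneg hx0.le _)]

lemma gammaJ_bigO (hd : 1 ≤ d) {J : Set (Fin d → ℝ) → ℝ}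
    (hnn : CubeNonneg J) (hsub : CubeSubadditive J) {a : ℝ} (ha : 0 < a)
    (hQ : 0 < J (unitCube d)) :
    (fun n : ℕ => gammaJ (Jv J a) n) =O[Filter.atTop] fun n : ℕ => (n : ℝ) ^ (-(1 + a)) := by
  obtain ⟨C, hC, hmain⟩ := exists_partition_bigO hd hnn hsub ha hQ
  rw [Asymptotics.isBigO_iff]
  refine ⟨C ^ ((1:ℝ) + a), ?_⟩
  have htend : Filter.Tendsto (fun n : ℕ => C ^ ((1:ℝ) + a) * (n : ℝ) ^ (-(1 + a)))
      Filter.atTop (nhds 0) := by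
    have h := (tendsto_rpow_neg_atTop (by linarith : (0:ℝ) < 1 + a)).comp
      (tendsto_natCast_atTop_atTop (R := ℝ))
    have h2 := h.const_mul (C ^ ((1:ℝ) + a))
    simpa using h2
  filter_upwards [Filter.eventually_ge_atTop 1, htend.eventually_lt_const hQ] with n hn1 htJ
  have hn0 : (0:ℝ) < (n : ℝ) := by exact_mod_cast hn1
  set t : ℝ := C ^ ((1:ℝ) + a) * (n : ℝ) ^ (-(1 + a)) with htdef
  have ht : 0 < t :=
    mul_pos (Real.rpow_pos_of_pos hC _) (Real.rpow_pos_of_pos hn0 _)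
  obtain ⟨R, h1, h2, h3, h4, h5⟩ := hmain t ht htJ.le
  have hkey : C * t ^ (-(1 + a)⁻¹) = (n : ℝ) := by
    rw [htdef, Real.mul_rpow (Real.rpow_nonneg hC.le _) (Real.rpow_nonneg hn0.le _),
      ← Real.rpow_mul hC.le, ← Real.rpow_mul hn0.le]
    rw [show ((1:ℝ) + a) * (-(1 + a)⁻¹) = -1 by field_simp,
      show (-(1 + a)) * (-(1 + a)⁻¹) = 1 by field_simp]
    rw [Real.rpow_neg_one, Real.rpow_one]
    field_simp
  have hcard : (R.filter fun Q => 0 < Jv J a Q).card ≤ n := by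
    have hc1 : (((R.filter fun Q => 0 < Jv J a Q).card : ℕ) : ℝ) ≤ (R.card : ℝ) := by
      exact_mod_cast Finset.card_le_card (Finset.filter_subset _ _)
    have hle : (((R.filter fun Q => 0 < Jv J a Q).card : ℕ) : ℝ) ≤ (n : ℝ) := by
      rw [← hkey]
      linarith
    exact_mod_cast hle
  have hg := gammaJ_le_of_partition h1 h2 h3 ht.le h4 hcard
  rw [Real.norm_of_nonneg (gammaJ_nonneg _ _),
    Real.norm_of_nonneg (Real.rpow_nonneg hn0.le _)]
  calc gammaJ (Jv J a) n ≤ t := hg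
    _ = C ^ ((1:ℝ) + a) * (n : ℝ) ^ (-(1 + a)) := rfl

def levelOf (d : ℕ) (Q : Set (Fin d → ℝ)) : ℕ :=
  if h : ∃ n, Q ∈ dyadicLevel d n then Nat.find h else 0

def idxOf (d : ℕ) (Q : Set (Fin d → ℝ)) : Fin d → ℕ :=
  if h : ∃ k : Fin d → ℕ, (∀ i, k i < 2 ^ (levelOf d Q)) ∧ Q = dyadicCube d (levelOf d Q) k
  then Classical.choose h else fun _ => 0

lemma levelOf_spec {Q : Set (Fin d → ℝ)} (hQ : Q ∈ dyadicFamily d) :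
    (∀ i, idxOf d Q i < 2 ^ (levelOf d Q)) ∧ Q = dyadicCube d (levelOf d Q) (idxOf d Q) := by
  have h : ∃ n, Q ∈ dyadicLevel d n := Set.mem_iUnion.1 hQ
  have h2 : Q ∈ dyadicLevel d (levelOf d Q) := by
    rw [levelOf, dif_pos h]
    exact Nat.find_spec h
  obtain ⟨k, hk, he⟩ := h2
  have h3 : ∃ k : Fin d → ℕ, (∀ i, k i < 2 ^ (levelOf d Q)) ∧
      Q = dyadicCube d (levelOf d Q) k := ⟨k, hk, he⟩
  rw [idxOf, dif_pos h3]
  exact Classical.choose_spec h3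

lemma dyadicCube_measurable (n : ℕ) (k : Fin d → ℕ) :
    MeasurableSet (dyadicCube d n k) := by
  rw [dyadicCube_eq_pi]
  exact MeasurableSet.univ_pi fun i => measurableSet_Ico

lemma volume_unitCube : volume (unitCube d) = 1 := by
  rw [unitCube_eq, volume_dyadicCube]
  norm_num

lemma sum_vol_le_one {Ξ : Finset (Set (Fin d → ℝ))}
    (hfam : (Ξ : Set (Set (Fin d → ℝ))) ⊆ dyadicFamily d)
    (hdisj : (Ξ : Set (Set (Fin d → ℝ))).PairwiseDisjoint id)
    (hsub : ∀ Q ∈ Ξ, Q ⊆ unitCube d) :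
    ∑ Q ∈ Ξ, (volume Q).toReal ≤ 1 := by
  have hmeas : ∀ Q ∈ Ξ, MeasurableSet (id Q : Set (Fin d → ℝ)) := by
    intro Q hQ
    obtain ⟨n, k, _, rfl⟩ : ∃ n k, (∀ i, k i < 2 ^ n) ∧ Q = dyadicCube d n k := by
      obtain ⟨n, hn⟩ := Set.mem_iUnion.1 (hfam hQ)
      obtain ⟨k, hk, he⟩ := hn
      exact ⟨n, k, hk, he⟩
    exact dyadicCube_measurable n k
  have hfin : ∀ Q ∈ Ξ, volume Q ≠ ⊤ := by
    intro Q hQ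
    have : volume Q ≤ volume (unitCube d) := measure_mono (hsub Q hQ)
    rw [volume_unitCube] at this
    exact ne_top_of_le_ne_top (by norm_num) this
  have h1 : volume (⋃ Q ∈ Ξ, (id Q : Set (Fin d → ℝ))) = ∑ Q ∈ Ξ, volume (id Q) :=
    measure_biUnion_finset hdisj hmeas
  have h2 : volume (⋃ Q ∈ Ξ, (id Q : Set (Fin d → ℝ))) ≤ 1 := by
    rw [← volume_unitCube (d := d)]
    exact measure_mono (Set.iUnion₂_subset hsub)
  rw [h1] at h2
  calc ∑ Q ∈ Ξ, (volume Q).toReal = (∑ Q ∈ Ξ, volume Q).toReal :=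
        (ENNReal.toReal_sum hfin).symm
    _ ≤ (1 : ENNReal).toReal := ENNReal.toReal_mono (by norm_num) h2
    _ = 1 := by norm_num

lemma bad_subset_sum {Ξ : Finset (Set (Fin d → ℝ))}
    (hfam : (Ξ : Set (Set (Fin d → ℝ))) ⊆ dyadicFamily d)
    (hun : ⋃₀ (Ξ : Set (Set (Fin d → ℝ))) = unitCube d) {p : ℕ}
    (hp : ∀ Q₀ ∈ Ξ, levelOf d Q₀ ≤ p) (pred : (Fin d → ℕ) → Prop) :
    ((idx d p).filter pred).card
      ≤ ∑ Q₀ ∈ Ξ, ((subIdx d (levelOf d Q₀) (idxOf d Q₀) p).filter pred).card := by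
  calc ((idx d p).filter pred).card
      ≤ (Ξ.biUnion fun Q₀ => (subIdx d (levelOf d Q₀) (idxOf d Q₀) p).filter pred).card := by
        apply Finset.card_le_card
        intro k hk
        obtain ⟨hkidx, hkpred⟩ := Finset.mem_filter.1 hk
        have hx : (fun i => (k i : ℝ) / 2 ^ p) ∈ unitCube d :=
          dyadicCube_subset_unitCube (mem_idx.1 hkidx) (corner_mem p k)
        rw [← hun] at hx
        obtain ⟨Q₀, hQ₀, hxQ₀⟩ := hx
        rw [Finset.mem_coe] at hQ₀
        obtain ⟨hik, heq⟩ := levelOf_spec (hfam hQ₀)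
        rw [heq] at hxQ₀
        have hsub := (dyadic_subset_of_mem (hp Q₀ hQ₀) (corner_mem p k) hxQ₀).1
        refine Finset.mem_biUnion.2 ⟨Q₀, hQ₀, Finset.mem_filter.2 ⟨?_, hkpred⟩⟩
        exact Finset.mem_filter.2 ⟨hkidx, hsub⟩
    _ ≤ _ := Finset.card_biUnion_le

lemma singular_level_bound {J : Set (Fin d → ℝ) → ℝ} (hnn : CubeNonneg J)
    (hsub : CubeSubadditive J) (a : ℝ) {t δ : ℝ} (ht : 0 < t)
    {Ξ Ξ' : Finset (Set (Fin d → ℝ))}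
    (hfam : (Ξ : Set (Set (Fin d → ℝ))) ⊆ dyadicFamily d)
    (hdisj : (Ξ : Set (Set (Fin d → ℝ))).PairwiseDisjoint id)
    (hun : ⋃₀ (Ξ : Set (Set (Fin d → ℝ))) = unitCube d) (hss : Ξ' ⊆ Ξ)
    (hvol : ∑ Q ∈ Ξ \ Ξ', (volume Q).toReal ≤ δ) (hJs : ∑ Q ∈ Ξ', J Q ≤ δ)
    {p : ℕ} (hp : ∀ Q₀ ∈ Ξ, levelOf d Q₀ ≤ p) :
    (((idx d p).filter fun k => t ≤ Jv J a (dyadicCube d p k)).card : ℝ)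
      ≤ min (((2:ℝ) ^ d) ^ p) ((δ / t) * (((2:ℝ) ^ d) ^ (-a)) ^ p)
        + min (δ * ((2:ℝ) ^ d) ^ p)
            ((J (unitCube d) / t) * (((2:ℝ) ^ d) ^ (-a)) ^ p) := by
  set c : ℝ := (2:ℝ) ^ d with hcdef
  set r : ℝ := c ^ (-a) with hrdef
  have hrp : (0:ℝ) ≤ r ^ p := pow_nonneg (Real.rpow_nonneg (by positivity) _) p
  set F : Set (Fin d → ℝ) → ℕ := fun Q₀ =>
    ((subIdx d (levelOf d Q₀) (idxOf d Q₀) p).filter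
      fun k => t ≤ Jv J a (dyadicCube d p k)).card with hFdef
  have h0 : (((idx d p).filter fun k => t ≤ Jv J a (dyadicCube d p k)).card : ℝ)
      ≤ ∑ Q₀ ∈ Ξ, (F Q₀ : ℝ) := by
    have := bad_subset_sum hfam hun hp (fun k => t ≤ Jv J a (dyadicCube d p k))
    exact_mod_cast this
  have hFvol : ∀ Q₀ ∈ Ξ, (F Q₀ : ℝ) ≤ (volume Q₀).toReal * c ^ p := by
    intro Q₀ hQ₀
    obtain ⟨hik, heq⟩ := levelOf_spec (hfam hQ₀)
    have := card_bad_le_vol (d := d) (hp Q₀ hQ₀) (idxOf d Q₀)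
      (fun k => t ≤ Jv J a (dyadicCube d p k))
    rw [← heq] at this
    exact this
  have hFJ : ∀ Q₀ ∈ Ξ, (F Q₀ : ℝ) ≤ (J Q₀ / t) * r ^ p := by
    intro Q₀ hQ₀
    obtain ⟨hik, heq⟩ := levelOf_spec (hfam hQ₀)
    have := card_bad_le_J hnn hsub a ht (hp Q₀ hQ₀) hik
    rw [← heq] at this
    exact this
  have hsplitΞ : ∑ Q₀ ∈ Ξ, (F Q₀ : ℝ)
      = (∑ Q₀ ∈ Ξ', (F Q₀ : ℝ)) + ∑ Q₀ ∈ Ξ \ Ξ', (F Q₀ : ℝ) := by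
    rw [add_comm, Finset.sum_sdiff hss]
  have hone : ∑ Q ∈ Ξ', (volume Q).toReal ≤ 1 := by
    apply sum_vol_le_one (Set.Subset.trans (Finset.coe_subset.2 hss) hfam)
      (Set.PairwiseDisjoint.subset hdisj (Finset.coe_subset.2 hss))
    intro Q hQ
    rw [← hun]
    exact fun x hx => ⟨Q, Finset.mem_coe.2 (hss hQ), hx⟩
  have hJQ : ∑ Q ∈ Ξ \ Ξ', J Q ≤ J (unitCube d) := by
    calc ∑ Q ∈ Ξ \ Ξ', J Q ≤ ∑ Q ∈ Ξ, J Q := by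
          apply Finset.sum_le_sum_of_subset_of_nonneg (Finset.sdiff_subset)
          intro Q hQ _
          exact hnn Q (hfam hQ)
      _ ≤ J (unitCube d) := hsub (unitCube d) unitCube_mem_family Ξ hfam hdisj hun
  have hpart1 : ∑ Q₀ ∈ Ξ', (F Q₀ : ℝ) ≤ min (c ^ p) ((δ / t) * r ^ p) := by
    refine le_min ?_ ?_
    · calc ∑ Q₀ ∈ Ξ', (F Q₀ : ℝ) ≤ ∑ Q₀ ∈ Ξ', (volume Q₀).toReal * c ^ p :=
            Finset.sum_le_sum fun Q₀ hQ₀ => hFvol Q₀ (hss hQ₀)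
        _ = (∑ Q₀ ∈ Ξ', (volume Q₀).toReal) * c ^ p := by rw [Finset.sum_mul]
        _ ≤ 1 * c ^ p := by
            apply mul_le_mul_of_nonneg_right hone (by positivity)
        _ = c ^ p := one_mul _
    · calc ∑ Q₀ ∈ Ξ', (F Q₀ : ℝ) ≤ ∑ Q₀ ∈ Ξ', (J Q₀ / t) * r ^ p :=
            Finset.sum_le_sum fun Q₀ hQ₀ => hFJ Q₀ (hss hQ₀)
        _ = (∑ Q₀ ∈ Ξ', J Q₀) / t * r ^ p := by rw [Finset.sum_div, Finset.sum_mul]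
        _ ≤ (δ / t) * r ^ p := by
            apply mul_le_mul_of_nonneg_right _ hrp
            gcongr
  have hpart2 : ∑ Q₀ ∈ Ξ \ Ξ', (F Q₀ : ℝ)
      ≤ min (δ * c ^ p) ((J (unitCube d) / t) * r ^ p) := by
    refine le_min ?_ ?_
    · calc ∑ Q₀ ∈ Ξ \ Ξ', (F Q₀ : ℝ) ≤ ∑ Q₀ ∈ Ξ \ Ξ', (volume Q₀).toReal * c ^ p :=
            Finset.sum_le_sum fun Q₀ hQ₀ => hFvol Q₀ (Finset.sdiff_subset hQ₀)
        _ = (∑ Q₀ ∈ Ξ \ Ξ', (volume Q₀).toReal) * c ^ p := by rw [Finset.sum_mul]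
        _ ≤ δ * c ^ p := mul_le_mul_of_nonneg_right hvol (by positivity)
    · calc ∑ Q₀ ∈ Ξ \ Ξ', (F Q₀ : ℝ) ≤ ∑ Q₀ ∈ Ξ \ Ξ', (J Q₀ / t) * r ^ p :=
            Finset.sum_le_sum fun Q₀ hQ₀ => hFJ Q₀ (Finset.sdiff_subset hQ₀)
        _ = (∑ Q₀ ∈ Ξ \ Ξ', J Q₀) / t * r ^ p := by rw [Finset.sum_div, Finset.sum_mul]
        _ ≤ (J (unitCube d) / t) * r ^ p := by
            apply mul_le_mul_of_nonneg_right _ hrp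
            gcongr
  calc (((idx d p).filter fun k => t ≤ Jv J a (dyadicCube d p k)).card : ℝ)
      ≤ ∑ Q₀ ∈ Ξ, (F Q₀ : ℝ) := h0
    _ = (∑ Q₀ ∈ Ξ', (F Q₀ : ℝ)) + ∑ Q₀ ∈ Ξ \ Ξ', (F Q₀ : ℝ) := hsplitΞ
    _ ≤ _ := add_le_add hpart1 hpart2

lemma card_Sfin_cast {J : Set (Fin d → ℝ) → ℝ} {a t : ℝ} {N : ℕ} :
    ((Sfin d J a t N).card : ℝ) ≤ 1 + ((2:ℝ) ^ d) * ∑ p ∈ Finset.range N,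
      (((idx d p).filter fun k => t ≤ Jv J a (dyadicCube d p k)).card : ℝ) := by
  have h := card_Sfin_le (d := d) (J := J) (a := a) (t := t) (N := N)
  calc ((Sfin d J a t N).card : ℝ)
      ≤ ((1 + 2 ^ d * ∑ p ∈ Finset.range N,
          ((idx d p).filter fun k => t ≤ Jv J a (dyadicCube d p k)).card : ℕ) : ℝ) := by
        exact_mod_cast h
    _ = _ := by push_cast; rfl

lemma exists_partition_small (hd : 1 ≤ d) {J : Set (Fin d → ℝ) → ℝ}
    (hnn : CubeNonneg J) (hsub : CubeSubadditive J) {a : ℝ} (ha : 0 < a)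
    (hQ : 0 < J (unitCube d)) (hsing : CubeSingular J) :
    ∀ ε : ℝ, 0 < ε → ∃ t₀ : ℝ, 0 < t₀ ∧ ∀ t : ℝ, 0 < t → t ≤ t₀ →
      ∃ R : Finset (Set (Fin d → ℝ)),
        ((R : Set (Set (Fin d → ℝ))) ⊆ dyadicFamily d) ∧
        ((R : Set (Set (Fin d → ℝ)))).PairwiseDisjoint id ∧
        ⋃₀ (R : Set (Set (Fin d → ℝ))) = unitCube d ∧
        (∀ Q ∈ R, Jv J a Q < t) ∧
        ((R.card : ℝ) ≤ ε * t ^ (-(1 + a)⁻¹)) := by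
  intro ε hε
  have hc : (2:ℝ) ≤ (2:ℝ) ^ d := by
    calc (2:ℝ) = 2 ^ 1 := (pow_one 2).symm
    _ ≤ 2 ^ d := pow_le_pow_right₀ (by norm_num) hd
  set c : ℝ := (2:ℝ) ^ d with hcdef
  have hc0 : (0:ℝ) < c := by positivity
  set r : ℝ := c ^ (-a) with hrdef
  have hr0 : 0 < r := Real.rpow_pos_of_pos hc0 _
  have hr1 : r < 1 := Real.rpow_lt_one_of_one_lt_of_neg (by linarith) (by linarith)
  set K : ℝ := c + (1 - r)⁻¹ with hKdef
  have hK : 0 < K := add_pos (by linarith) (inv_pos.2 (by linarith))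
  set E : ℝ := (J (unitCube d)) ^ ((1 + a)⁻¹) with hEdef
  have hE : 0 < E := Real.rpow_pos_of_pos hQ _
  set A1 : ℝ := ε / (4 * c * K) with hA1def
  have hA1p : 0 < A1 := div_pos hε (by positivity)
  set A2 : ℝ := ε / (4 * c * K * E) with hA2def
  have hA2p : 0 < A2 := div_pos hε (by positivity)
  set δ : ℝ := min (A1 ^ ((1:ℝ) + a)) (A2 ^ (((1:ℝ) + a) / a)) with hδdef
  have hδp : 0 < δ :=
    lt_min (Real.rpow_pos_of_pos hA1p _) (Real.rpow_pos_of_pos hA2p _)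
  have hδ1 : δ ^ ((1 + a)⁻¹) ≤ A1 := by
    calc δ ^ ((1 + a)⁻¹) ≤ (A1 ^ ((1:ℝ) + a)) ^ ((1 + a)⁻¹) :=
          Real.rpow_le_rpow hδp.le (min_le_left _ _) (by positivity)
      _ = A1 := by
          rw [← Real.rpow_mul hA1p.le,
            show ((1:ℝ) + a) * (1 + a)⁻¹ = 1 by field_simp, Real.rpow_one]
  have hδ2 : δ ^ (a / (1 + a)) ≤ A2 := by
    calc δ ^ (a / (1 + a)) ≤ (A2 ^ (((1:ℝ) + a) / a)) ^ (a / (1 + a)) :=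
          Real.rpow_le_rpow hδp.le (min_le_right _ _) (by positivity)
      _ = A2 := by
          rw [← Real.rpow_mul hA2p.le,
            show (((1:ℝ) + a) / a) * (a / (1 + a)) = 1 by
              field_simp, Real.rpow_one]
  obtain ⟨Ξ, Ξ', hfam, hdisj, hun, hss, hvol, hJs⟩ := hsing δ hδp
  set L := Ξ.sup (levelOf d) with hLdef
  set D : ℝ := (1 + c * c ^ L) * (2 / ε) with hDdef
  have hD : 0 < D := by positivity
  refine ⟨D ^ (-((1:ℝ) + a)), Real.rpow_pos_of_pos hD _, ?_⟩
  intro t ht ht0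
  set T : ℝ := t ^ (-(1 + a)⁻¹) with hTdef
  have hT : 0 < T := Real.rpow_pos_of_pos ht _
  have hhead : 1 + c * c ^ L ≤ (ε / 2) * T := by
    have h2 : (D ^ (-((1:ℝ) + a))) ^ (-(1 + a)⁻¹) ≤ t ^ (-(1 + a)⁻¹) :=
      Real.rpow_le_rpow_of_nonpos ht ht0 (neg_nonpos.2 (by positivity))
    rw [← Real.rpow_mul hD.le,
      show (-((1:ℝ) + a)) * (-(1 + a)⁻¹) = 1 by field_simp, Real.rpow_one] at h2
    have he : 1 + c * c ^ L = (ε / 2) * D := by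
      rw [hDdef]
      field_simp
    rw [he]
    exact mul_le_mul_of_nonneg_left h2 (by positivity)
  obtain ⟨N, hN⟩ : ∃ N : ℕ, J (unitCube d) * r ^ N < t := by
    obtain ⟨N, hN⟩ := exists_pow_lt_of_lt_one (div_pos ht hQ) hr1
    refine ⟨N, ?_⟩
    have h3 := mul_lt_mul_of_pos_left hN hQ
    rwa [mul_div_cancel₀ _ (ne_of_gt hQ)] at h3
  refine ⟨Sfin d J a t N, Sfin_subset_family, Sfin_pairwiseDisjoint,
    Sfin_sUnion hnn hsub hN, fun Q hQ' => Sfin_lt hQ', ?_⟩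
  -- the two geometric bounds
  have hg1 := geo_bound hc ha 1 (δ / t) one_pos (div_pos hδp ht) N
  rw [Real.one_rpow] at hg1
  simp only [one_mul] at hg1
  have hg2 := geo_bound hc ha δ (J (unitCube d) / t) hδp (div_pos hQ ht) N
  -- per-level bound
  have hper : ∀ p ∈ Finset.range N,
      (((idx d p).filter fun k => t ≤ Jv J a (dyadicCube d p k)).card : ℝ)
        ≤ (if p < L then c ^ p else 0)
          + (min (c ^ p) ((δ / t) * r ^ p)
            + min (δ * c ^ p) ((J (unitCube d) / t) * r ^ p)) := by
    intro p _
    have m1 : 0 ≤ min (c ^ p) ((δ / t) * r ^ p) :=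
      le_min (by positivity) (by positivity)
    have m2 : 0 ≤ min (δ * c ^ p) ((J (unitCube d) / t) * r ^ p) :=
      le_min (by positivity) (by positivity)
    rcases lt_or_ge p L with h | h
    · rw [if_pos h]
      have hb := card_bad_unit_le_vol (d := d) p
        (fun k => t ≤ Jv J a (dyadicCube d p k))
      rw [← hcdef] at hb
      exact le_trans hb (le_add_of_nonneg_right (add_nonneg m1 m2))
    · rw [if_neg (not_lt.2 h)]
      have hs := singular_level_bound hnn hsub a ht hfam hdisj hun hss hvol hJs
        (fun Q₀ hQ₀ => le_trans (Finset.le_sup hQ₀) h)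
      rw [← hcdef, ← hrdef] at hs
      rw [zero_add]
      exact hs
  have hsum_if : ∑ p ∈ Finset.range N, (if p < L then c ^ p else 0) ≤ c ^ L := by
    calc ∑ p ∈ Finset.range N, (if p < L then c ^ p else 0)
        = ∑ p ∈ (Finset.range N).filter (fun p => p < L), c ^ p :=
          (Finset.sum_filter _ _).symm
      _ ≤ ∑ p ∈ Finset.range L, c ^ p := by
          apply Finset.sum_le_sum_of_subset_of_nonneg
          · intro p hp
            simp only [Finset.mem_filter, Finset.mem_range] at hp ⊢
            omega
          · intro p _ _
            positivity
      _ ≤ c ^ L := geom_sum_le_pow hc L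
  have hS : ∑ p ∈ Finset.range N,
      (((idx d p).filter fun k => t ≤ Jv J a (dyadicCube d p k)).card : ℝ)
        ≤ c ^ L + (K * ((δ / t) ^ (1 / (1 + a)))
          + K * (δ ^ (a / (1 + a)) * ((J (unitCube d) / t) ^ (1 / (1 + a))))) := by
    calc ∑ p ∈ Finset.range N,
        (((idx d p).filter fun k => t ≤ Jv J a (dyadicCube d p k)).card : ℝ)
        ≤ ∑ p ∈ Finset.range N, ((if p < L then c ^ p else 0)
            + (min (c ^ p) ((δ / t) * r ^ p)
              + min (δ * c ^ p) ((J (unitCube d) / t) * r ^ p))) :=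
          Finset.sum_le_sum hper
      _ = (∑ p ∈ Finset.range N, (if p < L then c ^ p else 0))
          + ((∑ p ∈ Finset.range N, min (c ^ p) ((δ / t) * r ^ p))
            + ∑ p ∈ Finset.range N, min (δ * c ^ p) ((J (unitCube d) / t) * r ^ p)) := by
          rw [Finset.sum_add_distrib, Finset.sum_add_distrib]
      _ ≤ _ := add_le_add hsum_if (add_le_add hg1 hg2)
  -- split the rpow of quotients
  have hq1 : (δ / t) ^ (1 / (1 + a)) = δ ^ ((1 + a)⁻¹) * T := by
    rw [one_div, Real.div_rpow hδp.le ht.le, div_eq_mul_inv, ← Real.rpow_neg ht.le]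
  have hq2 : (J (unitCube d) / t) ^ (1 / (1 + a)) = E * T := by
    rw [one_div, Real.div_rpow hQ.le ht.le, div_eq_mul_inv, ← Real.rpow_neg ht.le, hEdef]
  have hcK1 : c * K * δ ^ ((1 + a)⁻¹) ≤ ε / 4 := by
    have h := mul_le_mul_of_nonneg_left hδ1 (mul_nonneg hc0.le hK.le)
    have he : c * K * A1 = ε / 4 := by
      rw [hA1def]
      field_simp
    linarith
  have hcK2 : c * K * (δ ^ (a / (1 + a)) * E) ≤ ε / 4 := by
    have hrw : c * K * (δ ^ (a / (1 + a)) * E) = (c * K * E) * δ ^ (a / (1 + a)) := by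
      ring
    rw [hrw]
    calc (c * K * E) * δ ^ (a / (1 + a)) ≤ (c * K * E) * A2 :=
          mul_le_mul_of_nonneg_left hδ2 (mul_nonneg (mul_nonneg hc0.le hK.le) hE.le)
      _ = ε / 4 := by
          rw [hA2def]
          field_simp
  have hfinal := card_Sfin_cast (d := d) (J := J) (a := a) (t := t) (N := N)
  rw [← hcdef] at hfinal
  calc ((Sfin d J a t N).card : ℝ)
      ≤ 1 + c * ∑ p ∈ Finset.range N,
          (((idx d p).filter fun k => t ≤ Jv J a (dyadicCube d p k)).card : ℝ) := hfinal
    _ ≤ 1 + c * (c ^ L + (K * ((δ / t) ^ (1 / (1 + a)))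
          + K * (δ ^ (a / (1 + a)) * ((J (unitCube d) / t) ^ (1 / (1 + a)))))) :=
        add_le_add_right (mul_le_mul_of_nonneg_left hS hc0.le) 1
    _ = (1 + c * c ^ L) + ((c * K * δ ^ ((1 + a)⁻¹)) * T
          + (c * K * (δ ^ (a / (1 + a)) * E)) * T) := by
        rw [hq1, hq2]
        ring
    _ ≤ (ε / 2) * T + ((ε / 4) * T + (ε / 4) * T) := by
        have h1 := mul_le_mul_of_nonneg_right hcK1 hT.le
        have h2 := mul_le_mul_of_nonneg_right hcK2 hT.le
        have h3 := hhead
        exact add_le_add h3 (add_le_add h1 h2)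
    _ = ε * T := by ring

lemma MJ_littleO (hd : 1 ≤ d) {J : Set (Fin d → ℝ) → ℝ}
    (hnn : CubeNonneg J) (hsub : CubeSubadditive J) {a : ℝ} (ha : 0 < a)
    (hQ : 0 < J (unitCube d)) (hsing : CubeSingular J) :
    (fun x : ℝ => (MJ (Jv J a) x : ℝ)) =o[Filter.atTop] fun x : ℝ => x ^ ((1 + a)⁻¹) := by
  rw [Asymptotics.isLittleO_iff]
  intro ε hε
  obtain ⟨t₀, ht₀, hmain⟩ := exists_partition_small hd hnn hsub ha hQ hsing ε hε
  filter_upwards [Filter.eventually_ge_atTop (max 1 t₀⁻¹)] with x hx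
  have hx1 : (1:ℝ) ≤ x := le_trans (le_max_left _ _) hx
  have hx0 : (0:ℝ) < x := by linarith
  have ht : 0 < 1 / x := by positivity
  have htJ : 1 / x ≤ t₀ := by
    rw [div_le_iff₀ hx0, ← div_le_iff₀' ht₀]
    exact le_trans (le_max_right _ _) (by rwa [one_div])
  obtain ⟨R, h1, h2, h3, h4, h5⟩ := hmain (1 / x) ht htJ
  have hMJ : ((MJ (Jv J a) x : ℕ) : ℝ) ≤ (R.card : ℝ) := by
    exact_mod_cast MJ_le_of_partition h1 h2 h3 h4
  have hrw : (1 / x) ^ (-(1 + a)⁻¹) = x ^ ((1 + a)⁻¹) := by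
    rw [one_div, Real.inv_rpow hx0.le, Real.rpow_neg hx0.le, inv_inv]
  calc ‖((MJ (Jv J a) x : ℕ) : ℝ)‖ = ((MJ (Jv J a) x : ℕ) : ℝ) :=
        Real.norm_of_nonneg (Nat.cast_nonneg _)
    _ ≤ ε * x ^ ((1 + a)⁻¹) := by
        rw [← hrw]
        exact hMJ.trans h5
    _ = ε * ‖x ^ ((1 + a)⁻¹)‖ := by
        rw [Real.norm_of_nonneg (Real.rpow_nonneg hx0.le _)]

lemma gammaJ_littleO (hd : 1 ≤ d) {J : Set (Fin d → ℝ) → ℝ}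
    (hnn : CubeNonneg J) (hsub : CubeSubadditive J) {a : ℝ} (ha : 0 < a)
    (hQ : 0 < J (unitCube d)) (hsing : CubeSingular J) :
    (fun n : ℕ => gammaJ (Jv J a) n) =o[Filter.atTop] fun n : ℕ => (n : ℝ) ^ (-(1 + a)) := by
  rw [Asymptotics.isLittleO_iff]
  intro ε hε
  obtain ⟨t₀, ht₀, hmain⟩ := exists_partition_small hd hnn hsub ha hQ hsing
    (ε ^ ((1 + a)⁻¹)) (Real.rpow_pos_of_pos hε _)
  have htend : Filter.Tendsto (fun n : ℕ => ε * (n : ℝ) ^ (-(1 + a)))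
      Filter.atTop (nhds 0) := by
    have h := (tendsto_rpow_neg_atTop (by linarith : (0:ℝ) < 1 + a)).comp
      (tendsto_natCast_atTop_atTop (R := ℝ))
    have h2 := h.const_mul ε
    simpa using h2
  filter_upwards [Filter.eventually_ge_atTop 1, htend.eventually_lt_const ht₀] with n hn1 hnt
  have hn0 : (0:ℝ) < (n : ℝ) := by exact_mod_cast hn1
  set t : ℝ := ε * (n : ℝ) ^ (-(1 + a)) with htdef
  have ht : 0 < t := mul_pos hε (Real.rpow_pos_of_pos hn0 _)
  obtain ⟨R, h1, h2, h3, h4, h5⟩ := hmain t ht hnt.le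
  have hkey : ε ^ ((1 + a)⁻¹) * t ^ (-(1 + a)⁻¹) = (n : ℝ) := by
    rw [htdef, Real.mul_rpow hε.le (Real.rpow_nonneg hn0.le _),
      ← Real.rpow_mul hn0.le,
      show (-(1 + a)) * (-(1 + a)⁻¹) = 1 by field_simp, Real.rpow_one,
      ← mul_assoc, ← Real.rpow_add hε,
      show (1 + a)⁻¹ + -(1 + a)⁻¹ = 0 by ring, Real.rpow_zero, one_mul]
  have hcard : (R.filter fun Q => 0 < Jv J a Q).card ≤ n := by
    have hc1 : (((R.filter fun Q => 0 < Jv J a Q).card : ℕ) : ℝ) ≤ (R.card : ℝ) := by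
      exact_mod_cast Finset.card_le_card (Finset.filter_subset _ _)
    have hle : (((R.filter fun Q => 0 < Jv J a Q).card : ℕ) : ℝ) ≤ (n : ℝ) := by
      rw [← hkey]
      linarith
    exact_mod_cast hle
  have hg := gammaJ_le_of_partition h1 h2 h3 ht.le h4 hcard
  rw [Real.norm_of_nonneg (gammaJ_nonneg _ _),
    Real.norm_of_nonneg (Real.rpow_nonneg hn0.le _)]
  exact hg

end S10

/-- For a finite-valued, subadditive, locally non-vanishing `J` with
`J(𝒬) > 0` and `a > 0`, putting `𝔍_{J,a}(Q) = J(Q)Λ(Q)^a` one has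
`γ_n = O(n^{−(1+a)})` and `M_{𝔍_{J,a}}(x) = O(x^{1/(1+a)})`; and if `J` is additionally
singular with respect to Lebesgue measure, both estimates improve to little-o. -/
theorem statement10 (d : ℕ) (hd : 2 ≤ d) (J : Set (Fin d → ℝ) → ℝ)
    (hnn : CubeNonneg J) (hsub : CubeSubadditive J) (hloc : LocallyNonVanishing J)
    (hQ : 0 < J (unitCube d)) (a : ℝ) (ha : 0 < a) :
    ((fun n : ℕ => gammaJ (fun Q => J Q * (volume Q).toReal ^ a) n) =O[Filter.atTop]
        fun n : ℕ => (n : ℝ) ^ (-(1 + a))) ∧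
    ((fun x : ℝ => (MJ (fun Q => J Q * (volume Q).toReal ^ a) x : ℝ)) =O[Filter.atTop]
        fun x : ℝ => x ^ ((1 + a)⁻¹)) ∧
    (CubeSingular J →
      ((fun n : ℕ => gammaJ (fun Q => J Q * (volume Q).toReal ^ a) n) =o[Filter.atTop]
          fun n : ℕ => (n : ℝ) ^ (-(1 + a))) ∧
      ((fun x : ℝ => (MJ (fun Q => J Q * (volume Q).toReal ^ a) x : ℝ)) =o[Filter.atTop]
          fun x : ℝ => x ^ ((1 + a)⁻¹))) := by
  have hd1 : 1 ≤ d := by omega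
  exact ⟨S10.gammaJ_bigO hd1 hnn hsub ha hQ, S10.MJ_bigO hd1 hnn hsub ha hQ,
    fun hsing => ⟨S10.gammaJ_littleO hd1 hnn hsub ha hQ hsing,
      S10.MJ_littleO hd1 hnn hsub ha hQ hsing⟩⟩
end
end

section
/- Let (Ω_n, 𝒜_n, μ_n), n ∈ ℕ, be probability spaces, let X_n : Ω_n → ℝ be measurable, and let (a_n) be positive reals with a_n → ∞. Define c_n(t) = a_n^{−1} log ∫ exp(t X_n) dμ_n and c(t) = limsup_n c_n(t) for t ∈ ℝ. Assume c is a proper convex function (c(t) > −∞ for all t and c(t) < ∞ for some t) and that 0 lies in the interior of {t ∈ ℝ : c(t) < ∞}. Let b ≤ c′ be reals such that the subdifferential of c at 0 equals [b, c′], i.e. {s ∈ ℝ : ∀ t ∈ ℝ, c(t) ≥ c(0) + s·t} = [b, c′], and let I = (a, d) be an open interval with a < b ≤ c′ < d. Then there exists r > 0 such that for all sufficiently large n, μ_n({ω : X_n(ω)/a_n ∉ I}) ≤ 2 exp(−r a_n). -/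
open MeasureTheory Filter Set Topology Classical

noncomputable section

/-- The normalised cumulant generating function `c_n(t) = a_n⁻¹ log ∫ e^{tX_n} dμ_n`,
valued in `[-∞,∞]` (it equals `⊤` when the integral is infinite). -/
def cgfSeq {Ω : ℕ → Type} [∀ n, MeasurableSpace (Ω n)] (μ : ∀ n, Measure (Ω n))
    (X : ∀ n, Ω n → ℝ) (a : ℕ → ℝ) (n : ℕ) (t : ℝ) : EReal :=
  if (∫⁻ ω, ENNReal.ofReal (Real.exp (t * X n ω)) ∂(μ n)) = ⊤ then ⊤
  else (((a n)⁻¹ *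
      Real.log ((∫⁻ ω, ENNReal.ofReal (Real.exp (t * X n ω)) ∂(μ n)).toReal) : ℝ) : EReal)


private lemma tail_bound12 {Ω : Type} [MeasurableSpace Ω] (μ : Measure Ω)
    (X : Ω → ℝ) (hX : Measurable X) (t B B' : ℝ)
    (hI : ∫⁻ ω, ENNReal.ofReal (Real.exp (t * X ω)) ∂μ ≤ ENNReal.ofReal (Real.exp B)) :
    μ {ω | B' ≤ t * X ω} ≤ ENNReal.ofReal (Real.exp (B - B')) := by
  have hmeas : AEMeasurable (fun ω => ENNReal.ofReal (Real.exp (t * X ω))) μ :=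
    ((Real.measurable_exp.comp (measurable_const.mul hX)).ennreal_ofReal).aemeasurable
  have h1 : {ω | B' ≤ t * X ω} ⊆
      {ω | ENNReal.ofReal (Real.exp B') ≤ ENNReal.ofReal (Real.exp (t * X ω))} :=
    fun ω h => ENNReal.ofReal_le_ofReal (Real.exp_le_exp.2 h)
  calc μ {ω | B' ≤ t * X ω}
      ≤ μ {ω | ENNReal.ofReal (Real.exp B') ≤ ENNReal.ofReal (Real.exp (t * X ω))} :=
        measure_mono h1
    _ ≤ (∫⁻ ω, ENNReal.ofReal (Real.exp (t * X ω)) ∂μ) / ENNReal.ofReal (Real.exp B') :=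
        meas_ge_le_lintegral_div hmeas (ENNReal.ofReal_pos.2 (Real.exp_pos B')).ne'
          ENNReal.ofReal_ne_top
    _ ≤ ENNReal.ofReal (Real.exp B) / ENNReal.ofReal (Real.exp B') :=
        ENNReal.div_le_div_right hI _
    _ = ENNReal.ofReal (Real.exp (B - B')) := by
        rw [← ENNReal.ofReal_div_of_pos (Real.exp_pos B'), Real.exp_sub]

/-- An elementary large deviation upper bound: if the limiting rate
function `c = limsup_n c_n` is proper convex, finite in a neighbourhood of `0`, and its
subdifferential at `0` is `[b, c']`, then for any open interval `(p, p') ⊇ [b, c']` the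
probabilities `μ_n(X_n/a_n ∉ (p, p'))` decay exponentially in `a_n`. -/
theorem statement12 (Ω : ℕ → Type) [∀ n, MeasurableSpace (Ω n)]
    (μ : ∀ n, Measure (Ω n)) [∀ n, IsProbabilityMeasure (μ n)]
    (X : ∀ n, Ω n → ℝ) (hX : ∀ n, Measurable (X n))
    (a : ℕ → ℝ) (hapos : ∀ n, 0 < a n) (hatop : Filter.Tendsto a Filter.atTop Filter.atTop)
    (c : ℝ → EReal) (hc : ∀ t, c t = Filter.limsup (fun n => cgfSeq μ X a n t) Filter.atTop)
    (hproper₁ : ∀ t : ℝ, (⊥ : EReal) < c t) (hproper₂ : ∃ t : ℝ, c t < ⊤)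
    (hconvex : ∀ t₁ t₂ θ : ℝ, 0 ≤ θ → θ ≤ 1 →
      c (θ * t₁ + (1 - θ) * t₂) ≤ ((θ : ℝ) : EReal) * c t₁ + (((1 - θ) : ℝ) : EReal) * c t₂)
    (hint : ∃ ε : ℝ, 0 < ε ∧ ∀ t : ℝ, |t| < ε → c t < ⊤)
    (b c' : ℝ) (hbc : b ≤ c')
    (hsub : {s : ℝ | ∀ t : ℝ, c 0 + ((s * t : ℝ) : EReal) ≤ c t} = Set.Icc b c')
    (p p' : ℝ) (hp : p < b) (hp' : c' < p') :
    ∃ r : ℝ, 0 < r ∧ ∀ᶠ n in Filter.atTop,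
      μ n {ω | X n ω / a n ∉ Set.Ioo p p'} ≤
        ENNReal.ofReal (2 * Real.exp (-(r * a n))) := by
  have hc0 : c 0 = 0 := by
    rw [hc]
    have heq : (fun n => cgfSeq μ X a n 0) = fun _ => (0 : EReal) := by
      funext n
      simp only [cgfSeq, zero_mul, Real.exp_zero, ENNReal.ofReal_one, lintegral_one,
        measure_univ]
      simp
    rw [heq, limsup_const]
  have hc'sub : ∀ t : ℝ, ((c' * t : ℝ) : EReal) ≤ c t := by
    intro t
    have hm : c' ∈ {s : ℝ | ∀ t : ℝ, c 0 + ((s * t : ℝ) : EReal) ≤ c t} := by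
      rw [hsub]; exact ⟨hbc, le_rfl⟩
    have h := hm t
    rwa [hc0, zero_add] at h
  have hbsub : ∀ t : ℝ, ((b * t : ℝ) : EReal) ≤ c t := by
    intro t
    have hm : b ∈ {s : ℝ | ∀ t : ℝ, c 0 + ((s * t : ℝ) : EReal) ≤ c t} := by
      rw [hsub]; exact ⟨le_rfl, hbc⟩
    have h := hm t
    rwa [hc0, zero_add] at h
  -- right Chernoff exponent
  have hR : ∃ t : ℝ, 0 < t ∧ c t < ((t * p' : ℝ) : EReal) := by
    by_contra hcon
    push_neg at hcon
    have hmem : p' ∈ {s : ℝ | ∀ t : ℝ, c 0 + ((s * t : ℝ) : EReal) ≤ c t} := by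
      intro t
      rw [hc0, zero_add]
      rcases lt_trichotomy t 0 with ht | ht | ht
      · refine le_trans ?_ (hc'sub t)
        exact_mod_cast EReal.coe_le_coe_iff.2 (by nlinarith)
      · subst ht; simp [hc0]
      · have h := hcon t ht
        rwa [mul_comm] at h
    rw [hsub] at hmem
    exact absurd hmem.2 (not_le.2 hp')
  -- left Chernoff exponent
  have hL : ∃ t : ℝ, t < 0 ∧ c t < ((t * p : ℝ) : EReal) := by
    by_contra hcon
    push_neg at hcon
    have hmem : p ∈ {s : ℝ | ∀ t : ℝ, c 0 + ((s * t : ℝ) : EReal) ≤ c t} := by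
      intro t
      rw [hc0, zero_add]
      rcases lt_trichotomy t 0 with ht | ht | ht
      · have h := hcon t ht
        rwa [mul_comm] at h
      · subst ht; simp [hc0]
      · refine le_trans ?_ (hbsub t)
        exact_mod_cast EReal.coe_le_coe_iff.2 (by nlinarith)
    rw [hsub] at hmem
    exact absurd hmem.1 (not_le.2 hp)
  obtain ⟨t₁, ht₁, hct₁⟩ := hR
  obtain ⟨t₂, ht₂, hct₂⟩ := hL
  obtain ⟨ρ₁, hρ₁a, hρ₁b'⟩ := EReal.exists_between_coe_real hct₁
  obtain ⟨ρ₂, hρ₂a, hρ₂b'⟩ := EReal.exists_between_coe_real hct₂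
  have hρ₁b : ρ₁ < t₁ * p' := EReal.coe_lt_coe_iff.1 hρ₁b'
  have hρ₂b : ρ₂ < t₂ * p := EReal.coe_lt_coe_iff.1 hρ₂b'
  refine ⟨min (t₁ * p' - ρ₁) (t₂ * p - ρ₂), lt_min (by linarith) (by linarith), ?_⟩
  set r : ℝ := min (t₁ * p' - ρ₁) (t₂ * p - ρ₂) with hrdef
  have hev₁ : ∀ᶠ n in Filter.atTop, cgfSeq μ X a n t₁ < ((ρ₁ : ℝ) : EReal) :=
    eventually_lt_of_limsup_lt (by rw [← hc]; exact hρ₁a)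
  have hev₂ : ∀ᶠ n in Filter.atTop, cgfSeq μ X a n t₂ < ((ρ₂ : ℝ) : EReal) :=
    eventually_lt_of_limsup_lt (by rw [← hc]; exact hρ₂a)
  filter_upwards [hev₁, hev₂] with n h1 h2
  have key : ∀ t ρ : ℝ, cgfSeq μ X a n t < ((ρ : ℝ) : EReal) →
      (∫⁻ ω, ENNReal.ofReal (Real.exp (t * X n ω)) ∂(μ n)) ≤
        ENNReal.ofReal (Real.exp (a n * ρ)) := by
    intro t ρ h
    simp only [cgfSeq] at h
    by_cases hT : (∫⁻ ω, ENNReal.ofReal (Real.exp (t * X n ω)) ∂(μ n)) = ⊤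
    · rw [if_pos hT] at h
      exact absurd h (not_top_lt)
    · rw [if_neg hT] at h
      have h' : (a n)⁻¹ *
          Real.log ((∫⁻ ω, ENNReal.ofReal (Real.exp (t * X n ω)) ∂(μ n)).toReal) < ρ :=
        EReal.coe_lt_coe_iff.1 h
      set L := (∫⁻ ω, ENNReal.ofReal (Real.exp (t * X n ω)) ∂(μ n)).toReal with hL
      have hlog : Real.log L < a n * ρ := by
        have h2 := (mul_lt_mul_iff_right₀ (hapos n)).2 h'
        rwa [← mul_assoc, mul_inv_cancel₀ (hapos n).ne', one_mul] at h2
      have hLe : L ≤ Real.exp (a n * ρ) := by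
        have hnn : (0:ℝ) ≤ L := ENNReal.toReal_nonneg
        rcases hnn.eq_or_lt with h0 | h0
        · rw [← h0]; exact (Real.exp_pos _).le
        · calc L = Real.exp (Real.log L) := (Real.exp_log h0).symm
            _ ≤ Real.exp (a n * ρ) := Real.exp_le_exp.2 hlog.le
      calc (∫⁻ ω, ENNReal.ofReal (Real.exp (t * X n ω)) ∂(μ n))
          = ENNReal.ofReal L := (ENNReal.ofReal_toReal hT).symm
        _ ≤ ENNReal.ofReal (Real.exp (a n * ρ)) := ENNReal.ofReal_le_ofReal hLe
  have hbR := tail_bound12 (μ n) (X n) (hX n) t₁ (a n * ρ₁) (t₁ * (a n * p'))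
    (key t₁ ρ₁ h1)
  have hbL := tail_bound12 (μ n) (X n) (hX n) t₂ (a n * ρ₂) (t₂ * (a n * p))
    (key t₂ ρ₂ h2)
  have hsubset : {ω | X n ω / a n ∉ Set.Ioo p p'} ⊆
      {ω | t₂ * (a n * p) ≤ t₂ * X n ω} ∪ {ω | t₁ * (a n * p') ≤ t₁ * X n ω} := by
    intro ω hω
    simp only [Set.mem_Ioo, Set.mem_setOf_eq, not_and, not_lt] at hω
    rcases le_or_gt (X n ω / a n) p with hle | hlt
    · left
      have hx : X n ω ≤ p * a n := (div_le_iff₀ (hapos n)).1 hle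
      show t₂ * (a n * p) ≤ t₂ * X n ω
      nlinarith [hapos n, ht₂.le]
    · right
      have hge : p' ≤ X n ω / a n := hω hlt
      have hx : p' * a n ≤ X n ω := (le_div_iff₀ (hapos n)).1 hge
      show t₁ * (a n * p') ≤ t₁ * X n ω
      nlinarith [hapos n, ht₁.le]
  have hexp₁ : a n * ρ₁ - t₁ * (a n * p') = -((t₁ * p' - ρ₁) * a n) := by ring
  have hexp₂ : a n * ρ₂ - t₂ * (a n * p) = -((t₂ * p - ρ₂) * a n) := by ring
  rw [hexp₁] at hbR
  rw [hexp₂] at hbL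
  have e1 : Real.exp (-((t₁ * p' - ρ₁) * a n)) ≤ Real.exp (-(r * a n)) := by
    apply Real.exp_le_exp.2
    have : r * a n ≤ (t₁ * p' - ρ₁) * a n :=
      mul_le_mul_of_nonneg_right (min_le_left _ _) (hapos n).le
    linarith
  have e2 : Real.exp (-((t₂ * p - ρ₂) * a n)) ≤ Real.exp (-(r * a n)) := by
    apply Real.exp_le_exp.2
    have : r * a n ≤ (t₂ * p - ρ₂) * a n :=
      mul_le_mul_of_nonneg_right (min_le_right _ _) (hapos n).le
    linarith
  calc μ n {ω | X n ω / a n ∉ Set.Ioo p p'}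
      ≤ μ n ({ω | t₂ * (a n * p) ≤ t₂ * X n ω} ∪ {ω | t₁ * (a n * p') ≤ t₁ * X n ω}) :=
        measure_mono hsubset
    _ ≤ μ n {ω | t₂ * (a n * p) ≤ t₂ * X n ω} + μ n {ω | t₁ * (a n * p') ≤ t₁ * X n ω} :=
        measure_union_le _ _
    _ ≤ ENNReal.ofReal (Real.exp (-((t₂ * p - ρ₂) * a n))) +
        ENNReal.ofReal (Real.exp (-((t₁ * p' - ρ₁) * a n))) := add_le_add hbL hbR
    _ = ENNReal.ofReal (Real.exp (-((t₂ * p - ρ₂) * a n)) +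
        Real.exp (-((t₁ * p' - ρ₁) * a n))) :=
        (ENNReal.ofReal_add (Real.exp_pos _).le (Real.exp_pos _).le).symm
    _ ≤ ENNReal.ofReal (2 * Real.exp (-(r * a n))) := by
        apply ENNReal.ofReal_le_ofReal
        linarith
end
end
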